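/- arXiv:2408.01596 — 12 statements merged into one kernel-verified Lean document; each statement's English description precedes it below -/
import Mathlib

section
/- There is a universal constant C > 0 with the following property. Let X be a set, let H be a class of functions X → Bool whose VC dimension is at most d (with d ≥ 1), and let N be a manipulation graph on X with maximum out-degree at most k (with k ≥ 1). Then the VC dimension of the induced class H̄_N is at most C · d · log₂(k·d + 2). -/
/-- The labeling induced by hypothesis `h` under manipulation graph `N`:
`x` is labeled `true` iff some point of the closed neighborhood `{x} ∪ N x` is labeled
`true` by `h`. -/
def inducedLabel {X : Type*} (N : X → Finset X) (h : X → Bool) : X → Bool :=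
  fun x => h x || decide (∃ z ∈ N x, h z = true)

/-- A class of Boolean functions `F` shatters a finite set `S` if every Boolean labeling of `S`
is realized by some member of `F`. -/
def Shatters {X : Type*} (F : Set (X → Bool)) (S : Finset X) : Prop :=
  ∀ σ : X → Bool, ∃ f ∈ F, ∀ x ∈ S, f x = σ x

lemma logb_two_le_self {x : ℝ} (hx : 0 < x) : Real.logb 2 x ≤ x := by
  rw [Real.logb, div_le_iff₀ (Real.log_pos one_lt_two)]
  have h1 : Real.log x = 2 * Real.log (Real.sqrt x) := by
    rw [Real.log_sqrt hx.le]; ring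
  have h2 : Real.log (Real.sqrt x) ≤ Real.sqrt x - 1 :=
    Real.log_le_sub_one_of_pos (Real.sqrt_pos.2 hx)
  have h3 : Real.sqrt x ^ 2 = x := Real.sq_sqrt hx.le
  have h4 : (0.6931471803 : ℝ) < Real.log 2 := Real.log_two_gt_d9
  have h6 : (0 : ℝ) < Real.log 2 := by linarith
  have hA : x * Real.log 2 - (2 * Real.sqrt x - 2)
      = ((Real.log 2 * Real.sqrt x - 1) ^ 2 + (2 * Real.log 2 - 1)) / Real.log 2 := by
    field_simp
    linear_combination (-(Real.log 2) ^ 2) * h3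
  have hB : (0 : ℝ) ≤ ((Real.log 2 * Real.sqrt x - 1) ^ 2 + (2 * Real.log 2 - 1)) / Real.log 2 := by
    apply div_nonneg _ h6.le
    nlinarith [sq_nonneg (Real.log 2 * Real.sqrt x - 1)]
  linarith

lemma sum_choose_le (n d : ℕ) : (∑ i ∈ Finset.range (d + 1), n.choose i) ≤ (n + 1) ^ d := by
  induction d with
  | zero => simp
  | succ d ih =>
    rw [Finset.sum_range_succ]
    have h1 : n.choose (d + 1) ≤ n ^ (d + 1) := Nat.choose_le_pow n (d + 1)
    have h2 : n ^ (d + 1) ≤ n * (n + 1) ^ d := by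
      rw [pow_succ']
      exact Nat.mul_le_mul_left n (Nat.pow_le_pow_left (Nat.le_succ n) d)
    calc (∑ i ∈ Finset.range (d + 1), n.choose i) + n.choose (d + 1)
        ≤ (n + 1) ^ d + n * (n + 1) ^ d := Nat.add_le_add ih (h1.trans h2)
      _ = (n + 1) ^ (d + 1) := by ring

lemma stepA {X : Type} (H : Set (X → Bool)) (d k : ℕ)
    (hH : ∀ S : Finset X, Shatters H S → S.card ≤ d)
    (N : X → Finset X) (hN : ∀ x, (N x).card ≤ k)
    (S : Finset X) (hS : Shatters (inducedLabel N '' H) S) :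
    2 ^ S.card ≤ (S.card * (k + 1) + 1) ^ d := by
  classical
  set U : Finset X := S.biUnion (fun x => insert x (N x)) with hUdef
  have hSU : ∀ x ∈ S, insert x (N x) ⊆ U := by
    intro x hx
    rw [hUdef]
    exact Finset.subset_biUnion_of_mem (fun x => insert x (N x)) hx
  -- choose witnesses
  have key : ∀ A ∈ S.powerset, ∃ h, h ∈ H ∧
      ∀ x ∈ S, inducedLabel N h x = decide (x ∈ A) := by
    intro A _
    obtain ⟨f, hf, hfA⟩ := hS (fun x => decide (x ∈ A))
    obtain ⟨h, hh, rfl⟩ := hf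
    exact ⟨h, hh, hfA⟩
  choose! g hg1 hg2 using key
  set 𝒜 : Finset (Finset X) :=
    U.powerset.filter (fun T => ∃ h ∈ H, ∀ u ∈ U, (h u = true ↔ u ∈ T)) with h𝒜
  set F : Finset X → Finset X := fun A => U.filter (fun u => g A u = true) with hF
  -- induced label determined by trace
  have hdet : ∀ A ∈ S.powerset, ∀ x ∈ S,
      (inducedLabel N (g A) x = true ↔ (x ∈ F A ∨ ∃ z ∈ N x, z ∈ F A)) := by
    intro A hA x hx
    have hxU : x ∈ U := hSU x hx (Finset.mem_insert_self x _)
    have hzU : ∀ z ∈ N x, z ∈ U := fun z hz =>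
      hSU x hx (Finset.mem_insert_of_mem hz)
    simp only [inducedLabel, Bool.or_eq_true, decide_eq_true_eq, hF, Finset.mem_filter]
    constructor
    · rintro (h1 | ⟨z, hz, hz2⟩)
      · exact Or.inl ⟨hxU, h1⟩
      · exact Or.inr ⟨z, hz, hzU z hz, hz2⟩
    · rintro (⟨_, h1⟩ | ⟨z, hz, _, hz2⟩)
      · exact Or.inl h1
      · exact Or.inr ⟨z, hz, hz2⟩
  -- injectivity
  have hinj : Set.InjOn F S.powerset := by
    intro A hA B hB hFAB
    have hA' := Finset.mem_powerset.1 hA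
    have hB' := Finset.mem_powerset.1 hB
    ext x
    by_cases hx : x ∈ S
    · have e1 : (x ∈ A) ↔ (inducedLabel N (g A) x = true) := by
        rw [hg2 A hA x hx]; simp
      have e2 : (x ∈ B) ↔ (inducedLabel N (g B) x = true) := by
        rw [hg2 B hB x hx]; simp
      rw [e1, e2, hdet A hA x hx, hdet B hB x hx, hFAB]
    · exact iff_of_false (fun h => hx (hA' h)) (fun h => hx (hB' h))
  -- F maps into 𝒜
  have hmap : ∀ A ∈ S.powerset, F A ∈ 𝒜 := by
    intro A hA
    rw [h𝒜, Finset.mem_filter]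
    refine ⟨Finset.mem_powerset.2 (Finset.filter_subset _ _), g A, hg1 A hA, ?_⟩
    intro u hu
    simp [hF, hu]
  -- 2^|S| ≤ |𝒜|
  have step1 : 2 ^ S.card ≤ 𝒜.card := by
    rw [← Finset.card_powerset]
    exact Finset.card_le_card_of_injOn F hmap hinj
  -- Sauer-Shelah
  have step2 : 𝒜.card ≤ 𝒜.shatterer.card := Finset.card_le_card_shatterer 𝒜
  -- shattered sets are small and inside U
  have step3 : 𝒜.shatterer ⊆ (Finset.range (d + 1)).biUnion (fun i => U.powersetCard i) := by
    intro T hT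
    rw [Finset.mem_shatterer] at hT
    have hTU : T ⊆ U := by
      obtain ⟨u, hu, hTu⟩ := hT.exists_superset
      exact hTu.trans (Finset.mem_powerset.1 (Finset.mem_filter.1 hu).1)
    have hTd : Shatters H T := by
      intro σ
      obtain ⟨u, hu, hTu⟩ := hT (Finset.filter_subset (fun x => σ x = true) T)
      obtain ⟨-, h, hhH, hhu⟩ := Finset.mem_filter.1 hu
      refine ⟨h, hhH, fun x hx => ?_⟩
      have : (h x = true) ↔ (σ x = true) := by
        rw [hhu x (hTU hx)]
        constructor
        · intro hxu
          have : x ∈ T ∩ u := Finset.mem_inter.2 ⟨hx, hxu⟩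
          rw [hTu] at this
          exact (Finset.mem_filter.1 this).2
        · intro hσ
          have : x ∈ T ∩ u := by
            rw [hTu]; exact Finset.mem_filter.2 ⟨hx, hσ⟩
          exact (Finset.mem_inter.1 this).2
      cases hxv : h x <;> cases hsv : σ x <;> simp_all
    have hcard : T.card ≤ d := hH T hTd
    rw [Finset.mem_biUnion]
    exact ⟨T.card, Finset.mem_range.2 (Nat.lt_succ_of_le hcard),
      Finset.mem_powersetCard.2 ⟨hTU, rfl⟩⟩
  have step4 : 𝒜.shatterer.card ≤ (U.card + 1) ^ d := by
    calc 𝒜.shatterer.card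
        ≤ ((Finset.range (d + 1)).biUnion (fun i => U.powersetCard i)).card :=
          Finset.card_le_card step3
      _ ≤ ∑ i ∈ Finset.range (d + 1), (U.powersetCard i).card :=
          Finset.card_biUnion_le
      _ = ∑ i ∈ Finset.range (d + 1), U.card.choose i := by
          simp [Finset.card_powersetCard]
      _ ≤ (U.card + 1) ^ d := sum_choose_le U.card d
  have hU : U.card ≤ S.card * (k + 1) := by
    calc U.card ≤ ∑ x ∈ S, (insert x (N x)).card := Finset.card_biUnion_le
      _ ≤ ∑ x ∈ S, (k + 1) := Finset.sum_le_sum (fun x _ =>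
          (Finset.card_insert_le x (N x)).trans (Nat.succ_le_succ (hN x)))
      _ = S.card * (k + 1) := by rw [Finset.sum_const, smul_eq_mul]
  calc 2 ^ S.card ≤ (U.card + 1) ^ d := step1.trans (step2.trans step4)
    _ ≤ (S.card * (k + 1) + 1) ^ d := Nat.pow_le_pow_left (Nat.succ_le_succ hU) d

set_option maxHeartbeats 1000000 in
lemma stepB (m d k : ℕ) (hm : 1 ≤ m) (hd : 1 ≤ d) (hk : 1 ≤ k)
    (h2 : 2 ^ m ≤ (m * (k + 1) + 1) ^ d) :
    (m : ℝ) ≤ 10 * (d : ℝ) * Real.logb 2 ((k : ℝ) * (d : ℝ) + 2) := by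
  have hm1 : (1 : ℝ) ≤ (m : ℝ) := by exact_mod_cast hm
  have hd1 : (1 : ℝ) ≤ (d : ℝ) := by exact_mod_cast hd
  have hk1 : (1 : ℝ) ≤ (k : ℝ) := by exact_mod_cast hk
  have hA : (2 : ℝ) ^ m ≤ ((m : ℝ) * ((k : ℝ) + 1) + 1) ^ d := by
    have := (Nat.cast_le (α := ℝ)).2 h2
    push_cast at this
    convert this using 2
  -- take logb 2
  have hpos1 : (0 : ℝ) < (m : ℝ) * ((k : ℝ) + 1) + 1 := by nlinarith
  have h1 : (m : ℝ) ≤ (d : ℝ) * Real.logb 2 ((m : ℝ) * ((k : ℝ) + 1) + 1) := by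
    have lhs : Real.logb 2 ((2 : ℝ) ^ m) = (m : ℝ) := by
      rw [Real.logb_pow, Real.logb_self_eq_one one_lt_two, mul_one]
    have rhs : Real.logb 2 (((m : ℝ) * ((k : ℝ) + 1) + 1) ^ d)
        = (d : ℝ) * Real.logb 2 ((m : ℝ) * ((k : ℝ) + 1) + 1) := Real.logb_pow 2 _ d
    have := Real.logb_le_logb_of_le one_lt_two (by positivity : (0:ℝ) < (2:ℝ) ^ m) hA
    rw [lhs, rhs] at this
    exact this
  have h2' : Real.logb 2 ((m : ℝ) * ((k : ℝ) + 1) + 1) ≤ Real.logb 2 (4 * m * k) := by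
    apply Real.logb_le_logb_of_le one_lt_two hpos1
    nlinarith
  have h3 : Real.logb 2 (4 * (m : ℝ) * k) = 2 + Real.logb 2 m + Real.logb 2 k := by
    rw [Real.logb_mul (by nlinarith) (by nlinarith), Real.logb_mul (by norm_num) (by nlinarith)]
    have : Real.logb 2 4 = 2 := by
      rw [show (4 : ℝ) = 2 ^ (2 : ℕ) by norm_num, Real.logb_pow,
        Real.logb_self_eq_one one_lt_two]
      norm_num
    rw [this]
  have h4 : Real.logb 2 (m : ℝ) ≤ (m : ℝ) / (2 * d) + Real.logb 2 (2 * d) := by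
    have hq : (0 : ℝ) < (m : ℝ) / (2 * d) := by positivity
    have : Real.logb 2 (m : ℝ) = Real.logb 2 ((m : ℝ) / (2 * d)) + Real.logb 2 (2 * d) := by
      rw [← Real.logb_mul (by positivity) (by positivity)]
      congr 1
      field_simp
    rw [this]
    have := logb_two_le_self hq
    linarith
  have h5 : Real.logb 2 (2 * (d : ℝ)) = 1 + Real.logb 2 d := by
    rw [Real.logb_mul (by norm_num) (by positivity), Real.logb_self_eq_one one_lt_two]
  set L : ℝ := Real.logb 2 ((k : ℝ) * d + 2) with hL
  have hL1 : (1 : ℝ) ≤ L := by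
    rw [hL, show (1 : ℝ) = Real.logb 2 2 from (Real.logb_self_eq_one one_lt_two).symm]
    apply Real.logb_le_logb_of_le one_lt_two (by norm_num)
    nlinarith
  have h6 : Real.logb 2 (d : ℝ) ≤ L :=
    Real.logb_le_logb_of_le one_lt_two (by linarith) (by nlinarith)
  have h7 : Real.logb 2 (k : ℝ) ≤ L :=
    Real.logb_le_logb_of_le one_lt_two (by linarith) (by nlinarith)
  -- combine
  have hd0 : (0 : ℝ) < d := by linarith
  have key : (m : ℝ) ≤ 3 * d + (m : ℝ) / 2 + d * Real.logb 2 k + d * Real.logb 2 d := by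
    have hmul : (d : ℝ) * Real.logb 2 ((m : ℝ) * ((k : ℝ) + 1) + 1)
        ≤ (d : ℝ) * (2 + ((m : ℝ) / (2 * d) + (1 + Real.logb 2 d)) + Real.logb 2 k) := by
      apply mul_le_mul_of_nonneg_left _ (by linarith)
      rw [← h5]
      linarith [h2'.trans_eq h3]
    have hdiv : (d : ℝ) * ((m : ℝ) / (2 * d)) = (m : ℝ) / 2 := by
      field_simp
    nlinarith [h1, hmul]
  have h8 : (d : ℝ) * Real.logb 2 k ≤ d * L := mul_le_mul_of_nonneg_left h7 hd0.le
  have h9 : (d : ℝ) * Real.logb 2 d ≤ d * L := mul_le_mul_of_nonneg_left h6 hd0.le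
  have h10 : (d : ℝ) * 1 ≤ d * L := mul_le_mul_of_nonneg_left hL1 hd0.le
  nlinarith [key, h8, h9, h10]

/-- There is a universal constant `C > 0` such that for any set `X`, any
hypothesis class `H` of VC dimension at most `d ≥ 1`, and any manipulation graph `N` on `X`
of maximum out-degree at most `k ≥ 1`, the VC dimension of the induced class
`H̄_N = {h̄_N : h ∈ H}` is at most `C · d · log₂(k·d + 2)`. -/
theorem vcDim_induced_upper_bound :
    ∃ C : ℝ, 0 < C ∧
      ∀ (X : Type) (H : Set (X → Bool)) (d k : ℕ), 1 ≤ d → 1 ≤ k →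
        (∀ S : Finset X, Shatters H S → S.card ≤ d) →
        ∀ N : X → Finset X, (∀ x, (N x).card ≤ k) →
          ∀ S : Finset X, Shatters (inducedLabel N '' H) S →
            (S.card : ℝ) ≤ C * d * Real.logb 2 (k * d + 2) := by
  refine ⟨10, by norm_num, ?_⟩
  intro X H d k hd hk hH N hN S hS
  have hA : 2 ^ S.card ≤ (S.card * (k + 1) + 1) ^ d := stepA H d k hH N hN S hS
  rcases Nat.eq_zero_or_pos S.card with hm0 | hm1
  · rw [hm0]
    have hd1 : (1 : ℝ) ≤ (d : ℝ) := by exact_mod_cast hd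
    have hk1 : (1 : ℝ) ≤ (k : ℝ) := by exact_mod_cast hk
    have : (0 : ℝ) ≤ Real.logb 2 ((k : ℝ) * (d : ℝ) + 2) :=
      Real.logb_nonneg one_lt_two (by nlinarith)
    push_cast
    nlinarith
  · exact stepB S.card d k hm1 hd hk hA
end

section
/- For every d ≥ 1 and every m ≥ 1, setting k = 2^m, there exist a finite set X with |X| = d·(k+1)·m, a manipulation graph N on X with maximum out-degree at most k, and a hypothesis class H of functions X → Bool whose VC dimension equals d, such that the induced class H̄_N shatters a set of size d·m (equivalently, the VC dimension of H̄_N is at least d·log₂ k). -/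
section Aux

variable (d m : ℕ)

abbrev MGX := Fin d × Fin m × ((Fin m → Bool) ⊕ Unit)

def MGN : MGX d m → Finset (MGX d m) := fun x =>
  match x with
  | (_, _, Sum.inl _) => ∅
  | (j, i, Sum.inr _) => Finset.univ.image (fun g : Fin m → Bool => (j, i, Sum.inl g))

def MGhyp : (Fin d → (Fin m → Bool)) → MGX d m → Bool := fun F x =>
  match x with
  | (j, i, Sum.inl g) => decide (g = F j) && g i
  | (_, _, Sum.inr _) => false

end Aux

/-- For every `d ≥ 1` and `m ≥ 1`, with `k = 2^m`, there exist a finite set `X`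
with `|X| = d·(k+1)·m`, a manipulation graph `N` on `X` of maximum out-degree at most `k`,
and a hypothesis class `H` whose VC dimension equals `d`, such that the induced class
`H̄_N` shatters a set of size `d·m`. -/
theorem vcDim_induced_lower_bound :
    ∀ d m : ℕ, 1 ≤ d → 1 ≤ m →
      ∃ (X : Type) (inst : Fintype X) (N : X → Finset X) (H : Set (X → Bool)),
        @Fintype.card X inst = d * (2 ^ m + 1) * m ∧
        (∀ x, (N x).card ≤ 2 ^ m) ∧
        (∀ S : Finset X, Shatters H S → S.card ≤ d) ∧
        (∃ S : Finset X, Shatters H S ∧ S.card = d) ∧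
        (∃ S : Finset X, Shatters (inducedLabel N '' H) S ∧ S.card = d * m) := by
  intro d m hd hm
  haveI : NeZero m := ⟨by omega⟩
  classical
  have hnefun : (fun _ : Fin m => true) ≠ fun _ => false := by
    intro h; simpa using congrFun h 0
  refine ⟨MGX d m, inferInstance, MGN d m, Set.range (MGhyp d m), ?_, ?_, ?_, ?_, ?_⟩
  · simp [MGX, Fintype.card_prod, Fintype.card_sum, Fintype.card_fun]
    ring
  · rintro ⟨j, i, g | u⟩
    · simp [MGN]
    · simp only [MGN]
      calc (Finset.univ.image (fun g : Fin m → Bool => ((j, i, Sum.inl g) : MGX d m))).card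
          ≤ (Finset.univ : Finset (Fin m → Bool)).card := Finset.card_image_le
        _ = 2 ^ m := by simp
  · -- VC upper bound
    intro S hS
    have key : ∀ x ∈ S, ∀ y ∈ S, x.1 = y.1 → x = y := by
      intro x hx y hy hxy
      by_contra hne
      have pat : ∀ a b : Bool, ∃ F : Fin d → (Fin m → Bool),
          MGhyp d m F x = a ∧ MGhyp d m F y = b := by
        intro a b
        obtain ⟨f, hf, hval⟩ := hS (fun z => if z = x then a else if z = y then b else false)
        obtain ⟨F, rfl⟩ := hf
        refine ⟨F, ?_, ?_⟩
        · simpa using hval x hx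
        · have := hval y hy
          simpa [hne, Ne.symm hne] using this
      obtain ⟨j, i, c⟩ := x
      obtain ⟨j', i', c'⟩ := y
      simp only at hxy
      subst hxy
      match c, c' with
      | Sum.inr _, _ =>
          obtain ⟨F, hFx, _⟩ := pat true true
          simp [MGhyp] at hFx
      | Sum.inl _, Sum.inr _ =>
          obtain ⟨F, _, hFy⟩ := pat true true
          simp [MGhyp] at hFy
      | Sum.inl g, Sum.inl g' =>
          obtain ⟨F1, h1x, h1y⟩ := pat true true
          simp only [MGhyp, Bool.and_eq_true, decide_eq_true_eq] at h1x h1y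
          have hgg' : g = g' := h1x.1.trans h1y.1.symm
          subst hgg'
          obtain ⟨F2, h2x, h2y⟩ := pat true false
          obtain ⟨F3, h3x, h3y⟩ := pat false true
          simp only [MGhyp, Bool.and_eq_true, decide_eq_true_eq,
            Bool.and_eq_false_iff, decide_eq_false_iff_not] at h2x h2y h3x h3y
          rcases h2y with h | h
          · exact h h2x.1
          · rw [h3y.2] at h
            simp at h
    have inj : Set.InjOn Prod.fst ↑S := fun x hx y hy h => key x hx y hy h
    calc S.card = (S.image Prod.fst).card := (Finset.card_image_of_injOn inj).symm
      _ ≤ Fintype.card (Fin d) := (Finset.card_le_univ _).trans_eq (by simp)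
      _ = d := by simp
  · -- H shatters a set of size d
    refine ⟨Finset.univ.image (fun j : Fin d => ((j, 0, Sum.inl (fun _ => true)) : MGX d m)),
      ?_, ?_⟩
    · intro σ
      refine ⟨MGhyp d m (fun j => if σ (j, 0, Sum.inl (fun _ => true)) then
        (fun _ => true) else (fun _ => false)), Set.mem_range_self _, ?_⟩
      intro x hx
      simp only [Finset.mem_image, Finset.mem_univ, true_and] at hx
      obtain ⟨j, rfl⟩ := hx
      by_cases hσ : σ (j, 0, Sum.inl (fun _ => true)) = true
      · simp [MGhyp, hσ]
      · have hσ' : σ (j, 0, Sum.inl (fun _ => true)) = false := by simpa using hσ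
        simp [MGhyp, hσ', hnefun]
    · rw [Finset.card_image_of_injective _ (by intro a b h; simpa using h)]
      simp
  · -- induced class shatters d*m
    refine ⟨Finset.univ.image (fun p : Fin d × Fin m => ((p.1, p.2, Sum.inr ()) : MGX d m)),
      ?_, ?_⟩
    · intro σ
      set F : Fin d → Fin m → Bool := fun j i => σ (j, i, Sum.inr ()) with hF
      refine ⟨inducedLabel (MGN d m) (MGhyp d m F),
        Set.mem_image_of_mem _ (Set.mem_range_self _), ?_⟩
      intro x hx
      simp only [Finset.mem_image, Finset.mem_univ, true_and] at hx
      obtain ⟨⟨j, i⟩, rfl⟩ := hx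
      have hiff : (∃ z ∈ MGN d m (j, i, Sum.inr ()), MGhyp d m F z = true) ↔
          σ (j, i, Sum.inr ()) = true := by
        constructor
        · rintro ⟨z, hz, hzv⟩
          simp only [MGN, Finset.mem_image, Finset.mem_univ, true_and] at hz
          obtain ⟨g, rfl⟩ := hz
          simp only [MGhyp, Bool.and_eq_true, decide_eq_true_eq] at hzv
          have : F j i = true := hzv.1 ▸ hzv.2
          simpa [hF] using this
        · intro h
          refine ⟨(j, i, Sum.inl (F j)), by simp [MGN], ?_⟩
          simp only [MGhyp, decide_eq_true_eq]
          simpa [hF] using h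
      show (MGhyp d m F (j, i, Sum.inr ()) ||
          decide (∃ z ∈ MGN d m (j, i, Sum.inr ()), MGhyp d m F z = true)) = σ (j, i, Sum.inr ())
      rw [show MGhyp d m F (j, i, Sum.inr ()) = false from rfl, Bool.false_or]
      cases hb : σ (j, i, Sum.inr ()) with
      | true => exact decide_eq_true (hiff.mpr hb)
      | false =>
          rw [decide_eq_false_iff_not]
          intro hp
          have := hiff.mp hp
          rw [hb] at this
          simp at this
    · rw [Finset.card_image_of_injective _ (by intro a b h; simpa [Prod.ext_iff] using h)]
      simp
end

section
/- There is a universal constant C > 0 such that the following holds. Let X be a countable set, N* a manipulation graph on X with N*(x) nonempty and |N*(x)| ≤ k for all x (k ≥ 1), and 𝒢 a finite nonempty class of manipulation graphs on X each of maximum out-degree at most k. Let μ be a probability measure on X such that some G₀ ∈ 𝒢 satisfies μ({x : N_{G₀}(x) ≠ N*(x)}) = 0. Draw x_1,…,x_T i.i.d. from μ and, independently across rounds given the x_t, draw v_t uniformly from N*(x_t). If T ≥ C·k·log(2|𝒢|/δ)/ε for ε, δ ∈ (0,1), then with probability at least 1 − δ: every Ĝ ∈ 𝒢 such that v_t ∈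 N_Ĝ(x_t) for all t and such that ∑_{t=1}^T |N_Ĝ(x_t)| is minimal among all graphs in 𝒢 with that consistency property, satisfies μ({x : N_Ĝ(x) ≠ N*(x)}) ≤ ε. -/
open MeasureTheory
open scoped ENNReal

/-- The uniform probability measure on a finite set. -/
noncomputable def unifOn {X : Type*} [MeasurableSpace X] (s : Finset X) : Measure X :=
  ((s.card : ENNReal))⁻¹ • ∑ v ∈ s, Measure.dirac v

/-- Per-round joint distribution of `(x, v)`: `x ∼ μ` and, given `x`, `v` is uniform on
`Nstar x`. -/
noncomputable def jointXV {X : Type*} [MeasurableSpace X] (μ : Measure X)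
    (Nstar : X → Finset X) : Measure (X × X) :=
  μ.bind fun x => (unifOn (Nstar x)).map (Prod.mk x)


set_option maxHeartbeats 1000000


variable {X : Type} [Countable X] [MeasurableSpace X] [DiscreteMeasurableSpace X]

lemma lintegral_unifOn (s : Finset X) (f : X → ℝ≥0∞) :
    ∫⁻ v, f v ∂(unifOn s) = (s.card : ℝ≥0∞)⁻¹ * ∑ v ∈ s, f v := by
  rw [unifOn, lintegral_smul_measure, lintegral_finset_sum_measure]
  congr 1
  exact Finset.sum_congr rfl fun v _ => lintegral_dirac v f

lemma unifOn_prob (s : Finset X) (hs : s.Nonempty) : IsProbabilityMeasure (unifOn s) := by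
  constructor
  have : (unifOn s) Set.univ = ∫⁻ v, 1 ∂(unifOn s) := by simp
  rw [this, lintegral_unifOn]
  simp only [Finset.sum_const, nsmul_eq_mul, mul_one]
  rw [ENNReal.inv_mul_cancel]
  · simpa using hs.card_pos.ne'
  · simp

lemma lintegral_jointXV (μ : Measure X) (Nstar : X → Finset X) (f : X × X → ℝ≥0∞) :
    ∫⁻ z, f z ∂(jointXV μ Nstar)
      = ∫⁻ x, ((Nstar x).card : ℝ≥0∞)⁻¹ * ∑ v ∈ Nstar x, f (x, v) ∂μ := by
  rw [jointXV, Measure.lintegral_bind (Measurable.of_discrete.aemeasurable) (Measurable.of_discrete.aemeasurable)]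
  congr 1
  ext x
  rw [lintegral_map Measurable.of_discrete Measurable.of_discrete, lintegral_unifOn]

lemma jointXV_prob (μ : Measure X) [IsProbabilityMeasure μ] (Nstar : X → Finset X)
    (hne : ∀ x, (Nstar x).Nonempty) : IsProbabilityMeasure (jointXV μ Nstar) := by
  constructor
  have : (jointXV μ Nstar) Set.univ = ∫⁻ z, 1 ∂(jointXV μ Nstar) := by simp
  rw [this, lintegral_jointXV]
  have : ∀ x, ((Nstar x).card : ℝ≥0∞)⁻¹ * ∑ _v ∈ Nstar x, (1:ℝ≥0∞) = 1 := by
    intro x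
    simp only [Finset.sum_const, nsmul_eq_mul, mul_one]
    rw [ENNReal.inv_mul_cancel] <;> simp [(hne x).card_pos.ne']
  simp only [this, lintegral_one, measure_univ]

lemma jointXV_apply (μ : Measure X) (Nstar : X → Finset X) (A : Set (X × X)) :
    (jointXV μ Nstar) A
      = ∫⁻ x, ((Nstar x).card : ℝ≥0∞)⁻¹ * ∑ v ∈ Nstar x, A.indicator 1 (x, v) ∂μ := by
  rw [← lintegral_indicator_one MeasurableSet.of_discrete, lintegral_jointXV]

-- product lintegral over pi measure
lemma lintegral_pi_pow {α : Type*} [MeasurableSpace α] (μ : Measure α) [SigmaFinite μ]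
    (f : α → ℝ≥0∞) (hf : Measurable f) (n : ℕ) :
    ∫⁻ S, ∏ t : Fin n, f (S t) ∂(Measure.pi fun _ : Fin n => μ) = (∫⁻ x, f x ∂μ) ^ n := by
  induction n with
  | zero => simp
  | succ n ih =>
      have e := MeasurableEquiv.piFinSuccAbove (fun _ : Fin (n+1) => α) 0
      have hmp := measurePreserving_piFinSuccAbove (fun _ : Fin (n+1) => μ) 0
      set Pi1 : Measure (Fin (n+1) → α) := Measure.pi fun _ => μ
      set Pin : Measure (Fin n → α) := Measure.pi fun _ => μ
      have key : ∫⁻ S, ∏ t : Fin (n+1), f (S t) ∂Pi1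
          = ∫⁻ z : α × (Fin n → α), f z.1 * ∏ t : Fin n, f (z.2 t) ∂(μ.prod Pin) := by
        rw [← hmp.map_eq, lintegral_map (by fun_prop) (MeasurableEquiv.measurable _)]
        congr 1
        ext S
        simp only [MeasurableEquiv.piFinSuccAbove, MeasurableEquiv.coe_mk]
        rw [Fin.prod_univ_succ]
        simp [Fin.insertNthEquiv, Fin.succAbove_zero, Fin.tail]
      rw [key, lintegral_prod _ (by fun_prop)]
      simp_rw [lintegral_const_mul _ (by fun_prop : Measurable fun y : Fin n → α => ∏ t, f (y t))]
      rw [lintegral_mul_const _ hf, ih, pow_succ]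
      ring
lemma key_num (k a b m : ℕ) (hk : 1 ≤ k) (ha : a ≤ k) (hb1 : 1 ≤ b) (hbk : b ≤ k)
    (hma : m ≤ a) (hmb : m ≤ b) (hcase : m + 1 ≤ b ∨ b + 1 ≤ a) :
    (m : ℝ) * (1 - 1/(2*k))^a ≤ (1 - 1/(8*k)) * b * (1 - 1/(2*k))^b := by
  have hk1 : (1:ℝ) ≤ (k:ℝ) := by exact_mod_cast hk
  set θ : ℝ := 1 - 1/(2*k) with hθdef
  have hinv : 1/(2*(k:ℝ)) ≤ 1/2 := by
    apply div_le_div_of_nonneg_left <;> nlinarith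
  have hinv0 : 0 < 1/(2*(k:ℝ)) := by positivity
  have hθ0 : (0:ℝ) < θ := by rw [hθdef]; linarith
  have hθ1 : θ ≤ 1 := by rw [hθdef]; linarith
  have hbR : (1:ℝ) ≤ (b:ℝ) := by exact_mod_cast hb1
  have hbkR : (b:ℝ) ≤ (k:ℝ) := by exact_mod_cast hbk
  have h8k : 1/(8*(k:ℝ)) ≤ 1/8 := by apply div_le_div_of_nonneg_left <;> nlinarith
  have hρ : (0:ℝ) < 1 - 1/(8*k) := by linarith
  rcases hcase with hcase | hcase
  · rcases le_or_gt b a with hab | hab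
    · have h1 : θ^a ≤ θ^b := pow_le_pow_of_le_one hθ0.le hθ1 hab
      have hmR : (m:ℝ) ≤ (b:ℝ) - 1 := by
        have h := hcase
        have : (m:ℝ) + 1 ≤ (b:ℝ) := by exact_mod_cast h
        linarith
      have hbp : (0:ℝ) < θ^b := pow_pos hθ0 b
      have hb8 : (b:ℝ)/(8*k) ≤ 1 := by
        rw [div_le_one (by nlinarith)]; nlinarith
      have hkey : (b:ℝ) - 1 ≤ (1 - 1/(8*(k:ℝ))) * b := by
        have : (1 - 1/(8*(k:ℝ))) * b = b - b/(8*k) := by ring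
        rw [this]; linarith
      calc (m:ℝ) * θ^a ≤ ((b:ℝ)-1) * θ^b :=
            mul_le_mul hmR h1 (pow_pos hθ0 a).le (by linarith)
        _ ≤ (1 - 1/(8*k)) * b * θ^b := mul_le_mul_of_nonneg_right hkey hbp.le
    · rcases Nat.eq_zero_or_pos m with hm0 | hm1
      · subst hm0
        simp only [Nat.cast_zero, zero_mul]
        positivity
      · have ha1 : 1 ≤ a := le_trans hm1 hma
        set j : ℕ := b - a with hjdef
        have hj1 : 1 ≤ j := by omega
        have hjb : a + j = b := by omega
        have hjR : (1:ℝ) ≤ (j:ℝ) := by exact_mod_cast hj1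
        have hbern : 1 - (j:ℝ)/(2*k) ≤ θ^j := by
          have h := one_add_mul_le_pow (a := -(1/(2*(k:ℝ)))) (by linarith) j
          have heq : (1 + (j:ℝ) * -(1/(2*k))) = 1 - (j:ℝ)/(2*k) := by ring
          rw [heq] at h
          simpa [hθdef, sub_eq_add_neg] using h
        have hθb : θ^b = θ^a * θ^j := by rw [← pow_add, hjb]
        rw [hθb]
        have hpa : (0:ℝ) < θ^a := pow_pos hθ0 a
        have hmain : (m:ℝ) ≤ (1 - 1/(8*k)) * b * θ^j := by
          have haR : (a:ℝ) + (j:ℝ) = (b:ℝ) := by exact_mod_cast hjb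
          have hmaR : (m:ℝ) ≤ (b:ℝ) - (j:ℝ) := by
            have h1 : (m:ℝ) ≤ (a:ℝ) := by exact_mod_cast hma
            linarith
          have step : (1 - 1/(8*(k:ℝ))) * b * (1 - (j:ℝ)/(2*k)) ≤ (1 - 1/(8*k)) * b * θ^j :=
            mul_le_mul_of_nonneg_left hbern (by positivity)
          refine le_trans ?_ step
          have hk0 : (0:ℝ) < (k:ℝ) := by linarith
          have expand : (1 - 1/(8*(k:ℝ))) * b * (1 - (j:ℝ)/(2*k))
              = (b:ℝ) - (b:ℝ)*(j:ℝ)/(2*k) - (b:ℝ)/(8*k) + (b:ℝ)*(j:ℝ)/(16*k^2) := by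
            field_simp; ring
          rw [expand]
          have h1 : (b:ℝ)*(j:ℝ)/(2*k) ≤ (j:ℝ)/2 := by
            rw [div_le_div_iff₀ (by positivity) (by norm_num)]; nlinarith
          have h2 : (b:ℝ)/(8*k) ≤ (j:ℝ)/8 := by
            rw [div_le_div_iff₀ (by positivity) (by norm_num)]; nlinarith
          have h3 : 0 ≤ (b:ℝ)*(j:ℝ)/(16*k^2) := by positivity
          linarith
        calc (m:ℝ) * θ^a ≤ ((1 - 1/(8*k)) * b * θ^j) * θ^a :=
              mul_le_mul_of_nonneg_right hmain hpa.le
          _ = (1 - 1/(8*k)) * b * (θ^a * θ^j) := by ring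
  · have h1 : θ^a ≤ θ^(b+1) := pow_le_pow_of_le_one hθ0.le hθ1 hcase
    have hmR : (m:ℝ) ≤ (b:ℝ) := by exact_mod_cast hmb
    have hθ8 : θ ≤ 1 - 1/(8*k) := by
      have : 1/(8*(k:ℝ)) ≤ 1/(2*k) := by
        apply div_le_div_of_nonneg_left <;> nlinarith
      rw [hθdef]; linarith
    calc (m:ℝ) * θ^a ≤ (b:ℝ) * θ^(b+1) :=
          mul_le_mul hmR h1 (pow_pos hθ0 a).le (by linarith)
      _ = θ * (b:ℝ) * θ^b := by ring
      _ ≤ (1 - 1/(8*k)) * b * θ^b :=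
          mul_le_mul_of_nonneg_right
            (mul_le_mul_of_nonneg_right hθ8 (by linarith)) (pow_pos hθ0 b).le

-- ENNReal pointwise lemmas
lemma theta_pos (k : ℕ) (hk : 1 ≤ k) : (0:ℝ) < 1 - 1/(2*(k:ℝ)) := by
  have hk1 : (1:ℝ) ≤ (k:ℝ) := by exact_mod_cast hk
  have hinv : 1/(2*(k:ℝ)) ≤ 1/2 := by
    apply div_le_div_of_nonneg_left <;> nlinarith
  linarith

lemma rho_pos (k : ℕ) (hk : 1 ≤ k) : (0:ℝ) < 1 - 1/(8*(k:ℝ)) := by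
  have hk1 : (1:ℝ) ≤ (k:ℝ) := by exact_mod_cast hk
  have hinv : 1/(8*(k:ℝ)) ≤ 1/8 := by
    apply div_le_div_of_nonneg_left <;> nlinarith
  linarith

lemma hpt_eq (k b : ℕ) (hb1 : 1 ≤ b) (hbk : b ≤ k) (hk : 1 ≤ k) :
    ((b:ℝ≥0∞))⁻¹ * ((b:ℝ≥0∞) * (ENNReal.ofReal (1 - 1/(2*(k:ℝ))))^(b + (k-b)))
      = (ENNReal.ofReal (1 - 1/(2*(k:ℝ))))^k := by
  have h1 : b + (k - b) = k := by omega
  rw [h1, ← mul_assoc, ENNReal.inv_mul_cancel (by exact_mod_cast (by omega : b ≠ 0)) (by simp),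
    one_mul]

lemma hpt_lemma (k a b m : ℕ) (hk : 1 ≤ k) (ha : a ≤ k) (hb1 : 1 ≤ b) (hbk : b ≤ k)
    (hma : m ≤ a) (hmb : m ≤ b) (hcase : m + 1 ≤ b ∨ b + 1 ≤ a) :
    ((b:ℝ≥0∞))⁻¹ * ((m:ℝ≥0∞) * (ENNReal.ofReal (1 - 1/(2*(k:ℝ))))^(a + (k-b)))
      ≤ (ENNReal.ofReal (1 - 1/(2*(k:ℝ))))^k * ENNReal.ofReal (1 - 1/(8*(k:ℝ))) := by
  have hθr0 := theta_pos k hk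
  have hρr0 := rho_pos k hk
  set θr : ℝ := 1 - 1/(2*(k:ℝ))
  set ρr : ℝ := 1 - 1/(8*(k:ℝ))
  have hbpos : (0:ℝ) < (b:ℝ) := by exact_mod_cast (by omega : 0 < b)
  have lhs_eq : ((b:ℝ≥0∞))⁻¹ * ((m : ℝ≥0∞) * (ENNReal.ofReal θr)^(a + (k - b)))
      = ENNReal.ofReal ((b:ℝ)⁻¹ * ((m:ℝ) * θr^(a + (k-b)))) := by
    rw [ENNReal.ofReal_mul (by positivity), ENNReal.ofReal_mul (by positivity)]
    rw [ENNReal.ofReal_inv_of_pos hbpos, ENNReal.ofReal_natCast,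
      ENNReal.ofReal_natCast, ENNReal.ofReal_pow hθr0.le]
  have rhs_eq : (ENNReal.ofReal θr)^k * ENNReal.ofReal ρr = ENNReal.ofReal (θr^k * ρr) := by
    rw [ENNReal.ofReal_mul (by positivity), ENNReal.ofReal_pow hθr0.le]
  rw [lhs_eq, rhs_eq]
  apply ENNReal.ofReal_le_ofReal
  have hknum := key_num k a b m hk ha hb1 hbk hma hmb hcase
  have hsplit : θr^(a + (k-b)) = θr^a * θr^(k-b) := pow_add θr a (k-b)
  have hsplit2 : θr^k = θr^b * θr^(k-b) := by
    rw [← pow_add]; congr 1; omega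
  rw [hsplit, hsplit2, inv_mul_le_iff₀ hbpos]
  calc (m:ℝ) * (θr^a * θr^(k-b)) = ((m:ℝ) * θr^a) * θr^(k-b) := by ring
    _ ≤ ((1 - 1/(8*(k:ℝ))) * b * θr^b) * θr^(k-b) :=
        mul_le_mul_of_nonneg_right hknum (by positivity)
    _ = (b:ℝ) * (θr^b * θr^(k-b) * ρr) := by ring

section PerRound
variable {X : Type} [Countable X] [MeasurableSpace X] [DiscreteMeasurableSpace X]

open scoped Classical in
lemma per_round (Nstar : X → Finset X) (k : ℕ) (hk : 1 ≤ k) (hne : ∀ x, (Nstar x).Nonempty)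
    (hNk : ∀ x, (Nstar x).card ≤ k) (G : X → Finset X) (hGk : ∀ x, (G x).card ≤ k)
    (μ : Measure X) [IsProbabilityMeasure μ] (ε : ℝ) (hε0 : 0 < ε) (hε1 : ε < 1)
    (hbad : ENNReal.ofReal ε < μ {x | G x ≠ Nstar x}) :
    ∫⁻ z : X × X, (if z.2 ∈ G z.1 then (1:ℝ≥0∞) else 0) *
        (ENNReal.ofReal (1 - 1/(2*(k:ℝ))))^((G z.1).card + (k - (Nstar z.1).card))
        ∂(jointXV μ Nstar)
      ≤ (ENNReal.ofReal (1 - 1/(2*(k:ℝ))))^k * ENNReal.ofReal (1 - ε/(8*(k:ℝ))) := by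
  classical
  have hk1 : (1:ℝ) ≤ (k:ℝ) := by exact_mod_cast hk
  have hθr0 := theta_pos k hk
  have hρr0 := rho_pos k hk
  set θr : ℝ := 1 - 1/(2*(k:ℝ)) with hθrdef
  set ρr : ℝ := 1 - 1/(8*(k:ℝ)) with hρrdef
  set θ : ℝ≥0∞ := ENNReal.ofReal θr with hθdef
  rw [lintegral_jointXV]
  have hpt : ∀ x : X,
      ((Nstar x).card : ℝ≥0∞)⁻¹ * ∑ v ∈ Nstar x,
          (if v ∈ G x then (1:ℝ≥0∞) else 0) * θ^((G x).card + (k - (Nstar x).card))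
        ≤ θ^k * (if G x = Nstar x then 1 else ENNReal.ofReal ρr) := by
    intro x
    have hsum : ∑ v ∈ Nstar x, (if v ∈ G x then (1:ℝ≥0∞) else 0)
          * θ^((G x).card + (k - (Nstar x).card))
        = ((((Nstar x).filter (· ∈ G x)).card : ℝ≥0∞))
          * θ^((G x).card + (k - (Nstar x).card)) := by
      rw [← Finset.sum_mul]
      congr 1
      rw [Finset.sum_boole]
    rw [hsum]
    have hb1 : 1 ≤ (Nstar x).card := (hne x).card_pos
    by_cases hgood : G x = Nstar x
    · rw [if_pos hgood]
      have hfilter : (Nstar x).filter (· ∈ G x) = Nstar x := by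
        apply Finset.filter_true_of_mem; intro v hv; rw [hgood]; exact hv
      have hcard : (G x).card = (Nstar x).card := by rw [hgood]
      rw [hfilter, hcard, mul_one]
      exact le_of_eq (hpt_eq k (Nstar x).card hb1 (hNk x) hk)
    · rw [if_neg hgood]
      have hma : ((Nstar x).filter (· ∈ G x)).card ≤ (G x).card := by
        apply Finset.card_le_card
        intro v hv
        exact (Finset.mem_filter.mp hv).2
      have hmb := Finset.card_filter_le (Nstar x) (· ∈ G x)
      have hcase : ((Nstar x).filter (· ∈ G x)).card + 1 ≤ (Nstar x).card
          ∨ (Nstar x).card + 1 ≤ (G x).card := by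
        by_cases hsub : Nstar x ⊆ G x
        · right
          have hss : Nstar x ⊂ G x :=
            Finset.ssubset_iff_subset_ne.mpr ⟨hsub, fun h => hgood h.symm⟩
          have := Finset.card_lt_card hss
          omega
        · left
          obtain ⟨v, hv, hv2⟩ := Finset.not_subset.mp hsub
          have hss : (Nstar x).filter (· ∈ G x) ⊂ Nstar x := by
            refine Finset.ssubset_iff_subset_ne.mpr ⟨Finset.filter_subset _ _, ?_⟩
            intro h
            have : v ∈ (Nstar x).filter (· ∈ G x) := by rw [h]; exact hv
            exact hv2 (Finset.mem_filter.mp this).2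
          have := Finset.card_lt_card hss
          omega
      exact hpt_lemma k (G x).card (Nstar x).card _ hk (hGk x) hb1 (hNk x) hma hmb hcase
  refine le_trans (lintegral_mono hpt) ?_
  set B : Set X := {x | G x ≠ Nstar x} with hBdef
  have hrw : (fun x => θ^k * (if G x = Nstar x then 1 else ENNReal.ofReal ρr))
      = fun x => θ^k * (Bᶜ.indicator (fun _ => (1:ℝ≥0∞)) x
          + B.indicator (fun _ => ENNReal.ofReal ρr) x) := by
    funext x
    by_cases h : G x = Nstar x
    · simp [Set.indicator_apply, hBdef, h]
    · simp [Set.indicator_apply, hBdef, h]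
  rw [hrw, lintegral_const_mul _ Measurable.of_discrete]
  refine mul_le_mul_right ?_ _
  rw [lintegral_add_left Measurable.of_discrete,
    lintegral_indicator_const MeasurableSet.of_discrete,
    lintegral_indicator_const MeasurableSet.of_discrete]
  have hBtop : μ B ≠ ⊤ := measure_ne_top μ B
  set p : ℝ := (μ B).toReal with hpdef
  have hp1 : p ≤ 1 := by
    rw [hpdef]
    exact ENNReal.toReal_le_of_le_ofReal (by norm_num) (by simpa using prob_le_one (μ := μ) (s := B))
  have hp0 : 0 ≤ p := ENNReal.toReal_nonneg
  have hεp : ε ≤ p := by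
    have h2 : ENNReal.ofReal ε < ENNReal.ofReal p := by
      rw [hpdef]; rwa [ENNReal.ofReal_toReal hBtop]
    exact le_of_lt ((ENNReal.ofReal_lt_ofReal_iff_of_nonneg hε0.le).mp h2)
  have hμB : μ B = ENNReal.ofReal p := by rw [hpdef, ENNReal.ofReal_toReal hBtop]
  have hμBc : μ Bᶜ = ENNReal.ofReal (1 - p) := by
    rw [measure_compl MeasurableSet.of_discrete hBtop, measure_univ, hμB,
      ← ENNReal.ofReal_one, ← ENNReal.ofReal_sub _ hp0]
  rw [hμB, hμBc, one_mul, ← ENNReal.ofReal_mul hρr0.le,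
    ← ENNReal.ofReal_add (by linarith) (by positivity)]
  apply ENNReal.ofReal_le_ofReal
  rw [hρrdef]
  have hk0 : (0:ℝ) < (k:ℝ) := by linarith
  have hdiv : ε/(8*(k:ℝ)) ≤ p/(8*(k:ℝ)) := by gcongr
  have hexp : (1 - 1/(8*(k:ℝ)))*p = p - p/(8*(k:ℝ)) := by ring
  linarith [hdiv, hexp]
end PerRound

section More
variable {X : Type} [Countable X] [MeasurableSpace X] [DiscreteMeasurableSpace X]

lemma good0_measure (Nstar : X → Finset X) (hne : ∀ x, (Nstar x).Nonempty)
    (μ : Measure X) [IsProbabilityMeasure μ]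
    (G₀ : X → Finset X) (hG0 : μ {x | G₀ x ≠ Nstar x} = 0) :
    (jointXV μ Nstar) {z : X × X | G₀ z.1 = Nstar z.1 ∧ z.2 ∈ Nstar z.1} = 1 := by
  rw [jointXV_apply]
  have hae : ∀ᵐ x ∂μ, G₀ x = Nstar x := by
    rw [MeasureTheory.ae_iff]
    simpa using hG0
  have hcong : ∀ᵐ x ∂μ, ((Nstar x).card : ℝ≥0∞)⁻¹ *
      ∑ v ∈ Nstar x, ({z : X × X | G₀ z.1 = Nstar z.1 ∧ z.2 ∈ Nstar z.1}).indicator 1 (x, v)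
      = (1:ℝ≥0∞) := by
    filter_upwards [hae] with x hx
    have hsum : ∑ v ∈ Nstar x,
        ({z : X × X | G₀ z.1 = Nstar z.1 ∧ z.2 ∈ Nstar z.1}).indicator
          (1 : X × X → ℝ≥0∞) (x, v) = ((Nstar x).card : ℝ≥0∞) := by
      rw [Finset.sum_congr rfl
        (fun v hv => Set.indicator_of_mem (Set.mem_setOf.mpr ⟨hx, hv⟩) (1 : X × X → ℝ≥0∞))]
      simp
    rw [hsum]
    exact ENNReal.inv_mul_cancel (by exact_mod_cast (hne x).card_pos.ne') (by simp)
  rw [lintegral_congr_ae hcong, lintegral_one, measure_univ]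

lemma tail_bound (k n T : ℕ) (ε δ : ℝ) (hk : 1 ≤ k) (hn : 1 ≤ n) (hε0 : 0 < ε) (hε1 : ε < 1)
    (hδ0 : 0 < δ) (hδ1 : δ < 1) (hT : (T:ℝ) ≥ 8*k*Real.log (2*n/δ)/ε) :
    (ENNReal.ofReal (1 - ε/(8*(k:ℝ))))^T ≤ ENNReal.ofReal (δ/(2*(n:ℝ))) := by
  have hk1 : (1:ℝ) ≤ (k:ℝ) := by exact_mod_cast hk
  have hn1 : (1:ℝ) ≤ (n:ℝ) := by exact_mod_cast hn
  have hc0 : (0:ℝ) ≤ 1 - ε/(8*(k:ℝ)) := by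
    have h1 : ε/(8*(k:ℝ)) ≤ 1/(8*(k:ℝ)) := by gcongr
    have h2 : 1/(8*(k:ℝ)) ≤ 1/8 := by
      apply div_le_div_of_nonneg_left <;> nlinarith
    linarith
  rw [← ENNReal.ofReal_pow hc0]
  apply ENNReal.ofReal_le_ofReal
  have hce : 1 - ε/(8*(k:ℝ)) ≤ Real.exp (-(ε/(8*(k:ℝ)))) := by
    have := Real.add_one_le_exp (-(ε/(8*(k:ℝ))))
    linarith
  have h1 : (1 - ε/(8*(k:ℝ)))^T ≤ Real.exp (-(ε/(8*(k:ℝ))))^T := pow_le_pow_left₀ hc0 hce T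
  have h2 : Real.exp (-(ε/(8*(k:ℝ))))^T = Real.exp ((T:ℝ) * (-(ε/(8*(k:ℝ))))) := by
    rw [← Real.exp_nat_mul]
  have hq0 : (0:ℝ) < 2*n/δ := by positivity
  have hq1 : (1:ℝ) < 2*n/δ := by
    rw [lt_div_iff₀ hδ0]; nlinarith
  have hL0 : 0 < Real.log (2*n/δ) := Real.log_pos hq1
  have hTe : 8*(k:ℝ)*Real.log (2*n/δ) ≤ (T:ℝ)*ε := (div_le_iff₀ hε0).mp hT
  have h8 : (0:ℝ) < 8*(k:ℝ) := by linarith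
  have hL : Real.log (2*n/δ) ≤ (T:ℝ)*ε/(8*(k:ℝ)) := by
    rw [le_div_iff₀ h8]; nlinarith [hTe]
  have h3 : Real.exp ((T:ℝ) * (-(ε/(8*(k:ℝ))))) ≤ Real.exp (-Real.log (2*n/δ)) := by
    apply Real.exp_le_exp.mpr
    have hid : (T:ℝ) * (-(ε/(8*(k:ℝ)))) = -((T:ℝ)*ε/(8*(k:ℝ))) := by ring
    rw [hid]
    linarith [hL]
  have h4 : Real.exp (-Real.log (2*n/δ)) = δ/(2*n) := by
    rw [Real.exp_neg, Real.exp_log hq0, inv_div]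
  calc (1 - ε/(8*(k:ℝ)))^T ≤ Real.exp (-(ε/(8*(k:ℝ))))^T := h1
    _ = Real.exp ((T:ℝ) * (-(ε/(8*(k:ℝ))))) := h2
    _ ≤ Real.exp (-Real.log (2*n/δ)) := h3
    _ = δ/(2*(n:ℝ)) := h4
end More

/-- graph learning in the realizable setting. With probability at least
`1 − δ` over `(x_t, v_t)_{t ≤ T}`, every graph `Ghat ∈ 𝒢` consistent with all observed pairs
and of minimal total empirical degree among consistent graphs satisfies
`μ{x : N_Ghat(x) ≠ N*(x)} ≤ ε`, provided `T ≥ C·k·log(2|𝒢|/δ)/ε`. -/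
theorem graph_learning_realizable :
    ∃ C : ℝ, 0 < C ∧
      ∀ (X : Type) [Countable X] [MeasurableSpace X] [DiscreteMeasurableSpace X]
        (Nstar : X → Finset X) (k : ℕ), 1 ≤ k →
        (∀ x, (Nstar x).Nonempty) → (∀ x, (Nstar x).card ≤ k) →
        ∀ 𝒢 : Finset (X → Finset X), 𝒢.Nonempty →
          (∀ G ∈ 𝒢, ∀ x, (G x).card ≤ k) →
          ∀ μ : Measure X, IsProbabilityMeasure μ →
            (∃ G₀ ∈ 𝒢, μ {x | G₀ x ≠ Nstar x} = 0) →
            ∀ ε δ : ℝ, ε ∈ Set.Ioo (0 : ℝ) 1 → δ ∈ Set.Ioo (0 : ℝ) 1 →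
              ∀ T : ℕ,
                (T : ℝ) ≥ C * k * Real.log (2 * 𝒢.card / δ) / ε →
                ENNReal.ofReal (1 - δ) ≤
                  (Measure.pi fun _ : Fin T => jointXV μ Nstar)
                    {S : Fin T → X × X |
                      ∀ Ghat ∈ 𝒢,
                        (∀ t : Fin T, (S t).2 ∈ Ghat (S t).1) →
                        (∀ G' ∈ 𝒢, (∀ t : Fin T, (S t).2 ∈ G' (S t).1) →
                          ∑ t : Fin T, (Ghat (S t).1).card ≤ ∑ t : Fin T, (G' (S t).1).card) →
                        μ {x | Ghat x ≠ Nstar x} ≤ ENNReal.ofReal ε} := by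
  classical
  refine ⟨8, by norm_num, ?_⟩
  intro X _ _ _ Nstar k hk hne hNk 𝒢 h𝒢ne h𝒢k μ hμprob hex ε δ hε hδ T hT
  obtain ⟨G₀, hG₀mem, hG₀⟩ := hex
  obtain ⟨hε0, hε1⟩ := hε
  obtain ⟨hδ0, hδ1⟩ := hδ
  haveI := hμprob
  haveI hνprob : IsProbabilityMeasure (jointXV μ Nstar) := jointXV_prob μ Nstar hne
  set ν : Measure (X × X) := jointXV μ Nstar with hνdef
  set P : Measure (Fin T → X × X) := Measure.pi fun _ : Fin T => ν with hPdef
  haveI : IsProbabilityMeasure P := by rw [hPdef]; infer_instance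
  set n : ℕ := 𝒢.card with hndef
  have hn : 1 ≤ n := h𝒢ne.card_pos
  set Tset : Set (Fin T → X × X) :=
    {S : Fin T → X × X |
      ∀ Ghat ∈ 𝒢,
        (∀ t : Fin T, (S t).2 ∈ Ghat (S t).1) →
        (∀ G' ∈ 𝒢, (∀ t : Fin T, (S t).2 ∈ G' (S t).1) →
          ∑ t : Fin T, (Ghat (S t).1).card ≤ ∑ t : Fin T, (G' (S t).1).card) →
        μ {x | Ghat x ≠ Nstar x} ≤ ENNReal.ofReal ε} with hTsetdef
  set A₀ : Set (X × X) := {z : X × X | G₀ z.1 = Nstar z.1 ∧ z.2 ∈ Nstar z.1} with hA₀def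
  set Good0 : Set (Fin T → X × X) := Set.pi Set.univ (fun _ => A₀) with hGood0def
  set E : (X → Finset X) → Set (Fin T → X × X) := fun G =>
    {S | (∀ t, (S t).2 ∈ G (S t).1) ∧
      ∑ t, (G (S t).1).card ≤ ∑ t, (Nstar (S t).1).card} with hEdef
  set Bad : Finset (X → Finset X) :=
    𝒢.filter (fun G => ¬ (μ {x | G x ≠ Nstar x} ≤ ENNReal.ofReal ε)) with hBaddef
  -- inclusion
  have hsub : Tsetᶜ ⊆ Good0ᶜ ∪ ⋃ G ∈ Bad, E G := by
    intro S hS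
    by_cases hS0 : S ∈ Good0
    · right
      rw [hTsetdef] at hS
      simp only [Set.mem_compl_iff, Set.mem_setOf_eq] at hS
      push_neg at hS
      obtain ⟨Ghat, hmem, hcons, hmin, herr⟩ := hS
      have hG₀cons : ∀ t : Fin T, (S t).2 ∈ G₀ (S t).1 := by
        intro t
        have hmemA : S t ∈ A₀ := hS0 t (Set.mem_univ t)
        rw [hA₀def] at hmemA
        rw [hmemA.1]
        exact hmemA.2
      have hminG₀ := hmin G₀ hG₀mem hG₀cons
      have heq : ∑ t : Fin T, (G₀ (S t).1).card = ∑ t : Fin T, (Nstar (S t).1).card := by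
        apply Finset.sum_congr rfl
        intro t _
        have hmemA : S t ∈ A₀ := hS0 t (Set.mem_univ t)
        rw [hA₀def] at hmemA
        rw [hmemA.1]
      have hGhatBad : Ghat ∈ Bad := Finset.mem_filter.mpr ⟨hmem, not_le.mpr herr⟩
      refine Set.mem_iUnion₂.mpr ⟨Ghat, hGhatBad, ?_⟩
      rw [hEdef]
      exact ⟨hcons, by rw [← heq]; exact hminG₀⟩
    · left
      exact hS0
  -- measure of Good0ᶜ is zero
  have hA0 : ν A₀ = 1 := good0_measure Nstar hne μ G₀ hG₀
  have hGood0meas : P Good0 = 1 := by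
    rw [hPdef, hGood0def, Measure.pi_pi]
    simp [hA0]
  have hGood0c : P Good0ᶜ = 0 := by
    rw [measure_compl MeasurableSet.of_discrete (measure_ne_top _ _), hGood0meas, measure_univ,
      tsub_self]
  -- per-graph bound
  have hEG : ∀ G ∈ Bad, P (E G) ≤ ENNReal.ofReal (δ/(2*(n:ℝ))) := by
    intro G hGBad
    rw [hBaddef, Finset.mem_filter] at hGBad
    obtain ⟨hGmem, hGbad⟩ := hGBad
    have hbadlt : ENNReal.ofReal ε < μ {x | G x ≠ Nstar x} := not_le.mp hGbad
    set θ : ℝ≥0∞ := ENNReal.ofReal (1 - 1/(2*(k:ℝ))) with hθdef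
    have hθr0 := theta_pos k hk
    have hθ0 : θ ≠ 0 := by
      rw [hθdef]
      simpa using (ENNReal.ofReal_pos.mpr hθr0).ne'
    have hθtop : θ ≠ ⊤ := by rw [hθdef]; exact ENNReal.ofReal_ne_top
    have hθ1 : θ ≤ 1 := by
      rw [hθdef]
      apply ENNReal.ofReal_le_one.mpr
      have : (0:ℝ) < 1/(2*(k:ℝ)) := by positivity
      linarith
    set f : X × X → ℝ≥0∞ := fun z => (if z.2 ∈ G z.1 then (1:ℝ≥0∞) else 0) *
        θ^((G z.1).card + (k - (Nstar z.1).card)) with hfdef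
    have hpow : ∀ S ∈ E G, (θ^k)^T ≤ ∏ t : Fin T, f (S t) := by
      intro S hS
      rw [hEdef] at hS
      obtain ⟨hcons, hsum⟩ := hS
      have hprodeq : ∏ t : Fin T, f (S t)
          = θ ^ (∑ t : Fin T, ((G (S t).1).card + (k - (Nstar (S t).1).card))) := by
        rw [← Finset.prod_pow_eq_pow_sum]
        apply Finset.prod_congr rfl
        intro t _
        rw [hfdef]
        simp only [if_pos (hcons t), one_mul]
      rw [hprodeq, ← pow_mul]
      apply pow_le_pow_of_le_one zero_le hθ1
      calc ∑ t : Fin T, ((G (S t).1).card + (k - (Nstar (S t).1).card))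
          = ∑ t : Fin T, (G (S t).1).card + ∑ t : Fin T, (k - (Nstar (S t).1).card) := by
            rw [Finset.sum_add_distrib]
        _ ≤ ∑ t : Fin T, (Nstar (S t).1).card + ∑ t : Fin T, (k - (Nstar (S t).1).card) := by
            omega
        _ = ∑ t : Fin T, ((Nstar (S t).1).card + (k - (Nstar (S t).1).card)) := by
            rw [Finset.sum_add_distrib]
        _ = ∑ _t : Fin T, k := by
            apply Finset.sum_congr rfl
            intro t _
            have := hNk (S t).1
            omega
        _ = k * T := by
            simp [Finset.sum_const, Finset.card_univ, mul_comm]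
    have hmarkov : (θ^k)^T * P (E G) ≤ ∫⁻ S, ∏ t : Fin T, f (S t) ∂P := by
      rw [← lintegral_indicator_const MeasurableSet.of_discrete]
      apply lintegral_mono
      intro S
      by_cases hS : S ∈ E G
      · rw [Set.indicator_of_mem hS]
        exact hpow S hS
      · rw [Set.indicator_of_notMem hS]
        exact zero_le
    have hprod : ∫⁻ S, ∏ t : Fin T, f (S t) ∂P = (∫⁻ z, f z ∂ν)^T := by
      rw [hPdef]
      exact lintegral_pi_pow ν f Measurable.of_discrete T
    have hper : ∫⁻ z, f z ∂ν ≤ θ^k * ENNReal.ofReal (1 - ε/(8*(k:ℝ))) := by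
      rw [hνdef, hfdef]
      exact per_round Nstar k hk hne hNk G (h𝒢k G hGmem) μ ε hε0 hε1 hbadlt
    have hchain : (θ^k)^T * P (E G) ≤ (θ^k)^T * (ENNReal.ofReal (1 - ε/(8*(k:ℝ))))^T := by
      calc (θ^k)^T * P (E G) ≤ (∫⁻ z, f z ∂ν)^T := by rw [← hprod]; exact hmarkov
        _ ≤ (θ^k * ENNReal.ofReal (1 - ε/(8*(k:ℝ))))^T := pow_le_pow_left' hper T
        _ = (θ^k)^T * (ENNReal.ofReal (1 - ε/(8*(k:ℝ))))^T := mul_pow _ _ _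
    have hcancel : P (E G) ≤ (ENNReal.ofReal (1 - ε/(8*(k:ℝ))))^T := by
      rwa [ENNReal.mul_le_mul_iff_right (pow_ne_zero T (pow_ne_zero k hθ0))
        (by exact ENNReal.pow_ne_top (ENNReal.pow_ne_top hθtop))] at hchain
    refine le_trans hcancel ?_
    exact tail_bound k n T ε δ hk hn hε0 hε1 hδ0 hδ1 (by exact_mod_cast hT)
  -- union bound
  have hTc : P Tsetᶜ ≤ ENNReal.ofReal δ := by
    calc P Tsetᶜ ≤ P (Good0ᶜ ∪ ⋃ G ∈ Bad, E G) := measure_mono hsub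
      _ ≤ P Good0ᶜ + P (⋃ G ∈ Bad, E G) := measure_union_le _ _
      _ = P (⋃ G ∈ Bad, E G) := by rw [hGood0c, zero_add]
      _ ≤ ∑ G ∈ Bad, P (E G) := measure_biUnion_finset_le _ _
      _ ≤ ∑ _G ∈ Bad, ENNReal.ofReal (δ/(2*(n:ℝ))) := Finset.sum_le_sum hEG
      _ = (Bad.card : ℝ≥0∞) * ENNReal.ofReal (δ/(2*(n:ℝ))) := by
          rw [Finset.sum_const, nsmul_eq_mul]
      _ ≤ (n : ℝ≥0∞) * ENNReal.ofReal (δ/(2*(n:ℝ))) := by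
          apply mul_le_mul_left
          exact_mod_cast Finset.card_le_card (Finset.filter_subset _ _)
      _ = ENNReal.ofReal ((n:ℝ) * (δ/(2*(n:ℝ)))) := by
          rw [ENNReal.ofReal_mul (by positivity), ENNReal.ofReal_natCast]
      _ = ENNReal.ofReal (δ/2) := by
          congr 1
          have hn0 : (n:ℝ) ≠ 0 := by positivity
          field_simp
      _ ≤ ENNReal.ofReal δ := ENNReal.ofReal_le_ofReal (by linarith)
  -- conclude
  have h1 : (1:ℝ≥0∞) ≤ P Tset + P Tsetᶜ := by
    rw [← measure_univ (μ := P)]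
    rw [show (Set.univ : Set (Fin T → X × X)) = Tset ∪ Tsetᶜ from (Set.union_compl_self _).symm]
    exact measure_union_le _ _
  have h2 : (1:ℝ≥0∞) ≤ P Tset + ENNReal.ofReal δ :=
    h1.trans (add_le_add_right hTc _)
  have h3 : ENNReal.ofReal (1 - δ) = 1 - ENNReal.ofReal δ := by
    rw [ENNReal.ofReal_sub _ hδ0.le, ENNReal.ofReal_one]
  rw [h3]
  exact tsub_le_iff_right.mpr h2
end

section
/- Let X be a set and let N* and N be manipulation graphs on X such that N*(x) is nonempty and |N*(x)| ≤ k for every x (k ≥ 1). Let x_1,…,x_T ∈ X be points satisfying ∑_{t=1}^T |N(x_t)| ≤ ∑_{t=1}^T |N*(x_t)|. Then ∑_{t=1}^T 1{N*(x_t) ≠ N(x_t)} ≤ 2k · ∑_{t=1}^T |N*(x_t) \ N(x_t)| / |N*(x_t)|, where |N*(x) \ N(x)| denotes the cardinality of the set difference. -/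
/-- if the total degree of `N` on the sample is at most that of `N*`, then the
number of sample points where the two neighborhoods differ is at most
`2k · ∑_t |N*(x_t) \ N(x_t)| / |N*(x_t)|`. -/
theorem neighborhood_mismatch_bound (X : Type*) [DecidableEq X]
    (Nstar N : X → Finset X) (k : ℕ) (hk : 1 ≤ k)
    (hne : ∀ x, (Nstar x).Nonempty) (hdeg : ∀ x, (Nstar x).card ≤ k)
    (T : ℕ) (x : Fin T → X)
    (hsum : ∑ t : Fin T, (N (x t)).card ≤ ∑ t : Fin T, (Nstar (x t)).card) :
    ∑ t : Fin T, (if Nstar (x t) ≠ N (x t) then (1 : ℝ) else 0) ≤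
      2 * k * ∑ t : Fin T, ((Nstar (x t) \ N (x t)).card : ℝ) / (Nstar (x t)).card := by
  -- ∑ b ≤ ∑ a  where a_t = |N*\N|, b_t = |N\N*|
  have hba : ∑ t : Fin T, (N (x t) \ Nstar (x t)).card ≤
      ∑ t : Fin T, (Nstar (x t) \ N (x t)).card := by
    have h1 : ∀ t : Fin T, (N (x t)).card =
        (N (x t) \ Nstar (x t)).card + (N (x t) ∩ Nstar (x t)).card := fun t =>
      (Finset.card_sdiff_add_card_inter _ _).symm
    have h2 : ∀ t : Fin T, (Nstar (x t)).card =
        (Nstar (x t) \ N (x t)).card + (N (x t) ∩ Nstar (x t)).card := fun t => by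
      rw [Finset.inter_comm]; exact (Finset.card_sdiff_add_card_inter _ _).symm
    simp only [h1, h2, Finset.sum_add_distrib] at hsum
    omega
  -- step 1: LHS ≤ ∑ (a_t + b_t)
  have step1 : ∑ t : Fin T, (if Nstar (x t) ≠ N (x t) then (1 : ℝ) else 0) ≤
      ∑ t : Fin T, (((Nstar (x t) \ N (x t)).card : ℝ) + (N (x t) \ Nstar (x t)).card) := by
    apply Finset.sum_le_sum
    intro t _
    by_cases h : Nstar (x t) = N (x t)
    · simp [h]
    · simp only [h, ne_eq, not_false_eq_true, if_true]
      have hnat : 1 ≤ (Nstar (x t) \ N (x t)).card + (N (x t) \ Nstar (x t)).card := by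
        by_contra hc
        push_neg at hc
        have e1 : Nstar (x t) \ N (x t) = ∅ := Finset.card_eq_zero.mp (by omega)
        have e2 : N (x t) \ Nstar (x t) = ∅ := Finset.card_eq_zero.mp (by omega)
        exact h (Finset.Subset.antisymm (Finset.sdiff_eq_empty_iff_subset.mp e1)
          (Finset.sdiff_eq_empty_iff_subset.mp e2))
      have : (1 : ℝ) ≤ ((Nstar (x t) \ N (x t)).card : ℝ) + (N (x t) \ Nstar (x t)).card := by
        exact_mod_cast hnat
      linarith
  -- step 2: ∑ (a+b) ≤ 2 ∑ a
  have step2 : ∑ t : Fin T, (((Nstar (x t) \ N (x t)).card : ℝ) + (N (x t) \ Nstar (x t)).card) ≤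
      2 * ∑ t : Fin T, ((Nstar (x t) \ N (x t)).card : ℝ) := by
    rw [Finset.sum_add_distrib, two_mul]
    have hba' : (∑ t : Fin T, ((N (x t) \ Nstar (x t)).card : ℝ)) ≤
        ∑ t : Fin T, ((Nstar (x t) \ N (x t)).card : ℝ) := by exact_mod_cast hba
    linarith
  -- step 3: 2 ∑ a ≤ 2k ∑ a/s
  have step3 : 2 * ∑ t : Fin T, ((Nstar (x t) \ N (x t)).card : ℝ) ≤
      2 * k * ∑ t : Fin T, ((Nstar (x t) \ N (x t)).card : ℝ) / (Nstar (x t)).card := by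
    rw [mul_assoc, Finset.mul_sum, Finset.mul_sum, Finset.mul_sum]
    apply Finset.sum_le_sum
    intro t _
    have hs : (0 : ℝ) < (Nstar (x t)).card := by
      exact_mod_cast Finset.card_pos.mpr (hne (x t))
    have hsk : ((Nstar (x t)).card : ℝ) ≤ k := by exact_mod_cast hdeg (x t)
    have key : ((Nstar (x t) \ N (x t)).card : ℝ) ≤
        k * (((Nstar (x t) \ N (x t)).card : ℝ) / (Nstar (x t)).card) := by
      have : ((Nstar (x t)).card : ℝ) *
          (((Nstar (x t) \ N (x t)).card : ℝ) / (Nstar (x t)).card) =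
          ((Nstar (x t) \ N (x t)).card : ℝ) := by
        field_simp
      calc ((Nstar (x t) \ N (x t)).card : ℝ)
          = ((Nstar (x t)).card : ℝ) *
            (((Nstar (x t) \ N (x t)).card : ℝ) / (Nstar (x t)).card) := this.symm
        _ ≤ k * (((Nstar (x t) \ N (x t)).card : ℝ) / (Nstar (x t)).card) := by
            apply mul_le_mul_of_nonneg_right hsk
            positivity
    linarith
  linarith
end

section
/- Let X be a countable set, N* and N manipulation graphs on X, H a class of functions X → Bool, and D a probability measure on X × Bool. Set α = D({(x,y) : N(x) ≠ N*(x)}) and Δ_H = inf_{h' ∈ H} L^str_{N*,D}(h'). If h ∈ H satisfies L^str_{N,D}(h) ≤ inf_{h' ∈ H} L^str_{N,D}(h') + ε for some ε ≥ 0, then L^str_{N*,D}(h) ≤ 2α + Δ_H + ε. -/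
open MeasureTheory

/-- The strategic loss of `h` under graph `N` and distribution `D`. -/
noncomputable def strLoss {X : Type*} [MeasurableSpace X] (D : Measure (X × Bool))
    (N : X → Finset X) (h : X → Bool) : ENNReal :=
  D {p : X × Bool | inducedLabel N h p.1 ≠ p.2}

/-- if `h ∈ H` is `ε`-approximately optimal for the strategic loss under an
approximate graph `N`, then its strategic loss under the true graph `N*` is at most
`2α + Δ_H + ε`, where `α = D{(x,y) : N(x) ≠ N*(x)}` and `Δ_H` is the optimal strategic
loss under `N*`. -/
theorem approx_graph_transfer (X : Type*) [Countable X] [MeasurableSpace X]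
    [DiscreteMeasurableSpace X]
    (Nstar N : X → Finset X) (H : Set (X → Bool)) (D : Measure (X × Bool))
    [IsProbabilityMeasure D] (h : X → Bool) (hH : h ∈ H) (ε : ℝ) (hε : 0 ≤ ε)
    (hopt : strLoss D N h ≤ (⨅ h' ∈ H, strLoss D N h') + ENNReal.ofReal ε) :
    strLoss D Nstar h ≤
      2 * D {p : X × Bool | N p.1 ≠ Nstar p.1} + (⨅ h' ∈ H, strLoss D Nstar h') +
        ENNReal.ofReal ε := by
  set α := D {p : X × Bool | N p.1 ≠ Nstar p.1} with hα
  have key : ∀ (M M' : X → Finset X) (g : X → Bool),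
      strLoss D M g ≤ strLoss D M' g + D {p : X × Bool | M p.1 ≠ M' p.1} := by
    intro M M' g
    refine le_trans (measure_mono ?_) (measure_union_le _ _)
    intro p hp
    by_cases hpe : M p.1 = M' p.1
    · left; simpa [Set.mem_setOf_eq, inducedLabel, hpe] using hp
    · right; exact hpe
  have hset : {p : X × Bool | Nstar p.1 ≠ N p.1} = {p : X × Bool | N p.1 ≠ Nstar p.1} := by
    ext p; exact ne_comm
  have h1 : strLoss D Nstar h ≤ strLoss D N h + α := by
    have := key Nstar N h
    rwa [hset] at this
  have h2 : ∀ g, strLoss D N g ≤ strLoss D Nstar g + α := fun g => key N Nstar g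
  haveI : Nonempty H := ⟨⟨h, hH⟩⟩
  have hinf : (⨅ h' ∈ H, strLoss D N h') ≤ (⨅ h' ∈ H, strLoss D Nstar h') + α := by
    rw [iInf_subtype', iInf_subtype', ENNReal.iInf_add]
    exact iInf_mono fun g => h2 g
  calc strLoss D Nstar h ≤ strLoss D N h + α := h1
    _ ≤ ((⨅ h' ∈ H, strLoss D N h') + ENNReal.ofReal ε) + α :=
        add_le_add_left hopt α
    _ ≤ (((⨅ h' ∈ H, strLoss D Nstar h') + α) + ENNReal.ofReal ε) + α :=
        add_le_add_left (add_le_add_left hinf _) α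
    _ = 2 * α + (⨅ h' ∈ H, strLoss D Nstar h') + ENNReal.ofReal ε := by ring
end

section
/- Let X be a countable set, let N* and N be manipulation graphs on X such that for every x, N*(x) is nonempty, |N*(x)| ≤ k and |N(x)| ≤ k (k ≥ 1), and let μ be a probability measure on X. Define the neighborhood loss L_nb(N) = μ({x : N(x) ≠ N*(x)}) and the proxy loss L_proxy(N) = 2·∫ |N*(x) \ N(x)|/|N*(x)| dμ(x) + (1/k)·∫ |N(x)| dμ(x) − (1/k)·∫ |N*(x)| dμ(x). Then (1/k)·L_nb(N) ≤ L_proxy(N) ≤ 3·L_nb(N). -/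
open MeasureTheory

/-- the proxy loss
`L_proxy(N) = 2·∫ |N*(x)\N(x)|/|N*(x)| dμ + (1/k)·∫|N(x)| dμ − (1/k)·∫|N*(x)| dμ`
satisfies `(1/k)·L_nb(N) ≤ L_proxy(N) ≤ 3·L_nb(N)` where
`L_nb(N) = μ{x : N(x) ≠ N*(x)}`. -/
theorem proxy_loss_bounds (X : Type*) [Countable X] [MeasurableSpace X]
    [DiscreteMeasurableSpace X] [DecidableEq X]
    (Nstar N : X → Finset X) (k : ℕ) (hk : 1 ≤ k)
    (hne : ∀ x, (Nstar x).Nonempty)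
    (hdegstar : ∀ x, (Nstar x).card ≤ k) (hdeg : ∀ x, (N x).card ≤ k)
    (μ : Measure X) [IsProbabilityMeasure μ] :
    (1 / (k : ℝ)) * (μ {x | N x ≠ Nstar x}).toReal ≤
        2 * ∫ x, ((Nstar x \ N x).card : ℝ) / (Nstar x).card ∂μ
          + (1 / (k : ℝ)) * ∫ x, ((N x).card : ℝ) ∂μ
          - (1 / (k : ℝ)) * ∫ x, ((Nstar x).card : ℝ) ∂μ ∧
      2 * ∫ x, ((Nstar x \ N x).card : ℝ) / (Nstar x).card ∂μ
          + (1 / (k : ℝ)) * ∫ x, ((N x).card : ℝ) ∂μ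
          - (1 / (k : ℝ)) * ∫ x, ((Nstar x).card : ℝ) ∂μ ≤
        3 * (μ {x | N x ≠ Nstar x}).toReal := by
  have hk1 : (1:ℝ) ≤ (k:ℝ) := by exact_mod_cast hk
  have hkpos : (0:ℝ) < (k:ℝ) := by linarith
  set S : Set X := {x | N x ≠ Nstar x} with hSdef
  have hS : MeasurableSet S := MeasurableSet.of_discrete
  set f : X → ℝ := fun x =>
    2 * ((Nstar x \ N x).card : ℝ) / (Nstar x).card
      + (1 / (k : ℝ)) * (N x).card - (1 / (k : ℝ)) * (Nstar x).card with hf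
  -- pointwise facts
  have hbasic : ∀ x, (1:ℝ) ≤ (Nstar x).card ∧ ((Nstar x).card : ℝ) ≤ k ∧
      ((N x).card : ℝ) ≤ k ∧ (0:ℝ) ≤ ((Nstar x \ N x).card : ℝ) ∧
      ((Nstar x \ N x).card : ℝ) ≤ (Nstar x).card ∧
      ((Nstar x).card : ℝ) - ((Nstar x \ N x).card : ℝ) ≤ (N x).card := by
    intro x
    have h1 : 1 ≤ (Nstar x).card := Finset.card_pos.2 (hne x)
    have h2 : (Nstar x \ N x).card ≤ (Nstar x).card :=
      Finset.card_le_card (Finset.sdiff_subset)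
    have h3 : (Nstar x \ N x).card + (Nstar x ∩ N x).card = (Nstar x).card :=
      Finset.card_sdiff_add_card_inter _ _
    have h4 : (Nstar x ∩ N x).card ≤ (N x).card :=
      Finset.card_le_card (Finset.inter_subset_right)
    have h3R : ((Nstar x \ N x).card : ℝ) + ((Nstar x ∩ N x).card : ℝ) = (Nstar x).card := by
      exact_mod_cast h3
    have h4R : ((Nstar x ∩ N x).card : ℝ) ≤ (N x).card := by exact_mod_cast h4
    refine ⟨by exact_mod_cast h1, by exact_mod_cast hdegstar x, by exact_mod_cast hdeg x,
      by positivity, by exact_mod_cast h2, by linarith⟩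
  have hzero : ∀ x, N x = Nstar x → f x = 0 := by
    intro x hx
    simp [hf, hx, Finset.sdiff_self]
  have hlow : ∀ x, N x ≠ Nstar x → 1 / (k:ℝ) ≤ f x := by
    intro x hx
    obtain ⟨ha1, hak, hbk, hd0, hda, hab⟩ := hbasic x
    have hapos : (0:ℝ) < (Nstar x).card := by linarith
    have hinvk : (0:ℝ) < 1/(k:ℝ) := by positivity
    by_cases hd : Nstar x \ N x = ∅
    · have hsub : Nstar x ⊆ N x := Finset.sdiff_eq_empty_iff_subset.1 hd
      have hss : Nstar x ⊂ N x := hsub.ssubset_of_ne (Ne.symm hx)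
      have hlt : (Nstar x).card + 1 ≤ (N x).card := Finset.card_lt_card hss
      have hltR : ((Nstar x).card : ℝ) + 1 ≤ (N x).card := by exact_mod_cast hlt
      have hm : (1/(k:ℝ)) * (((Nstar x).card : ℝ) + 1) ≤ (1/(k:ℝ)) * (N x).card :=
        mul_le_mul_of_nonneg_left hltR (le_of_lt hinvk)
      simp only [hf, hd, Finset.card_empty, Nat.cast_zero]
      rw [mul_zero, zero_div]
      linarith [hm, mul_add (1/(k:ℝ)) ((Nstar x).card : ℝ) 1]
    · have hd1 : 1 ≤ (Nstar x \ N x).card := Finset.card_pos.2 (Finset.nonempty_iff_ne_empty.2 hd)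
      have hd1R : (1:ℝ) ≤ ((Nstar x \ N x).card : ℝ) := by exact_mod_cast hd1
      have hdiv : ((Nstar x \ N x).card : ℝ) * (1/(k:ℝ)) ≤ ((Nstar x \ N x).card : ℝ) / (Nstar x).card := by
        rw [mul_one_div]
        exact div_le_div_of_nonneg_left hd0 hapos hak
      have hA : (1/(k:ℝ)) * 1 ≤ (1/(k:ℝ)) * ((Nstar x \ N x).card : ℝ) :=
        mul_le_mul_of_nonneg_left hd1R (le_of_lt hinvk)
      have hB : (1/(k:ℝ)) * (((Nstar x).card : ℝ) - (N x).card) ≤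
          (1/(k:ℝ)) * ((Nstar x \ N x).card : ℝ) :=
        mul_le_mul_of_nonneg_left (by linarith) (le_of_lt hinvk)
      simp only [hf]
      rw [mul_div_assoc]
      rw [mul_comm] at hdiv
      nlinarith [mul_sub (1/(k:ℝ)) ((Nstar x).card : ℝ) ((N x).card : ℝ)]
  have hup : ∀ x, N x ≠ Nstar x → f x ≤ 3 := by
    intro x hx
    obtain ⟨ha1, hak, hbk, hd0, hda, hab⟩ := hbasic x
    have hapos : (0:ℝ) < (Nstar x).card := by linarith
    have h1 : ((Nstar x \ N x).card : ℝ) / (Nstar x).card ≤ 1 :=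
      (div_le_one hapos).2 hda
    have h2 : (1/(k:ℝ)) * (((N x).card : ℝ) - (Nstar x).card) ≤ 1 := by
      rw [mul_comm, ← div_eq_mul_one_div, div_le_one hkpos]
      linarith
    simp only [hf]
    rw [mul_div_assoc]
    nlinarith [mul_sub (1/(k:ℝ)) ((N x).card : ℝ) ((Nstar x).card : ℝ)]
  -- integrability
  have hbound : ∀ (g : X → ℝ) (C : ℝ), (∀ x, |g x| ≤ C) → Integrable g μ := by
    intro g C h
    exact (integrable_const C).mono' (Measurable.of_discrete).aestronglyMeasurable
      (ae_of_all _ fun x => by simpa using h x)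
  have hint1 : Integrable (fun x => ((Nstar x \ N x).card : ℝ) / (Nstar x).card) μ := by
    apply hbound _ 1
    intro x
    obtain ⟨ha1, _, _, hd0, hda, _⟩ := hbasic x
    rw [abs_of_nonneg (by positivity)]
    exact (div_le_one (by linarith)).2 hda
  have hint2 : Integrable (fun x => ((N x).card : ℝ)) μ := hbound _ k fun x => by
    rw [abs_of_nonneg (by positivity)]; exact (hbasic x).2.2.1
  have hint3 : Integrable (fun x => ((Nstar x).card : ℝ)) μ := hbound _ k fun x => by
    rw [abs_of_nonneg (by positivity)]; exact (hbasic x).2.1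
  have hintf : Integrable f μ := by
    have : f = fun x => (2 * (((Nstar x \ N x).card : ℝ) / (Nstar x).card)
        + (1 / (k : ℝ)) * (N x).card) - (1 / (k : ℝ)) * (Nstar x).card := by
      funext x; simp only [hf, mul_div_assoc]
    rw [this]
    exact ((hint1.const_mul 2).add (hint2.const_mul _)).sub (hint3.const_mul _)
  have hsplit : ∫ x, f x ∂μ =
      2 * ∫ x, ((Nstar x \ N x).card : ℝ) / (Nstar x).card ∂μ
        + (1 / (k : ℝ)) * ∫ x, ((N x).card : ℝ) ∂μ
        - (1 / (k : ℝ)) * ∫ x, ((Nstar x).card : ℝ) ∂μ := by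
    have : f = fun x => (2 * (((Nstar x \ N x).card : ℝ) / (Nstar x).card)
        + (1 / (k : ℝ)) * (N x).card) - (1 / (k : ℝ)) * (Nstar x).card := by
      funext x; simp only [hf, mul_div_assoc]
    have hA : Integrable (fun x => 2 * (((Nstar x \ N x).card : ℝ) / (Nstar x).card)) μ :=
      hint1.const_mul 2
    have hB : Integrable (fun x => (1 / (k : ℝ)) * ((N x).card : ℝ)) μ := hint2.const_mul _
    have hC : Integrable (fun x => (1 / (k : ℝ)) * ((Nstar x).card : ℝ)) μ := hint3.const_mul _
    have hAB : Integrable (fun x => 2 * (((Nstar x \ N x).card : ℝ) / (Nstar x).card)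
        + (1 / (k : ℝ)) * ((N x).card : ℝ)) μ := hA.add hB
    rw [this, integral_sub hAB hC, integral_add hA hB,
      MeasureTheory.integral_const_mul, MeasureTheory.integral_const_mul, MeasureTheory.integral_const_mul]
  have hmem : ∀ x, x ∈ S ↔ N x ≠ Nstar x := fun x => Iff.rfl
  have hlow' : ∫ x, S.indicator (fun _ => 1/(k:ℝ)) x ∂μ ≤ ∫ x, f x ∂μ := by
    apply integral_mono ((integrable_const _).indicator hS) hintf
    intro x
    by_cases hx : x ∈ S
    · rw [Set.indicator_of_mem hx]; exact hlow x ((hmem x).1 hx)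
    · rw [Set.indicator_of_notMem hx, hzero x (not_not.1 hx)]
  have hup' : ∫ x, f x ∂μ ≤ ∫ x, S.indicator (fun _ => (3:ℝ)) x ∂μ := by
    apply integral_mono hintf ((integrable_const _).indicator hS)
    intro x
    by_cases hx : x ∈ S
    · rw [Set.indicator_of_mem hx]; exact hup x ((hmem x).1 hx)
    · rw [Set.indicator_of_notMem hx, hzero x (not_not.1 hx)]
  rw [integral_indicator_const _ hS] at hlow' hup'
  rw [hsplit] at hlow' hup'
  rw [smul_eq_mul] at hlow' hup'
  rw [measureReal_def] at hlow' hup'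
  exact ⟨by linarith, by linarith⟩
end

section
/- Let X be a countable set, N* a manipulation graph on X with N*(x) nonempty and |N*(x)| ≤ k for all x (k ≥ 1), 𝒢 a finite nonempty class of manipulation graphs on X each of maximum out-degree at most k, and μ a probability measure on X. Define L_nb(G) = μ({x : N_G(x) ≠ N*(x)}) and L_proxy(G) = 2·∫ |N*(x) \ N_G(x)|/|N*(x)| dμ(x) + (1/k)·∫ |N_G(x)| dμ(x) − (1/k)·∫ |N*(x)| dμ(x). Suppose F : 𝒢 → ℝ satisfies |F(G) − L_proxy(G)| ≤ ε₁ for all G ∈ 𝒢 (for some ε₁ ≥ 0), and let Ĝ ∈ 𝒢 minimize F over 𝒢. Then L_nb(Ĝ) ≤ 3k·min_{G ∈ 𝒢} L_nb(G) + 2k·ε₁. -/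
open MeasureTheory

/-- The neighborhood loss of a graph `G` w.r.t. the true graph `Nstar`. -/
noncomputable def nbLoss {X : Type*} [MeasurableSpace X] (μ : Measure X)
    (Nstar G : X → Finset X) : ℝ :=
  (μ {x | G x ≠ Nstar x}).toReal

/-- The proxy loss of a graph `G` w.r.t. the true graph `Nstar`. -/
noncomputable def proxyLoss {X : Type*} [MeasurableSpace X] [DecidableEq X] (μ : Measure X)
    (Nstar G : X → Finset X) (k : ℕ) : ℝ :=
  2 * ∫ x, ((Nstar x \ G x).card : ℝ) / (Nstar x).card ∂μ
    + (1 / (k : ℝ)) * ∫ x, ((G x).card : ℝ) ∂μ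
    - (1 / (k : ℝ)) * ∫ x, ((Nstar x).card : ℝ) ∂μ

private lemma lower_real (a b c K : ℝ) (hc : 1 ≤ c) (hcK : c ≤ K) (hbK : b ≤ K)
    (ha0 : 0 ≤ a) (hb0 : 0 ≤ b) (hcb : c - b ≤ a) (hcase : 1 ≤ a ∨ c + 1 ≤ b) :
    1 / K ≤ 2 * (a / c) + b / K - c / K := by
  have hc0 : (0:ℝ) < c := by linarith
  have hK0 : (0:ℝ) < K := by linarith
  rw [div_le_iff₀ hK0]
  have heq : (2 * (a / c) + b / K - c / K) * K = 2 * a * K / c + b - c := by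
    field_simp
  rw [heq]
  rcases hcase with h1 | h1
  · have h2 : 2 * a ≤ 2 * a * K / c := by
      rw [le_div_iff₀ hc0]
      nlinarith [mul_nonneg ha0 (sub_nonneg.2 hcK)]
    linarith
  · have h2 : 0 ≤ 2 * a * K / c := by positivity
    linarith

private lemma upper_real (a b c K : ℝ) (hc : 1 ≤ c) (hac : a ≤ c) (hbK : b ≤ K)
    (ha0 : 0 ≤ a) (hcK : c ≤ K) : 2 * (a / c) + b / K - c / K ≤ 3 := by
  have hc0 : (0:ℝ) < c := by linarith
  have hK0 : (0:ℝ) < K := by linarith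
  have h1 : a / c ≤ 1 := by rw [div_le_one hc0]; linarith
  have h2 : b / K ≤ 1 := by rw [div_le_one hK0]; linarith
  have h3 : 0 ≤ c / K := by positivity
  linarith


/-- if `F` is a uniform `ε₁`-approximation of the proxy loss on `𝒢` and
`Ghat ∈ 𝒢` minimizes `F`, then the neighborhood loss of `Ghat` is at most
`3k·min_{G ∈ 𝒢} L_nb(G) + 2k·ε₁`. -/
theorem proxy_minimizer_guarantee (X : Type*) [Countable X] [MeasurableSpace X]
    [DiscreteMeasurableSpace X] [DecidableEq X]
    (Nstar : X → Finset X) (k : ℕ) (hk : 1 ≤ k)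
    (hne : ∀ x, (Nstar x).Nonempty) (hdegstar : ∀ x, (Nstar x).card ≤ k)
    (𝒢 : Finset (X → Finset X)) (h𝒢 : 𝒢.Nonempty)
    (hdeg : ∀ G ∈ 𝒢, ∀ x, (G x).card ≤ k)
    (μ : Measure X) [IsProbabilityMeasure μ]
    (F : (X → Finset X) → ℝ) (ε₁ : ℝ) (hε₁ : 0 ≤ ε₁)
    (hF : ∀ G ∈ 𝒢, |F G - proxyLoss μ Nstar G k| ≤ ε₁)
    (Ghat : X → Finset X) (hGhat : Ghat ∈ 𝒢) (hmin : ∀ G ∈ 𝒢, F Ghat ≤ F G) :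
    ∀ G ∈ 𝒢, nbLoss μ Nstar Ghat ≤ 3 * k * nbLoss μ Nstar G + 2 * k * ε₁ := by
  intro G0 hG0
  have hK0 : (0:ℝ) < (k:ℝ) := by exact_mod_cast hk
  -- basic facts
  have hcpos : ∀ x, (1:ℝ) ≤ ((Nstar x).card : ℝ) := fun x => by
    exact_mod_cast (hne x).card_pos
  -- integrability of pieces
  have hbdd_int : ∀ (f : X → ℝ) (C : ℝ), (∀ x, |f x| ≤ C) → Integrable f μ := by
    intro f C hC
    exact Integrable.mono' (integrable_const C)
      (Measurable.of_discrete).aestronglyMeasurable (Filter.Eventually.of_forall hC)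
  have hint1 : ∀ G : X → Finset X,
      Integrable (fun x => ((Nstar x \ G x).card : ℝ) / (Nstar x).card) μ := by
    intro G
    refine hbdd_int _ 1 fun x => ?_
    have h1 := hcpos x
    rw [abs_of_nonneg (by positivity), div_le_one (by linarith)]
    exact_mod_cast Finset.card_le_card (Finset.sdiff_subset)
  have hint2 : ∀ G : X → Finset X, (∀ x, (G x).card ≤ k) →
      Integrable (fun x => ((G x).card : ℝ)) μ := by
    intro G hG
    refine hbdd_int _ k fun x => ?_
    rw [abs_of_nonneg (by positivity)]
    exact_mod_cast hG x
  -- per-point loss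
  set pg : (X → Finset X) → X → ℝ := fun G x =>
    2 * (((Nstar x \ G x).card : ℝ) / (Nstar x).card)
      + ((G x).card : ℝ) / k - ((Nstar x).card : ℝ) / k with hpg
  have hint_pg : ∀ G ∈ 𝒢, Integrable (pg G) μ := by
    intro G hG
    exact (((hint1 G).const_mul 2).add ((hint2 G (hdeg G hG)).div_const k)).sub
      ((hint2 Nstar hdegstar).div_const k)
  have hproxy_eq : ∀ G ∈ 𝒢, proxyLoss μ Nstar G k = ∫ x, pg G x ∂μ := by
    intro G hG
    have e1 : ∫ x, pg G x ∂μ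
        = (∫ x, (2 * (((Nstar x \ G x).card : ℝ) / (Nstar x).card)
            + ((G x).card : ℝ) / (k:ℝ)) ∂μ) - ∫ x, ((Nstar x).card : ℝ) / (k:ℝ) ∂μ :=
      integral_sub (((hint1 G).const_mul 2).add ((hint2 G (hdeg G hG)).div_const k))
        ((hint2 Nstar hdegstar).div_const k)
    have e2 : ∫ x, (2 * (((Nstar x \ G x).card : ℝ) / (Nstar x).card)
            + ((G x).card : ℝ) / (k:ℝ)) ∂μ
        = (∫ x, 2 * (((Nstar x \ G x).card : ℝ) / (Nstar x).card) ∂μ)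
            + ∫ x, ((G x).card : ℝ) / (k:ℝ) ∂μ :=
      integral_add ((hint1 G).const_mul 2) ((hint2 G (hdeg G hG)).div_const k)
    have e3 : ∫ x, 2 * (((Nstar x \ G x).card : ℝ) / (Nstar x).card) ∂μ
        = 2 * ∫ x, ((Nstar x \ G x).card : ℝ) / (Nstar x).card ∂μ := integral_const_mul 2 _
    have e4 : ∫ x, ((G x).card : ℝ) / (k:ℝ) ∂μ
        = (∫ x, ((G x).card : ℝ) ∂μ) / (k:ℝ) := integral_div _ _
    have e5 : ∫ x, ((Nstar x).card : ℝ) / (k:ℝ) ∂μ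
        = (∫ x, ((Nstar x).card : ℝ) ∂μ) / (k:ℝ) := integral_div _ _
    rw [e1, e2, e3, e4, e5, proxyLoss]
    ring
  have hSmeas : ∀ G : X → Finset X, MeasurableSet {x | G x ≠ Nstar x} :=
    fun G => MeasurableSet.of_discrete
  have hind_int : ∀ (G : X → Finset X) (c : ℝ),
      Integrable ((Set.indicator {x | G x ≠ Nstar x} (fun _ => c))) μ :=
    fun G c => (integrable_const c).indicator (hSmeas G)
  -- lower bound: (1/k) * nbLoss ≤ ∫ pg
  have hlow : ∀ G ∈ 𝒢, (1 / (k:ℝ)) * nbLoss μ Nstar G ≤ ∫ x, pg G x ∂μ := by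
    intro G hG
    have : (1 / (k:ℝ)) * nbLoss μ Nstar G
        = ∫ x, Set.indicator {x | G x ≠ Nstar x} (fun _ => 1 / (k:ℝ)) x ∂μ := by
      rw [integral_indicator_const _ (hSmeas G)]
      simp [nbLoss, mul_comm, Measure.real]
    rw [this]
    refine integral_mono (hind_int G _) (hint_pg G hG) fun x => ?_
    by_cases hx : G x ≠ Nstar x
    · have hmem : x ∈ {x | G x ≠ Nstar x} := hx
      rw [Set.indicator_of_mem hmem]
      have hcb : ((Nstar x).card : ℝ) - (G x).card ≤ ((Nstar x \ G x).card : ℝ) := by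
        have h := Finset.card_le_card_sdiff_add_card (s := Nstar x) (t := G x)
        have h' : ((Nstar x).card : ℝ) ≤ ((Nstar x \ G x).card : ℝ) + ((G x).card : ℝ) := by
          exact_mod_cast h
        linarith
      have hcase : (1:ℝ) ≤ ((Nstar x \ G x).card : ℝ)
          ∨ ((Nstar x).card : ℝ) + 1 ≤ ((G x).card : ℝ) := by
        by_cases hsub : Nstar x ⊆ G x
        · right
          have : (Nstar x).card < (G x).card :=
            Finset.card_lt_card (Finset.ssubset_iff_subset_ne.2 ⟨hsub, fun h => hx h.symm⟩)
          exact_mod_cast this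
        · left
          have : (Nstar x \ G x).Nonempty := by
            rw [Finset.sdiff_nonempty]; exact hsub
          exact_mod_cast this.card_pos
      exact lower_real _ _ _ _ (hcpos x) (by exact_mod_cast hdegstar x)
        (by exact_mod_cast hdeg G hG x) (by positivity) (by positivity) hcb hcase
    · have hmem : x ∉ {x | G x ≠ Nstar x} := hx
      rw [Set.indicator_of_notMem hmem]
      push_neg at hx
      simp [hpg, hx]
  -- upper bound: ∫ pg ≤ 3 * nbLoss
  have hupp : ∀ G ∈ 𝒢, ∫ x, pg G x ∂μ ≤ 3 * nbLoss μ Nstar G := by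
    intro G hG
    have : (3:ℝ) * nbLoss μ Nstar G
        = ∫ x, Set.indicator {x | G x ≠ Nstar x} (fun _ => (3:ℝ)) x ∂μ := by
      rw [integral_indicator_const _ (hSmeas G)]
      simp [nbLoss, mul_comm, Measure.real]
    rw [this]
    refine integral_mono (hint_pg G hG) (hind_int G _) fun x => ?_
    by_cases hx : G x ≠ Nstar x
    · have hmem : x ∈ {x | G x ≠ Nstar x} := hx
      rw [Set.indicator_of_mem hmem]
      exact upper_real _ _ _ _ (hcpos x)
        (by exact_mod_cast Finset.card_le_card (Finset.sdiff_subset))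
        (by exact_mod_cast hdeg G hG x) (by positivity) (by exact_mod_cast hdegstar x)
    · have hmem : x ∉ {x | G x ≠ Nstar x} := hx
      rw [Set.indicator_of_notMem hmem]
      push_neg at hx
      simp [hpg, hx]
  -- chain
  have h1 : (1 / (k:ℝ)) * nbLoss μ Nstar Ghat ≤ proxyLoss μ Nstar Ghat k := by
    rw [hproxy_eq Ghat hGhat]; exact hlow Ghat hGhat
  have h2 : proxyLoss μ Nstar G0 k ≤ 3 * nbLoss μ Nstar G0 := by
    rw [hproxy_eq G0 hG0]; exact hupp G0 hG0
  have h3 := abs_le.1 (hF Ghat hGhat)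
  have h4 := abs_le.1 (hF G0 hG0)
  have h5 := hmin G0 hG0
  have h6 : (1 / (k:ℝ)) * nbLoss μ Nstar Ghat ≤ 3 * nbLoss μ Nstar G0 + 2 * ε₁ := by
    linarith [h3.1, h3.2, h4.1, h4.2]
  have h7 : nbLoss μ Nstar Ghat = (k:ℝ) * ((1 / (k:ℝ)) * nbLoss μ Nstar Ghat) := by
    field_simp
  rw [h7]
  nlinarith [h6, hK0]
end

section
/- Let X be a set, N a manipulation graph on X with maximum out-degree at most k (k ≥ 1), and H a class of functions X → Bool. If there exists a standard online learner with mistake bound M for H, then there exists a deterministic learner L in the fully informative strategic online setting such that on every finite sequence (x_1,y_1),…,(x_T,y_T) that is realizable for H under N, L makes at most 4·M·ln(2(k+1)) mistakes. -/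
open scoped Classical


/-- The history (list of labeled examples) seen strictly before round `t`. -/
def histFn {X : Type*} {T : ℕ} (seq : Fin T → X × Bool) (t : Fin T) : List (X × Bool) :=
  List.ofFn fun i : Fin t.1 => seq (Fin.castLE t.isLt.le i)

/-- A standard online learner `A` has mistake bound `M` for the class `H`: on every
sequence realizable by some `h ∈ H` (in the standard, non-strategic sense) it makes at
most `M` mistakes. -/
def StdMistakeBound {X : Type*} (A : List (X × Bool) → X → Bool)
    (H : Set (X → Bool)) (M : ℕ) : Prop :=
  ∀ T : ℕ, ∀ seq : Fin T → X × Bool,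
    (∃ h ∈ H, ∀ t : Fin T, h (seq t).1 = (seq t).2) →
    {t : Fin T | A (histFn seq t) (seq t).1 ≠ (seq t).2}.ncard ≤ M

namespace StratProof
variable {X : Type*}

noncomputable def children (N : X → Finset X) (A : List (X × Bool) → X → Bool)
    (S : List (X × Bool)) (x : X) (y : Bool) : List (List (X × Bool)) :=
  ((insert x (N x)).filter (fun z => ¬ (A S z = y))).toList.map (fun z => S ++ [(z, y)])

noncomputable def wt (k : ℕ) (S : List (X × Bool)) : ℝ := ((2 * (k + 1) : ℝ))⁻¹ ^ S.length

noncomputable def Wt (k : ℕ) (σ : List (List (X × Bool))) : ℝ := (σ.map (wt k)).sum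

lemma wt_pos (k : ℕ) (S : List (X × Bool)) : 0 < wt k S := by
  apply pow_pos; rw [inv_pos]; positivity

lemma Wt_nonneg (k : ℕ) (σ : List (List (X × Bool))) : 0 ≤ Wt k σ := by
  apply List.sum_nonneg; intro x hx
  obtain ⟨S, _, rfl⟩ := List.mem_map.1 hx
  exact (wt_pos k S).le

noncomputable def predB (N : X → Finset X) (A : List (X × Bool) → X → Bool) (k : ℕ)
    (σ : List (List (X × Bool))) (x : X) : Bool :=
  if Wt k σ ≤ 2 * Wt k (σ.filter (fun S => inducedLabel N (A S) x)) then true else false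

noncomputable def update (N : X → Finset X) (A : List (X × Bool) → X → Bool) (k : ℕ)
    (σ : List (List (X × Bool))) (x : X) (y : Bool) : List (List (X × Bool)) :=
  if predB N A k σ x = y then σ
  else σ.flatMap (fun S => if inducedLabel N (A S) x = y then [S] else children N A S x y)

noncomputable def stateOf (N : X → Finset X) (A : List (X × Bool) → X → Bool) (k : ℕ)
    (hist : List (X × Bool)) : List (List (X × Bool)) :=
  hist.foldl (fun σ p => update N A k σ p.1 p.2) [[]]

lemma Wt_children_le (N : X → Finset X) (A : List (X × Bool) → X → Bool) (k : ℕ)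
    (hdeg : ∀ x, (N x).card ≤ k) (S : List (X × Bool)) (x : X) (y : Bool) :
    Wt k (children N A S x y) ≤ wt k S / 2 := by
  have hcard : ((insert x (N x)).filter (fun z => ¬ (A S z = y))).card ≤ k + 1 := by
    calc _ ≤ (insert x (N x)).card := Finset.card_filter_le _ _
      _ ≤ (N x).card + 1 := Finset.card_insert_le _ _
      _ ≤ k + 1 := by have := hdeg x; omega
  have hmap : Wt k (children N A S x y)
      = (((insert x (N x)).filter (fun z => ¬ (A S z = y))).card : ℝ)
        * ((2 * (k + 1) : ℝ))⁻¹ ^ (S.length + 1) := by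
    rw [Wt, children, List.map_map]
    have : (wt k ∘ fun z => S ++ [(z, y)]) = fun _ : X => ((2 * (k + 1) : ℝ))⁻¹ ^ (S.length + 1) := by
      funext z; simp [wt]
    rw [this, List.map_const', List.sum_replicate, Finset.length_toList, nsmul_eq_mul]
  rw [hmap, wt]
  have h2 : (((insert x (N x)).filter (fun z => ¬ (A S z = y))).card : ℝ) ≤ (k+1:ℝ) := by
    exact_mod_cast hcard
  calc (((insert x (N x)).filter (fun z => ¬ (A S z = y))).card : ℝ)
        * ((2 * (k + 1) : ℝ))⁻¹ ^ (S.length + 1)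
      ≤ (k+1:ℝ) * ((2 * (k + 1) : ℝ))⁻¹ ^ (S.length + 1) := by
        apply mul_le_mul_of_nonneg_right h2 (by positivity)
    _ = ((2 * (k + 1) : ℝ))⁻¹ ^ S.length / 2 := by
        rw [pow_succ]
        have hb : ((2:ℝ) * (k + 1)) ≠ 0 := by positivity
        field_simp

lemma Wt_flatMap (k : ℕ) (σ : List (List (X × Bool))) (f : List (X × Bool) → List (List (X × Bool))) :
    Wt k (σ.flatMap f) = (σ.map (fun S => Wt k (f S))).sum := by
  induction σ with
  | nil => simp [Wt]
  | cons S σ ih => simp only [Wt, List.flatMap_cons, List.map_cons, List.map_append,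
      List.sum_append, List.sum_cons] at *; rw [← ih]

lemma Wt_filter_add (k : ℕ) (σ : List (List (X × Bool))) (p : List (X × Bool) → Bool) :
    Wt k (σ.filter p) + Wt k (σ.filter (fun S => ! p S)) = Wt k σ := by
  induction σ with
  | nil => simp [Wt]
  | cons S σ ih =>
    cases hp : p S <;> simp [Wt, List.filter_cons, hp] at * <;> linarith

lemma Wt_sum_split (k : ℕ) (σ : List (List (X × Bool))) (g : List (X × Bool) → ℝ)
    (c : List (X × Bool) → Bool)
    (h1 : ∀ S ∈ σ, g S ≤ wt k S) (h2 : ∀ S ∈ σ, c S = true → g S ≤ wt k S / 2) :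
    (σ.map g).sum ≤ Wt k σ - Wt k (σ.filter c) / 2 := by
  induction σ with
  | nil => simp [Wt]
  | cons S σ ih =>
    have IH := ih (fun T hT => h1 T (List.mem_cons_of_mem _ hT))
      (fun T hT => h2 T (List.mem_cons_of_mem _ hT))
    cases hc : c S
    · have hS := h1 S List.mem_cons_self
      simp [Wt, List.filter_cons, hc] at *
      linarith
    · have hS := h2 S List.mem_cons_self hc
      simp [Wt, List.filter_cons, hc] at *
      linarith

lemma Wt_update_le (N : X → Finset X) (A : List (X × Bool) → X → Bool) (k : ℕ)
    (hdeg : ∀ x, (N x).card ≤ k) (σ : List (List (X × Bool))) (x : X) (y : Bool)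
    (hmist : predB N A k σ x ≠ y) :
    Wt k (update N A k σ x y) ≤ 3 / 4 * Wt k σ := by
  rw [update, if_neg hmist, Wt_flatMap]
  set c : List (X × Bool) → Bool := fun S => decide (¬ (inducedLabel N (A S) x = y)) with hc
  have hsplit := Wt_sum_split k σ
    (fun S => Wt k (if inducedLabel N (A S) x = y then [S] else children N A S x y)) c
    (by
      intro S _
      split
      · simp [Wt]
      · exact le_trans (Wt_children_le N A k hdeg S x y) (by have := wt_pos k S; linarith))
    (by
      intro S _ hcS
      rw [hc] at hcS
      simp only [decide_eq_true_eq] at hcS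
      rw [if_neg hcS]
      exact Wt_children_le N A k hdeg S x y)
  refine le_trans hsplit ?_
  -- now show Wt k σ - Wt (filter c) / 2 ≤ 3/4 Wt σ, i.e. Wt (filter c) ≥ Wt σ / 2
  have herr : Wt k σ / 2 ≤ Wt k (σ.filter c) := by
    have hadd := Wt_filter_add k σ (fun S => inducedLabel N (A S) x)
    cases y with
    | false =>
      -- predB = true : Wt σ ≤ 2 * Wt (filter induced)
      have hp : Wt k σ ≤ 2 * Wt k (σ.filter (fun S => inducedLabel N (A S) x)) := by
        by_contra hcon
        apply hmist
        rw [predB, if_neg hcon]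
      have : (σ.filter c) = σ.filter (fun S => inducedLabel N (A S) x) := by
        apply List.filter_congr
        intro S _
        rw [hc]
        show decide (¬ inducedLabel N (A S) x = false) = inducedLabel N (A S) x
        cases h : inducedLabel N (A S) x <;> simp [h]
      rw [this]; linarith
    | true =>
      have hp : ¬ (Wt k σ ≤ 2 * Wt k (σ.filter (fun S => inducedLabel N (A S) x))) := by
        intro hcon
        apply hmist
        rw [predB, if_pos hcon]
      push_neg at hp
      have : (σ.filter c) = σ.filter (fun S => ! (inducedLabel N (A S) x)) := by
        apply List.filter_congr
        intro S _
        rw [hc]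
        show decide (¬ inducedLabel N (A S) x = true) = ! inducedLabel N (A S) x
        cases h : inducedLabel N (A S) x <;> simp [h]
      rw [this]; linarith
  linarith

lemma Wt_update_le' (N : X → Finset X) (A : List (X × Bool) → X → Bool) (k : ℕ)
    (σ : List (List (X × Bool))) (x : X) (y : Bool)
    (hok : predB N A k σ x = y) : update N A k σ x y = σ := by
  rw [update, if_pos hok]

/-- `S` is a history consistent with `hstar` on which `A` errs at every step. -/
def Cons (A : List (X × Bool) → X → Bool) (hstar : X → Bool) (S : List (X × Bool)) : Prop :=
  (∀ p ∈ S, hstar p.1 = p.2) ∧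
  ∀ n (hn : n < S.length), ¬ (A (S.take n) S[n].1 = S[n].2)

lemma cons_append (A : List (X × Bool) → X → Bool) (hstar : X → Bool)
    (S : List (X × Bool)) (z : X) (y : Bool) (hC : Cons A hstar S)
    (hz : hstar z = y) (hA : ¬ (A S z = y)) : Cons A hstar (S ++ [(z, y)]) := by
  obtain ⟨h1, h2⟩ := hC
  constructor
  · intro p hp
    rcases List.mem_append.1 hp with h | h
    · exact h1 p h
    · simp at h; rw [h]; exact hz
  · intro n hn
    simp only [List.length_append, List.length_singleton] at hn
    rcases Nat.lt_or_ge n S.length with h | h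
    · rw [List.take_append_of_le_length h.le, List.getElem_append_left h]
      exact h2 n h
    · have hn' : n = S.length := by omega
      subst hn'
      rw [List.take_left, List.getElem_concat_length rfl]
      exact hA

lemma exists_cons_update (N : X → Finset X) (A : List (X × Bool) → X → Bool) (k : ℕ)
    (hstar : X → Bool) (σ : List (List (X × Bool))) (x : X) (y : Bool)
    (hxy : inducedLabel N hstar x = y)
    (h : ∃ S ∈ σ, Cons A hstar S) : ∃ S ∈ update N A k σ x y, Cons A hstar S := by
  obtain ⟨S, hS, hC⟩ := h
  rw [update]
  split
  · exact ⟨S, hS, hC⟩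
  by_cases hag : inducedLabel N (A S) x = y
  · refine ⟨S, ?_, hC⟩
    rw [List.mem_flatMap]
    exact ⟨S, hS, by rw [if_pos hag]; simp⟩
  · -- find a witness z
    have hz : ∃ z ∈ insert x (N x), hstar z = y ∧ ¬ (A S z = y) := by
      cases y with
      | true =>
        have h1 : ∃ z ∈ insert x (N x), hstar z = true := by
          have := hxy
          simp only [inducedLabel, Bool.or_eq_true, decide_eq_true_eq] at this
          rcases this with h | ⟨z, hzN, hz⟩
          · exact ⟨x, Finset.mem_insert_self _ _, h⟩
          · exact ⟨z, Finset.mem_insert_of_mem hzN, hz⟩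
        obtain ⟨z, hzmem, hzval⟩ := h1
        refine ⟨z, hzmem, hzval, ?_⟩
        have : inducedLabel N (A S) x = false := by
          cases hin : inducedLabel N (A S) x
          · rfl
          · exact absurd hin hag
        simp only [inducedLabel, Bool.or_eq_false_iff, decide_eq_false_iff_not] at this
        rcases Finset.mem_insert.1 hzmem with rfl | hzN
        · rw [this.1]; simp
        · intro hcon
          exact this.2 ⟨z, hzN, hcon⟩
      | false =>
        have h1 : ∃ z ∈ insert x (N x), A S z = true := by
          have : inducedLabel N (A S) x = true := by
            cases hin : inducedLabel N (A S) x
            · exact absurd hin hag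
            · rfl
          simp only [inducedLabel, Bool.or_eq_true, decide_eq_true_eq] at this
          rcases this with h | ⟨z, hzN, hz⟩
          · exact ⟨x, Finset.mem_insert_self _ _, h⟩
          · exact ⟨z, Finset.mem_insert_of_mem hzN, hz⟩
        obtain ⟨z, hzmem, hzval⟩ := h1
        refine ⟨z, hzmem, ?_, by simp [hzval]⟩
        have := hxy
        simp only [inducedLabel, Bool.or_eq_false_iff, decide_eq_false_iff_not] at this
        rcases Finset.mem_insert.1 hzmem with rfl | hzN
        · exact this.1
        · cases hv : hstar z
          · rfl
          · exact absurd ⟨z, hzN, hv⟩ this.2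
    obtain ⟨z, hzmem, hzval, hzA⟩ := hz
    refine ⟨S ++ [(z, y)], ?_, cons_append A hstar S z y hC hzval hzA⟩
    rw [List.mem_flatMap]
    refine ⟨S, hS, ?_⟩
    rw [if_neg hag, children, List.mem_map]
    exact ⟨z, by rw [Finset.mem_toList, Finset.mem_filter]; exact ⟨hzmem, hzA⟩, rfl⟩

lemma cons_length_le (A : List (X × Bool) → X → Bool) (H : Set (X → Bool)) (M : ℕ)
    (hstd : StdMistakeBound A H M) (hstar : X → Bool) (hH : hstar ∈ H)
    (S : List (X × Bool)) (hC : Cons A hstar S) : S.length ≤ M := by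
  obtain ⟨h1, h2⟩ := hC
  have key := hstd S.length S.get ⟨hstar, hH, fun t => h1 (S.get t) (S.get_mem t)⟩
  have hhist : ∀ t : Fin S.length, histFn S.get t = S.take t.1 := by
    intro t
    apply List.ext_getElem
    · simp [histFn]
    · intro i h1i h2i
      simp [histFn]
  have : {t : Fin S.length | A (histFn S.get t) (S.get t).1 ≠ (S.get t).2} = Set.univ := by
    ext t
    simp only [Set.mem_setOf_eq, Set.mem_univ, iff_true]
    rw [hhist t]
    exact h2 t.1 t.isLt
  rw [this, Set.ncard_univ, Nat.card_eq_fintype_card, Fintype.card_fin] at key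
  exact key

lemma Wt_lower (k : ℕ) (M : ℕ) (σ : List (List (X × Bool))) (S : List (X × Bool))
    (hS : S ∈ σ) (hlen : S.length ≤ M) :
    ((2 * (k + 1) : ℝ))⁻¹ ^ M ≤ Wt k σ := by
  have h1 : wt k S ≤ Wt k σ := by
    apply List.single_le_sum
    · intro x hx
      obtain ⟨T, _, rfl⟩ := List.mem_map.1 hx
      exact (wt_pos k T).le
    · exact List.mem_map_of_mem hS
  refine le_trans ?_ h1
  rw [wt]
  have h0 : (0:ℝ) ≤ ((2 * (k + 1) : ℝ))⁻¹ := by rw [inv_nonneg]; positivity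
  have hle1 : ((2 * (k + 1) : ℝ))⁻¹ ≤ 1 := by
    rw [inv_le_one_iff₀]
    right
    have : (0:ℝ) ≤ (k:ℝ) := Nat.cast_nonneg k
    linarith
  exact pow_le_pow_of_le_one h0 hle1 hlen

lemma inducedLabel_const (N : X → Finset X) (b : Bool) (x : X) :
    inducedLabel N (fun _ => b) x = b := by
  cases b <;> simp [inducedLabel]

end StratProof

open StratProof

/-- in the fully informative strategic online setting, any standard online
learner with mistake bound `M` for `H` can be converted into a deterministic strategic
learner making at most `4·M·ln(2(k+1))` mistakes on every realizable sequence. -/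
theorem fully_informative_online_upper_bound (X : Type*) (N : X → Finset X) (k : ℕ)
    (hk : 1 ≤ k) (hdeg : ∀ x, (N x).card ≤ k) (H : Set (X → Bool)) (M : ℕ)
    (hA : ∃ A : List (X × Bool) → X → Bool, StdMistakeBound A H M) :
    ∃ L : List (X × Bool) → X → (X → Bool),
      ∀ T : ℕ, ∀ seq : Fin T → X × Bool,
        (∃ hstar ∈ H, ∀ t : Fin T, inducedLabel N hstar (seq t).1 = (seq t).2) →
        ({t : Fin T |
            inducedLabel N (L (histFn seq t) (seq t).1) (seq t).1 ≠ (seq t).2}.ncard : ℝ) ≤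
          4 * M * Real.log (2 * (k + 1)) := by
  classical
  obtain ⟨A, hA⟩ := hA
  refine ⟨fun hist x => fun _ => predB N A k (stateOf N A k hist) x, ?_⟩
  intro T seq hreal
  obtain ⟨hstar, hH, hlab⟩ := hreal
  set Pre : ℕ → List (X × Bool) := fun n => ((List.finRange T).map seq).take n with hPre
  have hhist : ∀ t : Fin T, histFn seq t = Pre t.1 := by
    intro t
    apply List.ext_getElem
    · simp [histFn, hPre]
    · intro i h1i h2i
      simp [histFn, hPre]
  have hPreSucc : ∀ n (hn : n < T), Pre (n + 1) = Pre n ++ [seq ⟨n, hn⟩] := by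
    intro n hn
    rw [hPre]
    simp only
    rw [List.take_succ]
    congr 1
    have hlen : n < ((List.finRange T).map seq).length := by simpa using hn
    rw [List.getElem?_eq_getElem hlen]
    simp
  set Mist : Fin T → Prop :=
    fun t => ¬ (predB N A k (stateOf N A k (Pre t.1)) (seq t).1 = (seq t).2) with hMist
  set cnt : ℕ → ℕ :=
    fun n => ((Finset.range n).filter (fun i => ∃ h : i < T, Mist ⟨i, h⟩)).card with hcnt
  have main : ∀ n, n ≤ T →
      Wt k (stateOf N A k (Pre n)) ≤ (3/4 : ℝ) ^ (cnt n) ∧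
      ∃ S ∈ stateOf N A k (Pre n), Cons A hstar S := by
    intro n
    induction n with
    | zero =>
      intro _
      constructor
      · simp [hPre, stateOf, Wt, wt, hcnt]
      · refine ⟨[], by simp [hPre, stateOf], ?_⟩
        constructor
        · intro p hp; simp at hp
        · intro n hn; simp at hn
    | succ n ih =>
      intro hn1
      have hn : n < T := by omega
      obtain ⟨ihW, ihC⟩ := ih (by omega)
      have hstep : stateOf N A k (Pre (n + 1))
          = update N A k (stateOf N A k (Pre n)) (seq ⟨n, hn⟩).1 (seq ⟨n, hn⟩).2 := by
        rw [hPreSucc n hn, stateOf, List.foldl_append]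
        rfl
      have hcnt_succ : cnt (n + 1) = if Mist ⟨n, hn⟩ then cnt n + 1 else cnt n := by
        rw [hcnt]
        simp only
        rw [Finset.range_add_one, Finset.filter_insert]
        by_cases hm : Mist ⟨n, hn⟩
        · rw [if_pos ⟨hn, hm⟩, if_pos hm, Finset.card_insert_of_notMem (by simp)]
        · have : ¬ ∃ h : n < T, Mist ⟨n, h⟩ := by
            rintro ⟨h, hmm⟩
            exact hm hmm
          rw [if_neg this, if_neg hm]
      constructor
      · by_cases hm : Mist ⟨n, hn⟩
        · rw [hcnt_succ, if_pos hm, hstep]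
          calc Wt k (update N A k (stateOf N A k (Pre n)) (seq ⟨n, hn⟩).1 (seq ⟨n, hn⟩).2)
              ≤ 3 / 4 * Wt k (stateOf N A k (Pre n)) := Wt_update_le N A k hdeg _ _ _ hm
            _ ≤ 3 / 4 * (3/4 : ℝ) ^ (cnt n) := by
                have := Wt_nonneg k (stateOf N A k (Pre n))
                nlinarith
            _ = (3/4 : ℝ) ^ (cnt n + 1) := by ring
        · rw [hcnt_succ, if_neg hm, hstep]
          have heq : predB N A k (stateOf N A k (Pre n)) (seq ⟨n, hn⟩).1 = (seq ⟨n, hn⟩).2 := by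
            by_contra hcon
            exact hm hcon
          rw [Wt_update_le' N A k _ _ _ heq]
          exact ihW
      · rw [hstep]
        exact exists_cons_update N A k hstar _ _ _ (hlab ⟨n, hn⟩) ihC
  -- identify the mistake set
  have hset : {t : Fin T |
      inducedLabel N ((fun hist x => fun _ : X => predB N A k (stateOf N A k hist) x)
        (histFn seq t) (seq t).1) (seq t).1 ≠ (seq t).2}
      = ↑(Finset.univ.filter Mist) := by
    ext t
    simp only [Set.mem_setOf_eq, Finset.coe_filter, Finset.mem_univ, true_and, Set.mem_setOf_eq]
    rw [inducedLabel_const, hhist t, hMist]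
  rw [hset, Set.ncard_coe_finset]
  have hcard : (Finset.univ.filter Mist).card = cnt T := by
    rw [hcnt]
    simp only
    apply Finset.card_bij (fun (t : Fin T) _ => t.1)
    · intro a ha
      simp only [Finset.mem_filter, Finset.mem_univ, true_and] at ha
      simp only [Finset.mem_filter, Finset.mem_range]
      exact ⟨a.isLt, a.isLt, by simpa using ha⟩
    · intro a _ b _ h
      exact Fin.ext h
    · intro i hi
      simp only [Finset.mem_filter, Finset.mem_range] at hi
      obtain ⟨hiT, h, hm⟩ := hi
      exact ⟨⟨i, h⟩, by simpa [Finset.mem_filter] using hm, rfl⟩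
  rw [hcard]
  -- the numeric conclusion
  obtain ⟨hWle, S, hSmem, hSC⟩ := main T le_rfl
  have hSlen : S.length ≤ M := cons_length_le A H M hA hstar hH S hSC
  have hWge := Wt_lower k M (stateOf N A k (Pre T)) S hSmem hSlen
  have hpow : ((2 * ((k:ℝ) + 1)))⁻¹ ^ M ≤ (3/4 : ℝ) ^ (cnt T) := le_trans hWge hWle
  have hbpos : (0:ℝ) < 2 * ((k:ℝ) + 1) := by positivity
  have hlog := Real.log_le_log (by positivity) hpow
  rw [Real.log_pow, Real.log_pow, Real.log_inv] at hlog
  have hlog34 : Real.log (3/4 : ℝ) ≤ -(1/4 : ℝ) := by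
    have := Real.log_le_sub_one_of_pos (x := (3/4 : ℝ)) (by norm_num)
    linarith
  have hL0 : (0:ℝ) ≤ Real.log (2 * ((k:ℝ) + 1)) := by
    apply Real.log_nonneg
    have : (0:ℝ) ≤ (k:ℝ) := Nat.cast_nonneg k
    linarith
  have hm0 : (0:ℝ) ≤ (cnt T : ℝ) := Nat.cast_nonneg _
  have hmul : (cnt T : ℝ) * Real.log (3/4 : ℝ) ≤ (cnt T : ℝ) * (-(1/4 : ℝ)) :=
    mul_le_mul_of_nonneg_left hlog34 hm0
  have hM0 : (0:ℝ) ≤ (M:ℝ) := Nat.cast_nonneg _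
  linarith
end

section
/- For every d ≥ 1 and every m ≥ 1, setting k = 2^m, there exist a finite set X, a manipulation graph N on X with maximum out-degree at most k, and a finite hypothesis class H of functions X → Bool that admits a standard online learner with mistake bound d, such that for every deterministic learner L in the fully informative strategic online setting there exists a finite sequence realizable for H under N on which L makes at least d·m mistakes. -/
abbrev XX (d m : ℕ) : Type := (Fin d × (Fin m → Bool)) ⊕ (Fin d × Finset (Fin m → Bool))

def Ng (d m : ℕ) : XX d m → Finset (XX d m)
  | .inl _ => ∅
  | .inr (b, S) => S.image (fun v => Sum.inl (b, v))

def hfun (d m : ℕ) (f : Fin d → Fin m → Bool) : XX d m → Bool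
  | .inl (b, v) => decide (f b = v)
  | .inr _ => false

def Yof {d m : ℕ} (hist : List (XX d m × Bool)) (i : ℕ) : Bool :=
  (hist[i]?.map Prod.snd).getD false

def queryF (d m : ℕ) (hd : 0 < d) (hm : 0 < m) (hist : List (XX d m × Bool)) : XX d m :=
  Sum.inr (⟨hist.length / m % d, Nat.mod_lt _ hd⟩,
    Finset.univ.filter (fun v : Fin m → Bool =>
      (∀ i : Fin m, (i : ℕ) < hist.length % m →
          v i = Yof hist ((hist.length / m % d) * m + (i : ℕ))) ∧
      v ⟨hist.length % m, Nat.mod_lt _ hm⟩ = true))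

variable {d m : ℕ}

def advList (hd : 0 < d) (hm : 0 < m)
    (L : List (XX d m × Bool) → XX d m → (XX d m → Bool)) : ℕ → List (XX d m × Bool)
  | 0 => []
  | n + 1 =>
    let h := advList hd hm L n
    let q := queryF d m hd hm h
    h ++ [(q, !(inducedLabel (Ng d m) (L h q) q))]

def queryAt (hd : 0 < d) (hm : 0 < m)
    (L : List (XX d m × Bool) → XX d m → (XX d m → Bool)) (n : ℕ) : XX d m :=
  queryF d m hd hm (advList hd hm L n)

def Yn (hd : 0 < d) (hm : 0 < m)
    (L : List (XX d m × Bool) → XX d m → (XX d m → Bool)) (n : ℕ) : Bool :=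
  !(inducedLabel (Ng d m) (L (advList hd hm L n) (queryAt hd hm L n)) (queryAt hd hm L n))

def pairAt (hd : 0 < d) (hm : 0 < m)
    (L : List (XX d m × Bool) → XX d m → (XX d m → Bool)) (n : ℕ) : XX d m × Bool :=
  (queryAt hd hm L n, Yn hd hm L n)

lemma advList_eq_ofFn (hd : 0 < d) (hm : 0 < m)
    (L : List (XX d m × Bool) → XX d m → (XX d m → Bool)) (n : ℕ) :
    advList hd hm L n = List.ofFn (fun i : Fin n => pairAt hd hm L i) := by
  induction n with
  | zero => simp [advList]
  | succ n ih =>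
    rw [List.ofFn_succ', List.concat_eq_append]
    show advList hd hm L n ++ [pairAt hd hm L n] = _
    rw [ih]
    rfl

lemma length_advList (hd : 0 < d) (hm : 0 < m)
    (L : List (XX d m × Bool) → XX d m → (XX d m → Bool)) (n : ℕ) :
    (advList hd hm L n).length = n := by
  rw [advList_eq_ofFn]; simp

lemma getElem?_advList (hd : 0 < d) (hm : 0 < m)
    (L : List (XX d m × Bool) → XX d m → (XX d m → Bool)) {n i : ℕ} (h : i < n) :
    (advList hd hm L n)[i]? = some (pairAt hd hm L i) := by
  rw [advList_eq_ofFn]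
  simp [List.getElem?_ofFn, h]

lemma inducedLabel_hfun_inr (f : Fin d → Fin m → Bool) (b : Fin d)
    (S : Finset (Fin m → Bool)) :
    inducedLabel (Ng d m) (hfun d m f) (Sum.inr (b, S)) = decide (f b ∈ S) := by
  have hNg : Ng d m (Sum.inr (b, S)) = S.image (fun v => Sum.inl (b, v)) := rfl
  have h1 : (∃ z ∈ Ng d m (Sum.inr (b, S)), hfun d m f z = true) ↔ f b ∈ S := by
    constructor
    · rintro ⟨z, hz, hz2⟩
      rw [hNg, Finset.mem_image] at hz
      obtain ⟨v, hv, rfl⟩ := hz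
      have hfv : f b = v := by simpa [hfun] using hz2
      rwa [hfv]
    · intro hfb
      refine ⟨Sum.inl (b, f b), ?_, by simp [hfun]⟩
      rw [hNg, Finset.mem_image]
      exact ⟨f b, hfb, rfl⟩
  show (hfun d m f (Sum.inr (b, S)) || decide _) = _
  rw [show hfun d m f (Sum.inr (b, S)) = false from rfl, Bool.false_or, decide_eq_decide]
  exact h1

lemma realize (hd : 0 < d) (hm' : 0 < m)
    (L : List (XX d m × Bool) → XX d m → (XX d m → Bool)) {n : ℕ} (hn : n < d * m) :
    inducedLabel (Ng d m) (hfun d m (fun b i => Yn hd hm' L ((b : ℕ) * m + (i : ℕ))))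
      (queryAt hd hm' L n) = Yn hd hm' L n := by
  have hb : n / m < d := by
    rw [Nat.div_lt_iff_lt_mul hm']; omega
  have hbd : n / m % d = n / m := Nat.mod_eq_of_lt hb
  have hnm : n / m * m + n % m = n := Nat.div_add_mod' n m
  rw [queryAt, queryF, inducedLabel_hfun_inr]
  simp only [length_advList, hbd]
  have hY : ∀ i : ℕ, i < n % m →
      Yof (advList hd hm' L n) (n / m * m + i) = Yn hd hm' L (n / m * m + i) := by
    intro i hi
    have : n / m * m + i < n := by
      have h2 : n / m * m + i < n / m * m + n % m := by omega
      rwa [hnm] at h2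
    rw [Yof, getElem?_advList hd hm' L this]
    rfl
  by_cases hYn : Yn hd hm' L n = true
  · rw [hYn]
    simp only [decide_eq_true_eq, Finset.mem_filter, Finset.mem_univ, true_and]
    refine ⟨fun i hi => (hY i hi).symm, ?_⟩
    show Yn hd hm' L (n / m * m + n % m) = true
    rw [hnm, hYn]
  · have hYn' : Yn hd hm' L n = false := by
      cases h : Yn hd hm' L n
      · rfl
      · exact absurd h hYn
    rw [hYn']
    simp only [decide_eq_false_iff_not, Finset.mem_filter, Finset.mem_univ, true_and, not_and]
    intro _
    show ¬ Yn hd hm' L (n / m * m + n % m) = true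
    rw [hnm, hYn']
    simp

noncomputable def Alearn (d m : ℕ) : List (XX d m × Bool) → XX d m → Bool :=
  fun hist x => @decide ((x, true) ∈ hist) (Classical.propDecidable _)

lemma histFn_advList (hd : 0 < d) (hm' : 0 < m)
    (L : List (XX d m × Bool) → XX d m → (XX d m → Bool)) {T : ℕ} (t : Fin T) :
    histFn (fun s : Fin T => pairAt hd hm' L s.1) t = advList hd hm' L t.1 := by
  rw [histFn, advList_eq_ofFn]
  rfl

/-- a mistake lower bound in the fully informative strategic online
setting: for every `d ≥ 1` and `k = 2^m`, there are a finite `X`, a graph of maximum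
out-degree at most `k`, and a finite class `H` learnable with mistake bound `d` in the
standard setting, on which every deterministic strategic learner makes at least `d·m`
mistakes on some realizable sequence. -/
theorem fully_informative_online_lower_bound :
    ∀ d m : ℕ, 1 ≤ d → 1 ≤ m →
      ∃ (X : Type) (_ : Fintype X) (N : X → Finset X) (H : Set (X → Bool)),
        H.Finite ∧
        (∀ x, (N x).card ≤ 2 ^ m) ∧
        (∃ A : List (X × Bool) → X → Bool, StdMistakeBound A H d) ∧
        ∀ L : List (X × Bool) → X → (X → Bool),
          ∃ (T : ℕ) (seq : Fin T → X × Bool),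
            (∃ hstar ∈ H, ∀ t : Fin T, inducedLabel N hstar (seq t).1 = (seq t).2) ∧
            d * m ≤
              {t : Fin T |
                inducedLabel N (L (histFn seq t) (seq t).1) (seq t).1 ≠ (seq t).2}.ncard := by
  intro d m hd hm
  have hd0 : 0 < d := hd
  have hm0 : 0 < m := hm
  refine ⟨XX d m, inferInstance, Ng d m, Set.range (hfun d m), Set.finite_range _, ?_, ?_, ?_⟩
  · -- degree bound
    intro x
    match x with
    | .inl _ => simp [Ng]
    | .inr (b, S) =>
      calc (Ng d m (Sum.inr (b, S))).card ≤ S.card := Finset.card_image_le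
        _ ≤ Fintype.card (Fin m → Bool) := Finset.card_le_univ S
        _ = 2 ^ m := by simp
  · -- standard learner with mistake bound d
    refine ⟨Alearn d m, ?_⟩
    rintro T seq ⟨h, hH, hcons⟩
    obtain ⟨f, rfl⟩ := hH
    set A : List (XX d m × Bool) → XX d m → Bool := Alearn d m with hA
    set Ms := {t : Fin T | A (histFn seq t) (seq t).1 ≠ (seq t).2} with hMs
    have hmem : ∀ (t : Fin T) (x : XX d m),
        (x, true) ∈ histFn seq t ↔ ∃ i : Fin t.1, seq (Fin.castLE t.isLt.le i) = (x, true) := by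
      intro t x
      rw [histFn, List.mem_ofFn]
    have hpos : ∀ t ∈ Ms, hfun d m f (seq t).1 = true := by
      intro t ht
      by_contra hne
      have hf : hfun d m f (seq t).1 = false := by
        cases h' : hfun d m f (seq t).1
        · rfl
        · exact absurd h' hne
      have hy : (seq t).2 = false := by rw [← hcons t, hf]
      have hA' : A (histFn seq t) (seq t).1 = true := by
        cases h' : A (histFn seq t) (seq t).1
        · exact absurd (h'.trans hy.symm) ht
        · rfl
      simp only [hA, Alearn, decide_eq_true_eq, hmem] at hA'
      obtain ⟨i, hi⟩ := hA'
      have h2 := hcons (Fin.castLE t.isLt.le i)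
      rw [hi] at h2
      simp only at h2
      rw [h2] at hf
      simp at hf
    have key : ∀ t s : Fin T, t ∈ Ms → s ∈ Ms → t.1 < s.1 → (seq t).1 ≠ (seq s).1 := by
      intro t s hts hss hlt heq
      have h1 : (seq t).2 = true := by rw [← hcons t]; exact hpos t hts
      have h2 : seq (Fin.castLE s.isLt.le ⟨t.1, hlt⟩) = ((seq s).1, true) := by
        have : Fin.castLE s.isLt.le ⟨t.1, hlt⟩ = t := Fin.ext rfl
        rw [this, ← heq, ← h1]
      have hA' : A (histFn seq s) (seq s).1 = true := by
        simp only [hA, Alearn, decide_eq_true_eq, hmem]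
        exact ⟨⟨t.1, hlt⟩, h2⟩
      have hy : (seq s).2 = true := by rw [← hcons s, ← heq, hpos t hts]
      exact hss (hA'.trans hy.symm)
    have hinj : Set.InjOn (fun t => (seq t).1) Ms := by
      intro t ht s hs heq
      by_contra hne
      rcases lt_trichotomy t.1 s.1 with h | h | h
      · exact key t s ht hs h heq
      · exact hne (Fin.ext h)
      · exact key s t hs ht h heq.symm
    set g : Fin d → XX d m := fun b => Sum.inl (b, f b) with hg
    have hsub : (fun t => (seq t).1) '' Ms ⊆ Set.range g := by
      rintro x ⟨t, ht, rfl⟩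
      have hp := hpos t ht
      match hx : (seq t).1 with
      | .inl (b, v) =>
        rw [hx] at hp
        have : f b = v := by simpa [hfun] using hp
        refine ⟨b, ?_⟩
        show Sum.inl (b, f b) = (seq t).1
        rw [hx, this]
      | .inr _ =>
        rw [hx] at hp
        exact absurd hp (by simp [hfun])
    calc Ms.ncard = ((fun t => (seq t).1) '' Ms).ncard := (Set.ncard_image_of_injOn hinj).symm
      _ ≤ (Set.range g).ncard := Set.ncard_le_ncard hsub (Set.toFinite _)
      _ ≤ d := by
          rw [← Set.image_univ, ← Finset.coe_univ, ← Finset.coe_image, Set.ncard_coe_finset]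
          exact le_trans Finset.card_image_le (by simp)
  · -- strategic lower bound
    intro L
    refine ⟨d * m, fun t => pairAt hd0 hm0 L t.1, ?_, ?_⟩
    · refine ⟨hfun d m (fun b i => Yn hd0 hm0 L ((b : ℕ) * m + (i : ℕ))),
        Set.mem_range_self _, ?_⟩
      intro t
      exact realize hd0 hm0 L t.isLt
    · have huniv : {t : Fin (d * m) |
          inducedLabel (Ng d m)
            (L (histFn (fun s : Fin (d * m) => pairAt hd0 hm0 L s.1) t)
              ((fun s : Fin (d * m) => pairAt hd0 hm0 L s.1) t).1)
            ((fun s : Fin (d * m) => pairAt hd0 hm0 L s.1) t).1 ≠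
            ((fun s : Fin (d * m) => pairAt hd0 hm0 L s.1) t).2} = Set.univ := by
        ext t
        simp only [Set.mem_setOf_eq, Set.mem_univ, iff_true]
        rw [histFn_advList hd0 hm0 L t]
        show inducedLabel (Ng d m)
            (L (advList hd0 hm0 L t.1) (queryAt hd0 hm0 L t.1)) (queryAt hd0 hm0 L t.1) ≠
          Yn hd0 hm0 L t.1
        rw [Yn]
        simp
      rw [huniv, Set.ncard_univ, Nat.card_eq_fintype_card, Fintype.card_fin]
end

section
/- Let X be a set, N a manipulation graph on X with maximum out-degree at most k (k ≥ 1), and H a class of functions X → Bool. If there exists a standard online learner with mistake bound M for H, then there exists a deterministic learner L in the post-manipulation feedback setting such that for every finite sequence (x_1,y_1),…,(x_T,y_T) that is realizable for H under N, and for every protocol-consistent adversarial choice of the revealed points v_t, L makes at most 4·(k+1)·M·ln(2(k+1)) mistakes. -/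
/-- The hypothesis implemented at round `t` by a learner `L` in the post-manipulation
feedback setting, given the revealed points `v` and labels `y`. -/
def pmfHyp {X : Type*} {T : ℕ} (L : List (X × Bool) → (X → Bool))
    (v : Fin T → X) (y : Fin T → Bool) (t : Fin T) : X → Bool :=
  L (histFn (fun i => (v i, y i)) t)

/-- Membership in the closed neighborhood `N[x] = {x} ∪ N(x)`. -/
def InClosedNbhd {X : Type*} (N : X → Finset X) (x z : X) : Prop :=
  z = x ∨ z ∈ N x

/-- Protocol consistency of the revealed points `v` for the post-manipulation feedback
setting: `v t` is a positively-labeled point of the closed neighborhood of `x t` if one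
exists, and `v t = x t` otherwise. -/
def PMFConsistent {X : Type*} {T : ℕ} (N : X → Finset X)
    (h : Fin T → X → Bool) (x v : Fin T → X) : Prop :=
  ∀ t : Fin T,
    ((∃ z, InClosedNbhd N (x t) z ∧ h t z = true) →
      InClosedNbhd N (x t) (v t) ∧ h t (v t) = true) ∧
    ((¬ ∃ z, InClosedNbhd N (x t) z ∧ h t z = true) → v t = x t)

open scoped Classical

namespace PMF15

noncomputable section

variable {X : Type*}

abbrev Hist (X : Type*) := List (X × Bool)
abbrev Expt (X : Type*) := Hist X × ℝ

/-- closed neighborhood as a Finset -/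
def cnb (N : X → Finset X) (v : X) : Finset X := insert v (N v)

def totalW (S : List (Expt X)) : ℝ := (S.map Prod.snd).sum

def posW (A : Hist X → X → Bool) (S : List (Expt X)) (z : X) : ℝ :=
  ((S.filter fun e => A e.1 z = true).map Prod.snd).sum

/-- learner's hypothesis from the expert state: biased weighted vote -/
def sHyp (A : Hist X → X → Bool) (k : ℕ) (S : List (Expt X)) : X → Bool :=
  fun z => if totalW S / (2 * (k + 1)) ≤ posW A S z then true else false

def fnCond (A : Hist X → X → Bool) (N : X → Finset X) (v : X) (e : Expt X) : Prop :=
  ∀ z ∈ cnb N v, A e.1 z = false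

/-- state update upon observing revealed point `v` with label `y` -/
def upd (A : Hist X → X → Bool) (N : X → Finset X) (k : ℕ)
    (S : List (Expt X)) (v : X) (y : Bool) : List (Expt X) :=
  if sHyp A k S v = y then S
  else if y = false then
    S.map fun e => if A e.1 v = true then (e.1 ++ [(v, false)], e.2 / 2) else e
  else
    S.flatMap fun e =>
      if fnCond A N v e then
        (cnb N v).toList.map fun z => (e.1 ++ [(z, true)], e.2 / (2 * (k + 1)))
      else [e]

def stFold (A : Hist X → X → Bool) (N : X → Finset X) (k : ℕ) (l : Hist X) :
    List (Expt X) :=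
  l.foldl (fun S p => upd A N k S p.1 p.2) [([], 1)]

/-- the deterministic strategic learner -/
def Lrn (A : Hist X → X → Bool) (N : X → Finset X) (k : ℕ) : Hist X → X → Bool :=
  fun l => sHyp A k (stFold A N k l)

/-- "truthful" histories: labeled correctly by `h`, and every entry was a mistake of `A` -/
def GoodH (A : Hist X → X → Bool) (h : X → Bool) (l : Hist X) : Prop :=
  (∀ p ∈ l, h p.1 = p.2) ∧
  ∀ i (hi : i < l.length), A (l.take i) (l.get ⟨i, hi⟩).1 ≠ (l.get ⟨i, hi⟩).2

lemma take_eq_ofFn (l : Hist X) (n : ℕ) (hn : n ≤ l.length) :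
    l.take n = List.ofFn (fun i : Fin n => l.get (Fin.castLE hn i)) := by
  apply List.ext_getElem
  · simp [Nat.min_eq_left hn]
  · intro i h1 h2
    simp [List.getElem_take, List.getElem_ofFn]

/-- a truthful history has length at most M -/
lemma good_length_le {A : Hist X → X → Bool} {H : Set (X → Bool)} {M : ℕ}
    (hb : StdMistakeBound A H M) {h : X → Bool} (hh : h ∈ H) {l : Hist X}
    (hg : GoodH A h l) : l.length ≤ M := by
  have := hb l.length (fun t => l.get t) ⟨h, hh, fun t => hg.1 (l.get t) (l.getElem_mem t.isLt)⟩
  have hset : {t : Fin l.length |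
      A (histFn (fun t => l.get t) t) (l.get t).1 ≠ (l.get t).2} = Set.univ := by
    ext t
    simp only [Set.mem_setOf_eq, Set.mem_univ, iff_true]
    have hrw : histFn (fun t => l.get t) t = l.take t.1 := by
      rw [take_eq_ofFn l t.1 t.isLt.le]; rfl
    rw [hrw]
    exact hg.2 t.1 t.isLt
  rw [hset, Set.ncard_univ] at this
  simpa using this


section UpdLemmas

variable {A : Hist X → X → Bool} {N : X → Finset X} {k : ℕ} {S : List (Expt X)}
  {v : X} {y : Bool}

lemma totalW_cons (a : Expt X) (S : List (Expt X)) :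
    totalW (a :: S) = a.2 + totalW S := by
  simp [totalW]

lemma posW_cons (a : Expt X) (S : List (Expt X)) (z : X) :
    posW A (a :: S) z =
      (if A a.1 z = true then a.2 else 0) + posW A S z := by
  by_cases h : A a.1 z = true <;> simp [posW, List.filter_cons, h]

lemma posW_nonneg (hS : ∀ e ∈ S, (0:ℝ) ≤ e.2) (z : X) : 0 ≤ posW A S z := by
  induction S with
  | nil => simp [posW]
  | cons a S ih =>
    have h1 := hS a (by simp)
    have h2 := ih (fun e he => hS e (by simp [he]))
    rw [posW_cons]
    positivity

lemma totalW_nonneg (hS : ∀ e ∈ S, (0:ℝ) ≤ e.2) : 0 ≤ totalW S := by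
  induction S with
  | nil => simp [totalW]
  | cons a S ih =>
    have h1 := hS a (by simp)
    have h2 := ih (fun e he => hS e (by simp [he]))
    rw [totalW_cons]; positivity

lemma mem_le_totalW (hS : ∀ e ∈ S, (0:ℝ) ≤ e.2) {e : Expt X} (he : e ∈ S) :
    e.2 ≤ totalW S := by
  induction S with
  | nil => simp at he
  | cons a S ih =>
    rw [totalW_cons]
    rcases List.mem_cons.mp he with h | h
    · subst h
      have := totalW_nonneg (S := S) (fun e he => hS e (by simp [he]))
      linarith
    · have h1 := hS a (by simp)
      have := ih (fun e he => hS e (by simp [he])) h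
      linarith

/-- exact total weight after a false-positive update -/
lemma totalW_fpmap :
    totalW (S.map fun e =>
      if A e.1 v = true then (e.1 ++ [(v, false)], e.2 / 2) else e) =
    totalW S - posW A S v / 2 := by
  induction S with
  | nil => simp [totalW, posW]
  | cons a S ih =>
    by_cases h : A a.1 v = true
    · simp only [List.map_cons, totalW_cons, posW_cons, ih, h, if_true]
      ring
    · simp only [List.map_cons, totalW_cons, posW_cons, ih]
      rw [if_neg h, if_neg h]
      ring

/-- exact total weight after a false-negative update -/
lemma totalW_fnmap :
    totalW (S.flatMap fun e =>
      if fnCond A N v e then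
        (cnb N v).toList.map fun z => (e.1 ++ [(z, true)], e.2 / (2 * (k + 1)))
      else [e]) =
    (S.map fun e => if fnCond A N v e then
        ((cnb N v).card : ℝ) * (e.2 / (2 * (k + 1))) else e.2).sum := by
  induction S with
  | nil => simp [totalW]
  | cons a S ih =>
    simp only [List.flatMap_cons, List.map_cons, List.sum_cons, ← ih]
    by_cases h : fnCond A N v a
    · simp only [h, if_true, totalW, List.map_append, List.sum_append]
      congr 1
      rw [List.map_map]
      have : (Prod.snd ∘ fun z : X => (a.1 ++ [(z, true)], a.2 / (2 * (↑k + 1))))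
          = fun _ : X => a.2 / (2 * (↑k + 1)) := rfl
      rw [this, List.map_const', List.sum_replicate, nsmul_eq_mul,
        ← Finset.length_toList]
    · simp only [h, if_false, totalW, List.map_append, List.sum_append]
      simp

/-- pigeonhole: weight of experts positive somewhere on C is at most sum of posW -/
lemma wpos_le_sum (hS : ∀ e ∈ S, (0:ℝ) ≤ e.2) :
    ((S.filter fun e => decide ¬ fnCond A N v e).map Prod.snd).sum ≤
      ∑ z ∈ cnb N v, posW A S z := by
  induction S with
  | nil => simp [posW]
  | cons a S ih =>
    have ha := hS a (by simp)
    have ih' := ih (fun e he => hS e (by simp [he]))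
    have hsum : ∑ z ∈ cnb N v, posW A (a :: S) z =
        (∑ z ∈ cnb N v, if A a.1 z = true then a.2 else 0)
          + ∑ z ∈ cnb N v, posW A S z := by
      rw [← Finset.sum_add_distrib]
      exact Finset.sum_congr rfl fun z _ => posW_cons a S z
    by_cases h : fnCond A N v a
    · rw [List.filter_cons_of_neg (by simp [h]), hsum]
      have : (0:ℝ) ≤ ∑ z ∈ cnb N v, if A a.1 z = true then a.2 else 0 :=
        Finset.sum_nonneg fun z _ => by positivity
      linarith
    · rw [List.filter_cons_of_pos (by simp [h]), hsum]
      obtain ⟨z0, hz0, hz0pos⟩ : ∃ z0 ∈ cnb N v, A a.1 z0 = true := by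
        by_contra hc
        push_neg at hc
        exact h fun z hz => by
          have := hc z hz
          simpa using this
      have hle : a.2 ≤ ∑ z ∈ cnb N v, if A a.1 z = true then a.2 else 0 := by
        have := Finset.single_le_sum
          (f := fun z => if A a.1 z = true then a.2 else 0)
          (fun z _ => by positivity) hz0
        simpa [hz0pos] using this
      simp only [List.map_cons, List.sum_cons]
      linarith


lemma filter_split (S : List (Expt X)) (p : Expt X → Prop) :
    ((S.filter fun e => decide (p e)).map Prod.snd).sum
      + ((S.filter fun e => decide ¬ p e).map Prod.snd).sum = totalW S :=
  List.sum_map_filter_add_sum_map_filter_not p Prod.snd S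

lemma fnsum_le (hS : ∀ e ∈ S, (0:ℝ) ≤ e.2)
    (hcard : ((cnb N v).card : ℝ) ≤ (k:ℝ) + 1) :
    (S.map fun e => if fnCond A N v e then
        ((cnb N v).card : ℝ) * (e.2 / (2 * ((k:ℝ) + 1))) else e.2).sum
      ≤ totalW S
        - (1/2) * ((S.filter fun e => decide (fnCond A N v e)).map Prod.snd).sum := by
  have hk : (0:ℝ) < (k:ℝ) + 1 := by positivity
  induction S with
  | nil => simp [totalW]
  | cons a S ih =>
    have ha := hS a (by simp)
    have ih' := ih (fun e he => hS e (by simp [he]))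
    by_cases h : fnCond A N v a
    · rw [List.map_cons, List.sum_cons, List.filter_cons_of_pos (by simp [h]),
        List.map_cons, List.sum_cons, totalW_cons, if_pos h]
      have hterm : ((cnb N v).card : ℝ) * (a.2 / (2 * ((k:ℝ) + 1))) ≤ a.2 / 2 := by
        have h1 : ((cnb N v).card : ℝ) * (a.2 / (2 * ((k:ℝ) + 1)))
            ≤ ((k:ℝ) + 1) * (a.2 / (2 * ((k:ℝ) + 1))) := by
          apply mul_le_mul_of_nonneg_right hcard (by positivity)
        have h2 : ((k:ℝ) + 1) * (a.2 / (2 * ((k:ℝ) + 1))) = a.2 / 2 := by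
          field_simp
        linarith
      linarith
    · rw [List.map_cons, List.sum_cons, List.filter_cons_of_neg (by simp [h]),
        totalW_cons, if_neg h]
      linarith

/-- total weight decreases by factor `1 - 1/(4(k+1))` on every mistake round -/
lemma upd_totalW_mistake (hS : ∀ e ∈ S, (0:ℝ) < e.2) (hdeg : (N v).card ≤ k)
    (hmis : sHyp A k S v ≠ y)
    (hz : y = true → ∀ z ∈ cnb N v, sHyp A k S z = false) :
    totalW (upd A N k S v y) ≤ (1 - 1 / (4 * ((k:ℝ) + 1))) * totalW S := by
  have hS' : ∀ e ∈ S, (0:ℝ) ≤ e.2 := fun e he => (hS e he).le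
  have hW := totalW_nonneg hS'
  have hk : (0:ℝ) < (k:ℝ) + 1 := by positivity
  cases y with
  | false =>
    have hv : sHyp A k S v = true := by
      cases hEq : sHyp A k S v
      · exact absurd hEq hmis
      · rfl
    have hpos : totalW S / (2 * ((k:ℝ) + 1)) ≤ posW A S v := by
      by_contra hc
      simp only [sHyp, if_neg hc] at hv
      simp at hv
    simp only [upd, if_neg hmis]
    rw [if_pos trivial, totalW_fpmap]
    have h2 : totalW S / (2 * ((k:ℝ) + 1)) / 2 = totalW S * (1 / (4 * ((k:ℝ)+1))) := by
      rw [mul_one_div, div_div]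
      congr 1
      ring
    have h3 : totalW S / (2 * ((k:ℝ) + 1)) / 2 ≤ posW A S v / 2 := by linarith
    rw [h2] at h3
    ring_nf
    ring_nf at h3
    linarith
  | true =>
    have hv : sHyp A k S v = false := by
      cases hEq : sHyp A k S v
      · rfl
      · exact absurd hEq hmis
    have hall : ∀ z ∈ cnb N v, posW A S z ≤ totalW S / (2 * ((k:ℝ) + 1)) := by
      intro z hz'
      have h1 := hz rfl z hz'
      by_contra hc
      push_neg at hc
      simp only [sHyp, if_pos hc.le] at h1
      simp at h1
    have hcard : ((cnb N v).card : ℝ) ≤ (k:ℝ) + 1 := by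
      have h1 : (cnb N v).card ≤ k + 1 :=
        le_trans (Finset.card_insert_le _ _) (by omega)
      exact_mod_cast h1
    simp only [upd, if_neg hmis]
    rw [if_neg (by simp), totalW_fnmap]
    have step1 := fnsum_le (A := A) hS' hcard
    set F := ((S.filter fun e => decide (fnCond A N v e)).map Prod.snd).sum with hF
    set G := ((S.filter fun e => decide ¬ fnCond A N v e).map Prod.snd).sum with hG
    have hsplit : F + G = totalW S := filter_split S _
    have hGle : G ≤ ∑ z ∈ cnb N v, posW A S z := wpos_le_sum hS'
    have hsum : ∑ z ∈ cnb N v, posW A S z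
        ≤ ((cnb N v).card : ℝ) * (totalW S / (2 * ((k:ℝ) + 1))) := by
      calc ∑ z ∈ cnb N v, posW A S z
          ≤ ∑ _z ∈ cnb N v, totalW S / (2 * ((k:ℝ) + 1)) :=
            Finset.sum_le_sum hall
        _ = ((cnb N v).card : ℝ) * (totalW S / (2 * ((k:ℝ) + 1))) := by
            rw [Finset.sum_const, nsmul_eq_mul]
    have hG2 : G ≤ totalW S / 2 := by
      have h4 : ((cnb N v).card : ℝ) * (totalW S / (2 * ((k:ℝ) + 1)))
          ≤ ((k:ℝ) + 1) * (totalW S / (2 * ((k:ℝ) + 1))) :=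
        mul_le_mul_of_nonneg_right hcard (by positivity)
      have h5 : ((k:ℝ) + 1) * (totalW S / (2 * ((k:ℝ) + 1))) = totalW S / 2 := by
        field_simp
      linarith
    have hF2 : totalW S / 2 ≤ F := by linarith
    have hq : totalW S * (1 / (4 * ((k:ℝ)+1))) ≤ totalW S * (1/4) := by
      apply mul_le_mul_of_nonneg_left _ hW
      rw [div_le_div_iff₀ (by positivity) (by norm_num)]
      nlinarith
    have : totalW S - (1/2) * F ≤ (1 - 1 / (4 * ((k:ℝ) + 1))) * totalW S := by
      have : (1 - 1 / (4 * ((k:ℝ) + 1))) * totalW S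
          = totalW S - totalW S * (1 / (4 * ((k:ℝ)+1))) := by ring
      rw [this]
      linarith
    linarith

/-- positivity of weights is preserved -/
lemma upd_pos (hS : ∀ e ∈ S, (0:ℝ) < e.2) :
    ∀ e ∈ upd A N k S v y, 0 < e.2 := by
  intro e he
  have hk : (0:ℝ) < 2 * ((k:ℝ) + 1) := by positivity
  by_cases h1 : sHyp A k S v = y
  · rw [upd, if_pos h1] at he
    exact hS e he
  rw [upd, if_neg h1] at he
  cases y with
  | false =>
    rw [if_pos rfl] at he
    obtain ⟨a, ha, rfl⟩ := List.mem_map.mp he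
    by_cases h2 : A a.1 v = true
    · rw [if_pos h2]
      have := hS a ha
      simp only []
      positivity
    · rw [if_neg h2]
      exact hS a ha
  | true =>
    rw [if_neg (by simp)] at he
    obtain ⟨a, ha, hin⟩ := List.mem_flatMap.mp he
    have hapos := hS a ha
    by_cases h2 : fnCond A N v a
    · rw [if_pos h2] at hin
      obtain ⟨z, hz, rfl⟩ := List.mem_map.mp hin
      simp only []
      positivity
    · rw [if_neg h2] at hin
      simp at hin
      subst hin
      exact hapos

lemma GoodH.append {hstar : X → Bool} {l : Hist X} (hg : GoodH A hstar l)
    {p : X × Bool} (hp : hstar p.1 = p.2) (hm : A l p.1 ≠ p.2) :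
    GoodH A hstar (l ++ [p]) := by
  constructor
  · intro q hq
    rcases List.mem_append.mp hq with h | h
    · exact hg.1 q h
    · simp only [List.mem_singleton] at h
      subst h
      exact hp
  · intro i hi
    have hlen : i < l.length + 1 := by simpa using hi
    rcases Nat.lt_or_ge i l.length with h | h
    · have ht : (l ++ [p]).take i = l.take i :=
        List.take_append_of_le_length h.le
      have hgval : (l ++ [p]).get ⟨i, hi⟩ = l.get ⟨i, h⟩ := by
        simp only [List.get_eq_getElem]
        exact List.getElem_append_left h
      rw [ht, hgval]
      exact hg.2 i h
    · have hieq : i = l.length := by omega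
      have ht : (l ++ [p]).take i = l := by
        rw [List.take_append_of_le_length (le_of_eq hieq), hieq, List.take_length]
      have hgval : (l ++ [p]).get ⟨i, hi⟩ = p := by
        simp only [List.get_eq_getElem]
        exact List.getElem_concat_length hieq _
      rw [ht, hgval]
      exact hm

/-- the truthful expert survives with enough weight -/
lemma upd_good {hstar : X → Bool}
    (hFP : sHyp A k S v = true → y = false → hstar v = false)
    (hFN : sHyp A k S v = false → y = true → ∃ z ∈ cnb N v, hstar z = true)
    (hgood : ∃ e ∈ S, GoodH A hstar e.1 ∧
      (1 / (2 * ((k:ℝ) + 1))) ^ e.1.length ≤ e.2) :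
    ∃ e ∈ upd A N k S v y, GoodH A hstar e.1 ∧
      (1 / (2 * ((k:ℝ) + 1))) ^ e.1.length ≤ e.2 := by
  obtain ⟨e, he, hgd, hw⟩ := hgood
  have hk : (0:ℝ) < (k:ℝ) + 1 := by positivity
  by_cases h1 : sHyp A k S v = y
  · exact ⟨e, by rw [upd, if_pos h1]; exact he, hgd, hw⟩
  cases y with
  | false =>
    have hv : sHyp A k S v = true := by
      cases hEq : sHyp A k S v
      · exact absurd hEq h1
      · rfl
    have hsv : hstar v = false := hFP hv rfl
    rw [upd, if_neg h1, if_pos rfl]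
    by_cases h2 : A e.1 v = true
    · refine ⟨(e.1 ++ [(v, false)], e.2 / 2), ?_, ?_, ?_⟩
      · apply List.mem_map.mpr
        exact ⟨e, he, by rw [if_pos h2]⟩
      · exact hgd.append hsv (by simp [h2])
      · rw [List.length_append]
        simp only [List.length_singleton]
        rw [pow_succ]
        have hhalf : (1 / (2 * ((k:ℝ) + 1))) ≤ 1 / 2 := by
          apply div_le_div_of_nonneg_left (by norm_num) (by norm_num)
          nlinarith
        have hbase : (0:ℝ) ≤ (1 / (2 * ((k:ℝ) + 1))) ^ e.1.length := by positivity
        calc (1 / (2 * ((k:ℝ) + 1))) ^ e.1.length * (1 / (2 * ((k:ℝ) + 1)))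
            ≤ (1 / (2 * ((k:ℝ) + 1))) ^ e.1.length * (1/2) := by
              apply mul_le_mul_of_nonneg_left hhalf hbase
          _ ≤ e.2 * (1/2) := by
              apply mul_le_mul_of_nonneg_right hw (by norm_num)
          _ = e.2 / 2 := by ring
    · refine ⟨e, ?_, hgd, hw⟩
      apply List.mem_map.mpr
      exact ⟨e, he, by rw [if_neg h2]⟩
  | true =>
    have hv : sHyp A k S v = false := by
      cases hEq : sHyp A k S v
      · rfl
      · exact absurd hEq h1
    obtain ⟨z, hzC, hzpos⟩ := hFN hv rfl
    rw [upd, if_neg h1, if_neg (by simp)]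
    by_cases h2 : fnCond A N v e
    · refine ⟨(e.1 ++ [(z, true)], e.2 / (2 * ((k:ℝ) + 1))), ?_, ?_, ?_⟩
      · apply List.mem_flatMap.mpr
        refine ⟨e, he, ?_⟩
        rw [if_pos h2]
        apply List.mem_map.mpr
        exact ⟨z, Finset.mem_toList.mpr hzC, rfl⟩
      · exact hgd.append hzpos (by simp [h2 z hzC])
      · rw [List.length_append]
        simp only [List.length_singleton]
        rw [pow_succ]
        have hbase : (0:ℝ) < (1 / (2 * ((k:ℝ) + 1))) := by positivity
        calc (1 / (2 * ((k:ℝ) + 1))) ^ e.1.length * (1 / (2 * ((k:ℝ) + 1)))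
            ≤ e.2 * (1 / (2 * ((k:ℝ) + 1))) :=
              mul_le_mul_of_nonneg_right hw hbase.le
          _ = e.2 / (2 * ((k:ℝ) + 1)) := by ring
    · refine ⟨e, ?_, hgd, hw⟩
      apply List.mem_flatMap.mpr
      exact ⟨e, he, by rw [if_neg h2]; simp⟩

end UpdLemmas

section Evolve

variable {A : Hist X → X → Bool} {N : X → Finset X} {k : ℕ}

def histN (seq' : ℕ → X × Bool) (n : ℕ) : Hist X := List.ofFn fun i : Fin n => seq' i

lemma histN_succ (seq' : ℕ → X × Bool) (n : ℕ) :
    histN seq' (n+1) = histN seq' n ++ [seq' n] := by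
  unfold histN
  rw [List.ofFn_succ', List.concat_eq_append]
  congr 1

def stN (A : Hist X → X → Bool) (N : X → Finset X) (k : ℕ)
    (seq' : ℕ → X × Bool) (n : ℕ) : List (Expt X) :=
  stFold A N k (histN seq' n)

lemma stN_zero (seq' : ℕ → X × Bool) : stN A N k seq' 0 = [([], 1)] := rfl

lemma stN_succ (seq' : ℕ → X × Bool) (n : ℕ) :
    stN A N k seq' (n+1) = upd A N k (stN A N k seq' n) (seq' n).1 (seq' n).2 := by
  unfold stN stFold
  rw [histN_succ, List.foldl_concat]

lemma histFn_eq {T : ℕ} (v : Fin T → X) (y : Fin T → Bool) (seq' : ℕ → X × Bool)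
    (hs : ∀ (i : ℕ) (h : i < T), seq' i = (v ⟨i, h⟩, y ⟨i, h⟩)) (t : Fin T) :
    histFn (fun i => (v i, y i)) t = histN seq' t.1 := by
  unfold histFn histN
  congr 1
  funext i
  have hi : (i : ℕ) < T := lt_of_lt_of_le i.isLt t.isLt.le
  rw [hs i.1 hi]
  rfl

/-- the mistake set over `Fin T` has the same cardinality as the filtered range -/
lemma ncard_eq_filter_card {T : ℕ} (P : ℕ → Prop) :
    {t : Fin T | P t.1}.ncard = ((Finset.range T).filter P).card := by
  rw [Set.ncard_eq_toFinset_card', Set.toFinset_setOf]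
  refine Finset.card_bij (fun t _ => (t : ℕ)) ?_ ?_ ?_
  · intro a ha
    simp only [Finset.mem_filter, Finset.mem_univ, true_and] at ha
    simp only [Finset.mem_filter, Finset.mem_range]
    exact ⟨a.isLt, ha⟩
  · intro a _ b _ h
    exact Fin.ext h
  · intro i hi
    simp only [Finset.mem_filter, Finset.mem_range] at hi
    exact ⟨⟨i, hi.1⟩, by simpa using hi.2, rfl⟩

end Evolve

section Main

variable {A : Hist X → X → Bool} {N : X → Finset X} {k : ℕ}

def mcN (A : Hist X → X → Bool) (N : X → Finset X) (k : ℕ)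
    (seq' : ℕ → X × Bool) (n : ℕ) : ℕ :=
  ((Finset.range n).filter fun i =>
    sHyp A k (stN A N k seq' i) (seq' i).1 ≠ (seq' i).2).card

lemma mcN_succ (seq' : ℕ → X × Bool) (n : ℕ) :
    mcN A N k seq' (n+1) =
      if sHyp A k (stN A N k seq' n) (seq' n).1 ≠ (seq' n).2
      then mcN A N k seq' n + 1 else mcN A N k seq' n := by
  unfold mcN
  rw [Finset.range_add_one, Finset.filter_insert]
  by_cases h : sHyp A k (stN A N k seq' n) (seq' n).1 ≠ (seq' n).2
  · rw [if_pos h, if_pos h, Finset.card_insert_of_notMem (by simp)]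
  · rw [if_neg h, if_neg h]

lemma main_induction {hstar : X → Bool} (hdeg : ∀ x, (N x).card ≤ k)
    (seq' : ℕ → X × Bool) (T : ℕ)
    (hFP : ∀ n, n < T → sHyp A k (stN A N k seq' n) (seq' n).1 = true →
      (seq' n).2 = false → hstar (seq' n).1 = false)
    (hFN : ∀ n, n < T → sHyp A k (stN A N k seq' n) (seq' n).1 = false →
      (seq' n).2 = true → ∃ z ∈ cnb N (seq' n).1, hstar z = true)
    (hFNall : ∀ n, n < T → sHyp A k (stN A N k seq' n) (seq' n).1 = false →
      (seq' n).2 = true → ∀ z ∈ cnb N (seq' n).1,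
        sHyp A k (stN A N k seq' n) z = false) :
    ∀ n, n ≤ T →
      (∀ e ∈ stN A N k seq' n, (0:ℝ) < e.2) ∧
      totalW (stN A N k seq' n) ≤ (1 - 1/(4*((k:ℝ)+1))) ^ mcN A N k seq' n ∧
      ∃ e ∈ stN A N k seq' n, GoodH A hstar e.1 ∧
        (1 / (2 * ((k:ℝ)+1))) ^ e.1.length ≤ e.2 := by
  intro n
  induction n with
  | zero =>
    intro _
    rw [stN_zero]
    refine ⟨?_, ?_, ?_⟩
    · intro e he
      simp only [List.mem_singleton] at he
      rw [he]
      norm_num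
    · have h1 : totalW [(([] : Hist X), (1:ℝ))] = 1 := by simp [totalW]
      have h2 : mcN A N k seq' 0 = 0 := by simp [mcN]
      rw [h1, h2, pow_zero]
    · refine ⟨([], 1), by simp, ⟨?_, ?_⟩, by simp⟩
      · intro p hp
        simp at hp
      · intro i hi
        simp at hi
  | succ n ih =>
    intro hn1
    obtain ⟨ihP, ihW, ihG⟩ := ih (by omega)
    have hnT : n < T := hn1
    have hq0 : (0:ℝ) < 1 - 1/(4*((k:ℝ)+1)) := by
      have hc : (0:ℝ) < 4*((k:ℝ)+1) := by positivity
      have : 1/(4*((k:ℝ)+1)) < 1 := by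
        rw [div_lt_one hc]
        nlinarith [Nat.cast_nonneg (α := ℝ) k]
      linarith
    by_cases hmis : sHyp A k (stN A N k seq' n) (seq' n).1 = (seq' n).2
    · have hupd : stN A N k seq' (n+1) = stN A N k seq' n := by
        rw [stN_succ, upd, if_pos hmis]
      have hmc : mcN A N k seq' (n+1) = mcN A N k seq' n := by
        rw [mcN_succ, if_neg (fun hcon => hcon hmis)]
      rw [hupd, hmc]
      exact ⟨ihP, ihW, ihG⟩
    · have hupd := stN_succ (A := A) (N := N) (k := k) seq' n
      have hmc : mcN A N k seq' (n+1) = mcN A N k seq' n + 1 := by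
        rw [mcN_succ, if_pos hmis]
      refine ⟨?_, ?_, ?_⟩
      · rw [hupd]
        exact upd_pos ihP
      · rw [hupd, hmc, pow_succ]
        have hz : (seq' n).2 = true →
            ∀ z ∈ cnb N (seq' n).1, sHyp A k (stN A N k seq' n) z = false := by
          intro hy
          apply hFNall n hnT ?_ hy
          cases hbb : sHyp A k (stN A N k seq' n) (seq' n).1
          · rfl
          · exact absurd (by rw [hbb, hy]) hmis
        calc totalW (upd A N k (stN A N k seq' n) (seq' n).1 (seq' n).2)
            ≤ (1 - 1/(4*((k:ℝ)+1))) * totalW (stN A N k seq' n) :=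
              upd_totalW_mistake ihP (hdeg _) hmis hz
          _ ≤ (1 - 1/(4*((k:ℝ)+1))) * (1 - 1/(4*((k:ℝ)+1))) ^ mcN A N k seq' n :=
              mul_le_mul_of_nonneg_left ihW hq0.le
          _ = (1 - 1/(4*((k:ℝ)+1))) ^ mcN A N k seq' n * (1 - 1/(4*((k:ℝ)+1))) := by
              ring
      · rw [hupd]
        exact upd_good (hFP n hnT) (hFN n hnT) ihG

lemma final_bound {H : Set (X → Bool)} {M : ℕ} (hb : StdMistakeBound A H M)
    {hstar : X → Bool} (hstarH : hstar ∈ H) (hk : 1 ≤ k)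
    (hdeg : ∀ x, (N x).card ≤ k) (seq' : ℕ → X × Bool) (T : ℕ)
    (hFP : ∀ n, n < T → sHyp A k (stN A N k seq' n) (seq' n).1 = true →
      (seq' n).2 = false → hstar (seq' n).1 = false)
    (hFN : ∀ n, n < T → sHyp A k (stN A N k seq' n) (seq' n).1 = false →
      (seq' n).2 = true → ∃ z ∈ cnb N (seq' n).1, hstar z = true)
    (hFNall : ∀ n, n < T → sHyp A k (stN A N k seq' n) (seq' n).1 = false →
      (seq' n).2 = true → ∀ z ∈ cnb N (seq' n).1,
        sHyp A k (stN A N k seq' n) z = false) :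
    (mcN A N k seq' T : ℝ) ≤ 4 * ((k:ℝ)+1) * M * Real.log (2 * ((k:ℝ)+1)) := by
  obtain ⟨hP, hW, e, he, hgd, hw⟩ :=
    main_induction hdeg seq' T hFP hFN hFNall T le_rfl
  set c : ℝ := (k:ℝ) + 1 with hc
  have hcpos : (0:ℝ) < c := by positivity
  have hc2 : (2:ℝ) ≤ c := by
    have h1 : (1:ℝ) ≤ (k:ℝ) := by exact_mod_cast hk
    rw [hc]; linarith
  set q : ℝ := 1 - 1/(4*c) with hq
  set m : ℕ := mcN A N k seq' T with hm
  have hq0 : (0:ℝ) < q := by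
    have h1 : 1/(4*c) ≤ 1/8 := by
      rw [div_le_div_iff₀ (by positivity) (by norm_num)]
      nlinarith
    rw [hq]; linarith
  have hlen : e.1.length ≤ M := good_length_le hb hstarH hgd
  have hbase1 : 1/(2*c) ≤ 1 := by
    rw [div_le_one (by positivity)]
    linarith
  have h1 : (1/(2*c))^M ≤ e.2 :=
    le_trans (pow_le_pow_of_le_one (by positivity) hbase1 hlen) hw
  have h2 : e.2 ≤ totalW (stN A N k seq' T) :=
    mem_le_totalW (fun a ha => (hP a ha).le) he
  have hkey : (1/(2*c))^M ≤ q ^ m := le_trans h1 (le_trans h2 hW)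
  have hlog1 : Real.log ((1/(2*c))^M) ≤ Real.log (q ^ m) :=
    Real.log_le_log (by positivity) hkey
  rw [Real.log_pow, Real.log_pow] at hlog1
  have hloginv : Real.log (1/(2*c)) = - Real.log (2*c) := by
    rw [one_div, Real.log_inv]
  rw [hloginv] at hlog1
  have hlogq : Real.log q ≤ -(1/(4*c)) := by
    have hle := Real.log_le_sub_one_of_pos hq0
    have heq : q - 1 = -(1/(4*c)) := by rw [hq]; ring
    exact hle.trans heq.le
  have hm0 : (0:ℝ) ≤ (m : ℝ) := Nat.cast_nonneg _
  have h6 : (m:ℝ) * Real.log q ≤ (m:ℝ) * (-(1/(4*c))) :=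
    mul_le_mul_of_nonneg_left hlogq hm0
  have h5 : (m:ℝ) * (1/(4*c)) ≤ (M:ℝ) * Real.log (2*c) := by
    ring_nf at hlog1 h6 ⊢
    linarith
  have h7 := mul_le_mul_of_nonneg_left h5
    (le_of_lt (show (0:ℝ) < 4*c by positivity))
  have hsimp : (4*c) * ((m:ℝ) * (1/(4*c))) = (m:ℝ) := by field_simp
  calc (m:ℝ) = (4*c) * ((m:ℝ) * (1/(4*c))) := hsimp.symm
    _ ≤ (4*c) * ((M:ℝ) * Real.log (2*c)) := h7
    _ = 4 * c * (M:ℝ) * Real.log (2*c) := by ring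

end Main

end
end PMF15

open PMF15 in
/-- in the post-manipulation feedback setting, any standard online learner
with mistake bound `M` for `H` can be converted into a deterministic learner making at
most `4·(k+1)·M·ln(2(k+1))` mistakes on every realizable sequence, for every
protocol-consistent adversarial choice of the revealed points. -/
theorem post_manipulation_online_upper_bound (X : Type*) (N : X → Finset X) (k : ℕ)
    (hk : 1 ≤ k) (hdeg : ∀ x, (N x).card ≤ k) (H : Set (X → Bool)) (M : ℕ)
    (hA : ∃ A : List (X × Bool) → X → Bool, StdMistakeBound A H M) :
    ∃ L : List (X × Bool) → (X → Bool),
      ∀ T : ℕ, ∀ x : Fin T → X, ∀ y : Fin T → Bool, ∀ v : Fin T → X,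
        (∃ hstar ∈ H, ∀ t : Fin T, inducedLabel N hstar (x t) = y t) →
        PMFConsistent N (pmfHyp L v y) x v →
        ({t : Fin T | pmfHyp L v y t (v t) ≠ y t}.ncard : ℝ) ≤
          4 * (k + 1) * M * Real.log (2 * (k + 1)) := by
  classical
  obtain ⟨A, hb⟩ := hA
  refine ⟨Lrn A N k, ?_⟩
  intro T x y v hreal hcons
  obtain ⟨hstar, hstarH, hlab⟩ := hreal
  have hk2 : (2:ℝ) ≤ (k:ℝ) + 1 := by
    have h1 : (1:ℝ) ≤ (k:ℝ) := by exact_mod_cast hk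
    linarith
  have hlog0 : 0 ≤ Real.log (2 * ((k:ℝ) + 1)) := Real.log_nonneg (by nlinarith)
  rcases Nat.eq_zero_or_pos T with hT0 | hT
  · subst hT0
    have hempty : {t : Fin 0 | pmfHyp (Lrn A N k) v y t (v t) ≠ y t} = ∅ :=
      Set.eq_empty_of_isEmpty _
    rw [hempty, Set.ncard_empty]
    push_cast
    exact mul_nonneg (by positivity) hlog0
  -- T ≥ 1; encode the revealed sequence as a total function on ℕ
  set seq' : ℕ → X × Bool :=
    fun i => if h : i < T then (v ⟨i, h⟩, y ⟨i, h⟩) else (v ⟨0, hT⟩, y ⟨0, hT⟩)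
    with hseq'
  have hs : ∀ (i : ℕ) (h : i < T), seq' i = (v ⟨i, h⟩, y ⟨i, h⟩) := by
    intro i h
    simp only [hseq', dif_pos h]
  -- the played hypothesis at round n equals the state hypothesis
  have hhyp : ∀ (t : Fin T),
      pmfHyp (Lrn A N k) v y t = sHyp A k (stN A N k seq' t.1) := by
    intro t
    show sHyp A k (stFold A N k (histFn (fun i => (v i, y i)) t)) = _
    rw [histFn_eq v y seq' hs t]
    rfl
  -- membership in closed neighborhoods
  have hICN : ∀ (a z : X), InClosedNbhd N a z ↔ z ∈ cnb N a := by
    intro a z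
    simp [InClosedNbhd, cnb, Finset.mem_insert]
  -- label decompositions from realizability
  have hindF : ∀ t : Fin T, y t = false →
      hstar (x t) = false ∧ ∀ z ∈ N (x t), hstar z = false := by
    intro t h0
    have hl := hlab t
    rw [h0] at hl
    unfold inducedLabel at hl
    rw [Bool.or_eq_false_iff] at hl
    obtain ⟨hl1, hl2⟩ := hl
    rw [decide_eq_false_iff_not] at hl2
    push_neg at hl2
    refine ⟨hl1, fun z hz => ?_⟩
    have := hl2 z hz
    simpa using this
  have hindT : ∀ t : Fin T, y t = true →
      ∃ z ∈ cnb N (x t), hstar z = true := by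
    intro t h0
    have hl := hlab t
    rw [h0] at hl
    unfold inducedLabel at hl
    rw [Bool.or_eq_true] at hl
    rcases hl with hl | hl
    · exact ⟨x t, Finset.mem_insert_self _ _, hl⟩
    · rw [decide_eq_true_iff] at hl
      obtain ⟨z, hz1, hz2⟩ := hl
      exact ⟨z, Finset.mem_insert_of_mem hz1, hz2⟩
  -- the three per-round facts needed by the potential argument
  have keyFP : ∀ (n : ℕ) (hnT : n < T),
      sHyp A k (stN A N k seq' n) (v ⟨n, hnT⟩) = true → y ⟨n, hnT⟩ = false →
        hstar (v ⟨n, hnT⟩) = false := by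
    intro n hnT hpos hy
    set t : Fin T := ⟨n, hnT⟩ with htdef
    obtain ⟨hc1, hc2⟩ := hcons t
    rw [hhyp t] at hc1 hc2
    have hin : InClosedNbhd N (x t) (v t) := by
      by_cases hex : ∃ z, InClosedNbhd N (x t) z ∧
          sHyp A k (stN A N k seq' t.1) z = true
      · exact (hc1 hex).1
      · have hveq := hc2 hex
        exact absurd ⟨v t, by rw [hveq]; exact Or.inl rfl, hpos⟩ hex
    obtain ⟨hx0, hxall⟩ := hindF t hy
    rcases hin with h | h
    · rw [h]; exact hx0
    · exact hxall _ h
  have keyNE : ∀ (n : ℕ) (hnT : n < T),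
      sHyp A k (stN A N k seq' n) (v ⟨n, hnT⟩) = false →
        ¬ ∃ z, InClosedNbhd N (x ⟨n, hnT⟩) z ∧
          sHyp A k (stN A N k seq' n) z = true := by
    intro n hnT hneg hex
    set t : Fin T := ⟨n, hnT⟩ with htdef
    obtain ⟨hc1, _⟩ := hcons t
    rw [hhyp t] at hc1
    have := (hc1 hex).2
    rw [hneg] at this
    simp at this
  have keyVEQ : ∀ (n : ℕ) (hnT : n < T),
      sHyp A k (stN A N k seq' n) (v ⟨n, hnT⟩) = false →
        v ⟨n, hnT⟩ = x ⟨n, hnT⟩ := by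
    intro n hnT hneg
    obtain ⟨_, hc2⟩ := hcons ⟨n, hnT⟩
    rw [hhyp ⟨n, hnT⟩] at hc2
    exact hc2 (keyNE n hnT hneg)
  have keyFN : ∀ (n : ℕ) (hnT : n < T),
      sHyp A k (stN A N k seq' n) (v ⟨n, hnT⟩) = false → y ⟨n, hnT⟩ = true →
        ∃ z ∈ cnb N (v ⟨n, hnT⟩), hstar z = true := by
    intro n hnT hneg hy
    rw [keyVEQ n hnT hneg]
    exact hindT ⟨n, hnT⟩ hy
  have keyFNall : ∀ (n : ℕ) (hnT : n < T),
      sHyp A k (stN A N k seq' n) (v ⟨n, hnT⟩) = false → y ⟨n, hnT⟩ = true →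
        ∀ z ∈ cnb N (v ⟨n, hnT⟩), sHyp A k (stN A N k seq' n) z = false := by
    intro n hnT hneg _ z hz
    rw [keyVEQ n hnT hneg] at hz
    cases hbb : sHyp A k (stN A N k seq' n) z
    · rfl
    · exact absurd ⟨z, (hICN _ z).mpr hz, hbb⟩ (keyNE n hnT hneg)
  -- apply the potential bound
  have hbound := final_bound hb hstarH hk hdeg seq' T
    (fun n hnT => by rw [hs n hnT]; exact keyFP n hnT)
    (fun n hnT => by rw [hs n hnT]; exact keyFN n hnT)
    (fun n hnT => by rw [hs n hnT]; exact keyFNall n hnT)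
  -- identify the mistake count
  have hsets : {t : Fin T | pmfHyp (Lrn A N k) v y t (v t) ≠ y t} =
      {t : Fin T | (fun i => sHyp A k (stN A N k seq' i) (seq' i).1 ≠ (seq' i).2) t.1} := by
    ext t
    simp only [Set.mem_setOf_eq]
    rw [hhyp t, hs t.1 t.isLt]
  have hcard : {t : Fin T | pmfHyp (Lrn A N k) v y t (v t) ≠ y t}.ncard =
      mcN A N k seq' T := by
    rw [hsets]
    exact (ncard_eq_filter_card (T := T)
      (fun i => sHyp A k (stN A N k seq' i) (seq' i).1 ≠ (seq' i).2)).trans (by unfold mcN; congr!)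
  rw [hcard]
  exact hbound
end

section
/- For every k ≥ 2 and every d ≥ 1, there exist a finite set X with |X| = d·(k+1), a manipulation graph N on X with maximum out-degree at most k, and a hypothesis class H of functions X → Bool with |H| = k^d that admits a standard online learner with mistake bound d, such that for every deterministic learner L in the post-manipulation feedback setting there exist a finite sequence realizable for H under N and protocol-consistent choices of the revealed points v_t on which L makes at least d·(k−1) mistakes. -/
namespace PMF16

variable (m e : ℕ)

abbrev XT := Fin (e+1) × Fin (m+3)

def ctp (b : Fin (e+1)) : XT m e := (b, 0)
def lfp (b : Fin (e+1)) (i : Fin (m+2)) : XT m e := (b, i.succ)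

def Ngr (p : XT m e) : Finset (XT m e) :=
  if p.2 = 0 then Finset.univ.image (fun i : Fin (m+2) => lfp m e p.1 i) else {ctp m e p.1}

lemma Ngr_ct (b : Fin (e+1)) :
    Ngr m e (ctp m e b) = Finset.univ.image (fun i : Fin (m+2) => lfp m e b i) := by
  unfold Ngr ctp
  simp

lemma Ngr_lf (b : Fin (e+1)) (i : Fin (m+2)) :
    Ngr m e (lfp m e b i) = {ctp m e b} := by
  unfold Ngr lfp ctp
  simp [Fin.succ_ne_zero]

def hfun (s : Fin (e+1) → Fin (m+2)) : XT m e → Bool := fun p => decide (p.2 = (s p.1).succ)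

def Hcl : Set (XT m e → Bool) := Set.range (hfun m e)

lemma hfun_inj : Function.Injective (hfun m e) := by
  intro s s' hss
  funext b
  have h := congrFun hss (lfp m e b (s b))
  simp only [hfun, lfp] at h
  have : (s b).succ = (s' b).succ := by
    by_contra hne
    simp [hne] at h
  exact Fin.succ_injective _ this

lemma Ngr_card (p : XT m e) : (Ngr m e p).card ≤ m + 2 := by
  unfold Ngr
  split
  · calc (Finset.univ.image (fun i : Fin (m+2) => lfp m e p.1 i)).card
        ≤ (Finset.univ : Finset (Fin (m+2))).card := Finset.card_image_le
      _ = m + 2 := by simp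
  · simp

lemma Hcl_ncard : (Hcl m e).ncard = (m+2) ^ (e+1) := by
  have h1 : (Hcl m e).ncard = Nat.card (Hcl m e) := (Nat.card_coe_set_eq _).symm
  rw [h1]
  unfold Hcl
  rw [Nat.card_range_of_injective (hfun_inj m e)]
  simp [Nat.card_eq_fintype_card]

/-! ### standard learner -/

lemma std_bound :
    StdMistakeBound (fun hist (x : XT m e) => decide ((x, true) ∈ hist)) (Hcl m e) (e+1) := by
  rintro T seq ⟨h, ⟨s, rfl⟩, hc⟩
  classical
  set A : List (XT m e × Bool) → XT m e → Bool :=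
    fun hist x => decide ((x, true) ∈ hist) with hA
  set M : Set (Fin T) := {t | A (histFn seq t) (seq t).1 ≠ (seq t).2} with hM
  -- labels at mistakes are true
  have hyt : ∀ t ∈ M, (seq t).2 = true := by
    intro t ht
    by_contra hf
    have hf' : (seq t).2 = false := by
      cases hb : (seq t).2 <;> simp_all
    have hAt : A (histFn seq t) (seq t).1 = true := by
      have := ht
      simp only [hM, Set.mem_setOf_eq, hf'] at this
      cases hb : A (histFn seq t) (seq t).1 <;> simp_all
    simp only [hA, decide_eq_true_eq] at hAt
    unfold histFn at hAt
    rw [List.mem_ofFn] at hAt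
    obtain ⟨i, hi⟩ := hAt
    have hi' : seq (Fin.castLE t.isLt.le i) = ((seq t).1, true) := hi
    have h1 := hc (Fin.castLE t.isLt.le i)
    rw [hi'] at h1
    have h2 := hc t
    rw [hf'] at h2
    simp at h1
    rw [h1] at h2
    exact absurd h2 (by simp)
  have hpos : ∀ t ∈ M, hfun m e s (seq t).1 = true := fun t ht => (hc t).trans (hyt t ht)
  have := Set.ncard_le_ncard_of_injOn (s := M) (t := {p : XT m e | hfun m e s p = true})
    (fun t => (seq t).1)
    (fun t ht => hpos t ht)
    (by
      intro t ht t' ht' heq'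
      have heq : (seq t).1 = (seq t').1 := heq'
      by_contra hne
      rcases Nat.lt_or_ge t.1 t'.1 with hlt | hge
      · -- t before t' : t' predicted correctly
        have hmem : ((seq t').1, true) ∈ histFn seq t' := by
          unfold histFn
          rw [List.mem_ofFn]
          refine ⟨⟨t.1, hlt⟩, ?_⟩
          have hct : Fin.castLE t'.isLt.le ⟨t.1, hlt⟩ = t := by
            apply Fin.ext; rfl
          show seq (Fin.castLE t'.isLt.le ⟨t.1, hlt⟩) = ((seq t').1, true)
          rw [hct, ← heq]
          exact Prod.ext rfl (hyt t ht)
        have : A (histFn seq t') (seq t').1 = true := by simp [hA, hmem]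
        have h2 := hyt t' ht'
        simp only [hM, Set.mem_setOf_eq] at ht'
        rw [this, h2] at ht'
        exact ht' rfl
      · rcases Nat.lt_or_ge t'.1 t.1 with hlt' | hge'
        · have hmem : ((seq t).1, true) ∈ histFn seq t := by
            unfold histFn
            rw [List.mem_ofFn]
            refine ⟨⟨t'.1, hlt'⟩, ?_⟩
            have hct : Fin.castLE t.isLt.le ⟨t'.1, hlt'⟩ = t' := by
              apply Fin.ext; rfl
            show seq (Fin.castLE t.isLt.le ⟨t'.1, hlt'⟩) = ((seq t).1, true)
            rw [hct, heq]
            exact Prod.ext rfl (hyt t' ht')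
          have : A (histFn seq t) (seq t).1 = true := by simp [hA, hmem]
          have h2 := hyt t ht
          simp only [hM, Set.mem_setOf_eq] at ht
          rw [this, h2] at ht
          exact ht rfl
        · exact hne (Fin.ext (le_antisymm hge' hge)))
    (Set.toFinite _)
  refine this.trans (le_of_eq ?_)
  have hset : {p : XT m e | hfun m e s p = true}
      = Set.range (fun b : Fin (e+1) => lfp m e b (s b)) := by
    ext p
    simp only [Set.mem_setOf_eq, Set.mem_range, hfun, decide_eq_true_eq, lfp]
    constructor
    · intro hp
      exact ⟨p.1, by rw [← hp]⟩
    · rintro ⟨b, rfl⟩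
      simp
  rw [hset, ← Nat.card_coe_set_eq,
    Nat.card_range_of_injective (f := fun b : Fin (e+1) => lfp m e b (s b))
      (fun a b hab => congrArg Prod.fst hab)]
  simp [Nat.card_eq_fintype_card]

/-! ### adversary -/

def bOf (t : ℕ) : Fin (e+1) := ⟨t / (m+1) % (e+1), Nat.mod_lt _ (Nat.succ_pos e)⟩

variable (L : List (XT m e × Bool) → XT m e → Bool)

noncomputable def stp (hist : List (XT m e × Bool)) : XT m e × Bool × XT m e :=
  if L hist (ctp m e (bOf m e hist.length)) = true then
    (lfp m e (bOf m e hist.length) 0, false, ctp m e (bOf m e hist.length))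
  else if hp : ∃ i : Fin (m+2), L hist (lfp m e (bOf m e hist.length) i) = true then
    (lfp m e (bOf m e hist.length) hp.choose, false, lfp m e (bOf m e hist.length) hp.choose)
  else (ctp m e (bOf m e hist.length), true, ctp m e (bOf m e hist.length))

noncomputable def histL (n : ℕ) : List (XT m e × Bool) :=
  Nat.rec [] (fun _ prev => prev ++ [((stp m e L prev).2.2, (stp m e L prev).2.1)]) n

noncomputable def Vx (t : ℕ) : XT m e := (stp m e L (histL m e L t)).1
noncomputable def Vy (t : ℕ) : Bool := (stp m e L (histL m e L t)).2.1
noncomputable def Vv (t : ℕ) : XT m e := (stp m e L (histL m e L t)).2.2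

lemma histL_zero : histL m e L 0 = [] := rfl

lemma histL_succ (n : ℕ) :
    histL m e L (n+1) = histL m e L n ++ [(Vv m e L n, Vy m e L n)] := rfl

lemma histL_length (n : ℕ) : (histL m e L n).length = n := by
  induction n with
  | zero => simp [histL_zero]
  | succ n ih => simp [histL_succ, ih]

lemma histL_eq (n : ℕ) :
    histL m e L n = List.ofFn (fun i : Fin n => (Vv m e L i.1, Vy m e L i.1)) := by
  induction n with
  | zero => simp [histL_zero]
  | succ n ih =>
      rw [List.ofFn_succ', histL_succ, ih]
      simp [List.concat_eq_append]

lemma pmfHyp_eq (T : ℕ) (t : Fin T) :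
    pmfHyp L (fun i : Fin T => Vv m e L i.1) (fun i : Fin T => Vy m e L i.1) t
      = L (histL m e L t.1) := by
  unfold pmfHyp histFn
  rw [histL_eq]
  rfl

lemma stp_cases (t : ℕ) :
    (L (histL m e L t) (ctp m e (bOf m e t)) = true ∧ Vx m e L t = lfp m e (bOf m e t) 0
      ∧ Vy m e L t = false ∧ Vv m e L t = ctp m e (bOf m e t)) ∨
    ((∃ i, Vx m e L t = lfp m e (bOf m e t) i) ∧ Vy m e L t = false
      ∧ Vv m e L t = Vx m e L t ∧ L (histL m e L t) (Vv m e L t) = true) ∨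
    ((∀ z, InClosedNbhd (Ngr m e) (ctp m e (bOf m e t)) z → L (histL m e L t) z = false)
      ∧ Vx m e L t = ctp m e (bOf m e t) ∧ Vy m e L t = true
      ∧ Vv m e L t = ctp m e (bOf m e t)) := by
  unfold Vx Vy Vv stp
  rw [histL_length]
  split_ifs with h1 h2
  · exact Or.inl ⟨h1, rfl, rfl, rfl⟩
  · exact Or.inr (Or.inl ⟨⟨h2.choose, rfl⟩, rfl, rfl, h2.choose_spec⟩)
  · refine Or.inr (Or.inr ⟨?_, rfl, rfl, rfl⟩)
    intro z hz
    rcases hz with hz | hz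
    · subst hz
      cases hb : L (histL m e L t) (ctp m e (bOf m e t)) with
      | false => rfl
      | true => exact absurd hb h1
    · rw [Ngr_ct, Finset.mem_image] at hz
      obtain ⟨i, -, rfl⟩ := hz
      cases hb : L (histL m e L t) (lfp m e (bOf m e t) i) with
      | false => rfl
      | true => exact absurd ⟨i, hb⟩ h2

lemma exists_clean (b : Fin (e+1)) :
    ∃ j : Fin (m+2), ∀ r < m+1, (Vx m e L (b.1*(m+1)+r)).2 ≠ j.succ := by
  by_contra hcon
  push_neg at hcon
  have hsub : (Finset.univ.image (fun j : Fin (m+2) => j.succ))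
      ⊆ (Finset.range (m+1)).image (fun r => (Vx m e L (b.1*(m+1)+r)).2) := by
    intro a ha
    simp only [Finset.mem_image, Finset.mem_univ, true_and] at ha
    obtain ⟨j, rfl⟩ := ha
    obtain ⟨r, hr, hrr⟩ := hcon j
    exact Finset.mem_image.2 ⟨r, Finset.mem_range.2 hr, hrr⟩
  have h1 := Finset.card_le_card hsub
  have h2 : (Finset.univ.image (fun j : Fin (m+2) => j.succ)).card = m+2 := by
    rw [Finset.card_image_of_injective _ (Fin.succ_injective _)]; simp
  have h3 := Finset.card_image_le (s := Finset.range (m+1))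
    (f := fun r => (Vx m e L (b.1*(m+1)+r)).2)
  rw [h2] at h1
  simp only [Finset.card_range] at h3
  omega

lemma induced_ct (s : Fin (e+1) → Fin (m+2)) (b : Fin (e+1)) :
    inducedLabel (Ngr m e) (hfun m e s) (ctp m e b) = true := by
  have hex : ∃ z ∈ Ngr m e (ctp m e b), hfun m e s z = true := by
    refine ⟨lfp m e b (s b), ?_, by simp [hfun, lfp]⟩
    rw [Ngr_ct, Finset.mem_image]
    exact ⟨s b, Finset.mem_univ _, rfl⟩
  simp [inducedLabel, hex]

lemma induced_lf (s : Fin (e+1) → Fin (m+2)) (b : Fin (e+1)) (i : Fin (m+2))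
    (hne : Fin.succ i ≠ (s b).succ) :
    inducedLabel (Ngr m e) (hfun m e s) (lfp m e b i) = false := by
  simp only [inducedLabel, Ngr_lf, Finset.mem_singleton]
  have h1 : hfun m e s (lfp m e b i) = false := by
    simp [hfun, lfp, hne]
  have h2 : ¬ ∃ z, z = ctp m e b ∧ hfun m e s z = true := by
    rintro ⟨z, rfl, hz⟩
    simp [hfun, ctp, (Fin.succ_ne_zero (s b)).symm] at hz
  rw [h1]
  simp only [Bool.false_or]
  exact decide_eq_false h2

end PMF16

open PMF16 in
/-- a mistake lower bound of `d·(k−1)` in the post-manipulation feedback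
setting, for a finite domain of size `d·(k+1)`, a graph of maximum out-degree at most
`k`, and a class of `k^d` hypotheses that is learnable with mistake bound `d` in the
standard online setting. -/
theorem post_manipulation_online_lower_bound :
    ∀ k d : ℕ, 2 ≤ k → 1 ≤ d →
      ∃ (X : Type) (inst : Fintype X) (N : X → Finset X) (H : Set (X → Bool)),
        @Fintype.card X inst = d * (k + 1) ∧
        (∀ x, (N x).card ≤ k) ∧
        H.ncard = k ^ d ∧
        (∃ A : List (X × Bool) → X → Bool, StdMistakeBound A H d) ∧
        ∀ L : List (X × Bool) → (X → Bool),
          ∃ (T : ℕ) (x : Fin T → X) (y : Fin T → Bool) (v : Fin T → X),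
            (∃ hstar ∈ H, ∀ t : Fin T, inducedLabel N hstar (x t) = y t) ∧
            PMFConsistent N (pmfHyp L v y) x v ∧
            d * (k - 1) ≤ {t : Fin T | pmfHyp L v y t (v t) ≠ y t}.ncard := by
  intro k d hk hd
  obtain ⟨m, rfl⟩ : ∃ m, k = m + 2 := ⟨k - 2, by omega⟩
  obtain ⟨e, rfl⟩ : ∃ e, d = e + 1 := ⟨d - 1, by omega⟩
  refine ⟨XT m e, inferInstance, Ngr m e, Hcl m e, by simp [XT], Ngr_card m e,
    Hcl_ncard m e, ⟨_, std_bound m e⟩, ?_⟩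
  intro L
  set T : ℕ := (e+1) * (m+1) with hT
  set s : Fin (e+1) → Fin (m+2) := fun b => (exists_clean m e L b).choose with hs_def
  have hs : ∀ b : Fin (e+1), ∀ r < m+1, (Vx m e L (b.1*(m+1)+r)).2 ≠ (s b).succ :=
    fun b => (exists_clean m e L b).choose_spec
  have hclean : ∀ t : Fin T, (Vx m e L t.1).2 ≠ (s (bOf m e t.1)).succ := by
    intro t
    have hdm := Nat.div_add_mod t.1 (m+1)
    have hlt : t.1 / (m+1) < e + 1 := by
      have h0 : t.1 < (e+1) * (m+1) := t.isLt
      exact (Nat.div_lt_iff_lt_mul (Nat.succ_pos m)).2 h0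
    have hb1 : (bOf m e t.1).1 = t.1 / (m+1) := Nat.mod_eq_of_lt hlt
    have h1 : (bOf m e t.1).1 * (m+1) + t.1 % (m+1) = t.1 := by
      rw [hb1, Nat.mul_comm]; exact hdm
    have h2 := hs (bOf m e t.1) (t.1 % (m+1)) (Nat.mod_lt _ (Nat.succ_pos m))
    rw [h1] at h2
    exact h2
  refine ⟨T, fun t => Vx m e L t.1, fun t => Vy m e L t.1, fun t => Vv m e L t.1, ?_, ?_, ?_⟩
  · -- realizability
    refine ⟨hfun m e s, ⟨s, rfl⟩, ?_⟩
    intro t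
    rcases stp_cases m e L t.1 with ⟨h1, hx, hy, hv⟩ | ⟨⟨i, hx⟩, hy, hv, hvt⟩ | ⟨hall, hx, hy, hv⟩
    · show inducedLabel (Ngr m e) (hfun m e s) (Vx m e L t.1) = Vy m e L t.1
      rw [hx, hy]
      refine induced_lf m e s _ _ ?_
      intro hcon
      apply hclean t
      rw [hx]
      exact hcon
    · show inducedLabel (Ngr m e) (hfun m e s) (Vx m e L t.1) = Vy m e L t.1
      rw [hx, hy]
      refine induced_lf m e s _ _ ?_
      intro hcon
      apply hclean t
      rw [hx]
      exact hcon
    · show inducedLabel (Ngr m e) (hfun m e s) (Vx m e L t.1) = Vy m e L t.1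
      rw [hx, hy]
      exact induced_ct m e s _
  · -- protocol consistency
    intro t
    rcases stp_cases m e L t.1 with ⟨h1, hx, hy, hv⟩ | ⟨⟨i, hx⟩, hy, hv, hvt⟩ | ⟨hall, hx, hy, hv⟩
    · constructor
      · intro _
        constructor
        · show InClosedNbhd (Ngr m e) (Vx m e L t.1) (Vv m e L t.1)
          rw [hx, hv]
          exact Or.inr (by rw [Ngr_lf]; exact Finset.mem_singleton_self _)
        · show pmfHyp L _ _ t (Vv m e L t.1) = true
          rw [pmfHyp_eq, hv]
          exact h1
      · intro hno
        exfalso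
        apply hno
        refine ⟨ctp m e (bOf m e t.1), ?_, ?_⟩
        · show InClosedNbhd (Ngr m e) (Vx m e L t.1) _
          rw [hx]
          exact Or.inr (by rw [Ngr_lf]; exact Finset.mem_singleton_self _)
        · rw [pmfHyp_eq]
          exact h1
    · constructor
      · intro _
        constructor
        · show InClosedNbhd (Ngr m e) (Vx m e L t.1) (Vv m e L t.1)
          rw [hv]
          exact Or.inl rfl
        · show pmfHyp L _ _ t (Vv m e L t.1) = true
          rw [pmfHyp_eq]
          exact hvt
      · intro hno
        exfalso
        apply hno
        refine ⟨Vv m e L t.1, ?_, ?_⟩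
        · show InClosedNbhd (Ngr m e) (Vx m e L t.1) (Vv m e L t.1)
          rw [hv]
          exact Or.inl rfl
        · rw [pmfHyp_eq]
          exact hvt
    · constructor
      · rintro ⟨z, hz, hzt⟩
        exfalso
        rw [pmfHyp_eq] at hzt
        have hz' : InClosedNbhd (Ngr m e) (ctp m e (bOf m e t.1)) z := by
          rw [← hx]; exact hz
        rw [hall z hz'] at hzt
        exact Bool.false_ne_true hzt
      · intro _
        show Vv m e L t.1 = Vx m e L t.1
        rw [hv, hx]
  · -- mistake count
    have huniv : {t : Fin T | pmfHyp L (fun i : Fin T => Vv m e L i.1)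
        (fun i : Fin T => Vy m e L i.1) t ((fun i : Fin T => Vv m e L i.1) t)
          ≠ (fun i : Fin T => Vy m e L i.1) t} = Set.univ := by
      ext t
      simp only [Set.mem_setOf_eq, Set.mem_univ, iff_true]
      rw [pmfHyp_eq]
      rcases stp_cases m e L t.1 with ⟨h1, hx, hy, hv⟩ | ⟨⟨i, hx⟩, hy, hv, hvt⟩ | ⟨hall, hx, hy, hv⟩
      · rw [hv, hy, h1]; simp
      · rw [hy, hvt]; simp
      · rw [hv, hy, hall _ (Or.inl rfl)]; simp
    rw [huniv, Set.ncard_univ, Nat.card_eq_fintype_card, Fintype.card_fin]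
    have hm : m + 2 - 1 = m + 1 := rfl
    rw [hm]
end

section
/- For every n ≥ 2 there exist a finite set X with |X| = n·(n+1), a hypothesis class H of functions X → Bool with |H| = n that admits a standard online learner with mistake bound 1, and a class 𝒢 of manipulation graphs on X, each of maximum out-degree at most 1, with |𝒢| ≤ (n+1)^n, such that for every deterministic learner L in the unknown manipulation graph online setting there exist a true graph N* ∈ 𝒢, a finite (𝒢,H)-realizable sequence, and protocol-consistent choices of the revealed points v_t on which L makes at least n−1 mistakes. -/
/-- The hypothesis implemented at round `t` by a learner `L` in the unknown manipulation
graph online setting. -/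
def ugHyp {X : Type*} {T : ℕ} (L : List (X × X × Bool) → X → (X → Bool))
    (x v : Fin T → X) (y : Fin T → Bool) (t : Fin T) : X → Bool :=
  L (List.ofFn fun i : Fin t.1 =>
      (x (Fin.castLE t.isLt.le i), v (Fin.castLE t.isLt.le i), y (Fin.castLE t.isLt.le i)))
    (x t)

namespace UGLB

/-- The domain: `n` rows, each with a base point (column `0`) and `n` target points. -/
abbrev Xt (n : ℕ) := Fin n × Fin (n + 1)

/-- Hypothesis `j`: true exactly on column `j+1`. -/
def hyp (n : ℕ) (j : Fin n) : Xt n → Bool := fun p => decide (p.2 = j.succ)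

/-- Manipulation graph determined by `c`: the base point of row `i` points to `(i, c i)`. -/
def graph (n : ℕ) (c : Fin n → Fin (n + 1)) : Xt n → Finset (Xt n) :=
  fun p => if p.2 = 0 then {(p.1, c p.1)} else ∅

/-- The standard learner: predict positively iff a positive example with the same column
has been observed. -/
def stdA (n : ℕ) : List (Xt n × Bool) → Xt n → Bool :=
  fun hist x => decide (∃ z : Xt n, (z, true) ∈ hist ∧ x.2 = z.2)

variable {n : ℕ} (L : List (Xt n × Xt n × Bool) → Xt n → (Xt n → Bool))

/-- One adversary step: given the history and the alive set, at row `k` decide the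
label, the revealed point, and the new alive set. -/
noncomputable def stepData (hist : List (Xt n × Xt n × Bool)) (S : Finset (Fin n))
    (k : Fin n) : Bool × Xt n × Finset (Fin n) :=
  if L hist (k, 0) (k, 0) = true then (false, (k, 0), S)
  else if hj : ∃ j ∈ S, L hist (k, 0) (k, j.succ) = true then
    (false, (k, hj.choose.succ), S.erase hj.choose)
  else (true, (k, 0), S)

/-- The adversary's state after `k` rounds: the history so far and the alive set. -/
noncomputable def state : ℕ → List (Xt n × Xt n × Bool) × Finset (Fin n)
  | 0 => ([], Finset.univ)
  | k + 1 =>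
    if hk : k < n then
      ((state k).1 ++ [(((⟨k, hk⟩ : Fin n), (0 : Fin (n + 1))),
          (stepData L (state k).1 (state k).2 ⟨k, hk⟩).2.1,
          (stepData L (state k).1 (state k).2 ⟨k, hk⟩).1)],
        (stepData L (state k).1 (state k).2 ⟨k, hk⟩).2.2)
    else state k

/-- The data produced at round `k`. -/
noncomputable def dat (k : ℕ) (hk : k < n) : Bool × Xt n × Finset (Fin n) :=
  stepData L (state L k).1 (state L k).2 ⟨k, hk⟩

lemma state_succ (k : ℕ) (hk : k < n) :
    state L (k + 1) = ((state L k).1 ++ [(((⟨k, hk⟩ : Fin n), (0 : Fin (n + 1))),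
        (dat L k hk).2.1, (dat L k hk).1)], (dat L k hk).2.2) := by
  simp [state, dat, hk]

lemma dat_cases (k : ℕ) (hk : k < n) :
    (L (state L k).1 (⟨k, hk⟩, 0) ((⟨k, hk⟩ : Fin n), (0 : Fin (n + 1))) = true ∧
      dat L k hk = (false, ((⟨k, hk⟩ : Fin n), (0 : Fin (n + 1))), (state L k).2)) ∨
    (∃ j ∈ (state L k).2,
      L (state L k).1 (⟨k, hk⟩, 0) ((⟨k, hk⟩ : Fin n), (0 : Fin (n + 1))) = false ∧
      L (state L k).1 (⟨k, hk⟩, 0) ((⟨k, hk⟩ : Fin n), j.succ) = true ∧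
      dat L k hk = (false, ((⟨k, hk⟩ : Fin n), j.succ), ((state L k).2).erase j)) ∨
    (L (state L k).1 (⟨k, hk⟩, 0) ((⟨k, hk⟩ : Fin n), (0 : Fin (n + 1))) = false ∧
      (∀ j ∈ (state L k).2,
        L (state L k).1 (⟨k, hk⟩, 0) ((⟨k, hk⟩ : Fin n), j.succ) = false) ∧
      dat L k hk = (true, ((⟨k, hk⟩ : Fin n), (0 : Fin (n + 1))), (state L k).2)) := by
  unfold dat stepData
  split_ifs with h1 h2
  · exact Or.inl ⟨h1, rfl⟩
  · exact Or.inr (Or.inl ⟨h2.choose, h2.choose_spec.1,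
      Bool.eq_false_iff.mpr h1, h2.choose_spec.2, rfl⟩)
  · refine Or.inr (Or.inr ⟨Bool.eq_false_iff.mpr h1, ?_, rfl⟩)
    intro j hj
    by_contra hcon
    exact h2 ⟨j, hj, by simpa using hcon⟩

lemma state_snd_succ_subset (k : ℕ) : (state L (k + 1)).2 ⊆ (state L k).2 := by
  by_cases hk : k < n
  · rw [state_succ L k hk]
    rcases dat_cases L k hk with ⟨_, hd⟩ | ⟨j, _, _, _, hd⟩ | ⟨_, _, hd⟩ <;>
      simp [hd, Finset.erase_subset]
  · simp [state, hk]

lemma state_snd_anti : ∀ {k m : ℕ}, k ≤ m → (state L m).2 ⊆ (state L k).2 := by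
  intro k m hkm
  induction m, hkm using Nat.le_induction with
  | base => exact subset_rfl
  | succ m _ ih => exact (state_snd_succ_subset L m).trans ih

lemma state_snd_card (k : ℕ) : n ≤ ((state L k).2).card + k := by
  induction k with
  | zero => simp [state]
  | succ k ih =>
    have hstep : ((state L k).2).card ≤ ((state L (k + 1)).2).card + 1 := by
      by_cases hk : k < n
      · rw [state_succ L k hk]
        rcases dat_cases L k hk with ⟨_, hd⟩ | ⟨j, hj, _, _, hd⟩ | ⟨_, _, hd⟩
        · simp [hd]
        · have hjcard := Finset.card_erase_of_mem hj
          have hpos : 0 < ((state L k).2).card := Finset.card_pos.mpr ⟨j, hj⟩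
          simp only [hd]
          omega
        · simp [hd]
      · simp [state, hk]
    omega

/-- The sequence of presented points. -/
def xx : Fin (n - 1) → Xt n :=
  fun t => ((⟨t.1, Nat.lt_of_lt_of_le t.2 (Nat.sub_le n 1)⟩ : Fin n), (0 : Fin (n + 1)))

/-- The sequence of labels chosen by the adversary. -/
noncomputable def yy : Fin (n - 1) → Bool :=
  fun t => (dat L t.1 (Nat.lt_of_lt_of_le t.2 (Nat.sub_le n 1))).1

/-- The sequence of revealed points chosen by the adversary. -/
noncomputable def vv : Fin (n - 1) → Xt n :=
  fun t => (dat L t.1 (Nat.lt_of_lt_of_le t.2 (Nat.sub_le n 1))).2.1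

lemma hist_eq : ∀ (k : ℕ) (hk : k ≤ n),
    (state L k).1 = List.ofFn (fun i : Fin k =>
      (((⟨i.1, Nat.lt_of_lt_of_le i.2 hk⟩ : Fin n), (0 : Fin (n + 1))),
        (dat L i.1 (Nat.lt_of_lt_of_le i.2 hk)).2.1,
        (dat L i.1 (Nat.lt_of_lt_of_le i.2 hk)).1)) := by
  intro k
  induction k with
  | zero => intro _; simp [state]
  | succ k ih =>
    intro hk
    have hkn : k < n := hk
    rw [state_succ L k hkn, ih (Nat.le_of_lt hkn), List.ofFn_succ']
    simp only [List.concat_eq_append]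
    rfl

lemma ugHyp_eq (t : Fin (n - 1)) :
    ugHyp L (xx (n := n)) (vv L) (yy L) t = L (state L t.1).1 (xx t) := by
  unfold ugHyp
  rw [hist_eq L t.1 (le_of_lt (Nat.lt_of_lt_of_le t.2 (Nat.sub_le n 1)))]
  rfl

/-- The edge function of the true graph, determined a posteriori from the run and the
surviving hypothesis index `jstar`. -/
noncomputable def cfun (jstar : Fin n) : Fin n → Fin (n + 1) := fun i =>
  if hi : i.1 < n - 1 then
    (if (dat L i.1 (Nat.lt_of_lt_of_le hi (Nat.sub_le n 1))).1 = true then jstar.succ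
     else ((dat L i.1 (Nat.lt_of_lt_of_le hi (Nat.sub_le n 1))).2.1).2)
  else 0

lemma graph_at (jstar : Fin n) (t : Fin (n - 1)) :
    graph n (cfun L jstar) (xx t) =
      {((xx (n := n) t).1, if yy L t = true then jstar.succ else (vv L t).2)} := by
  have hx : (xx (n := n) t).2 = 0 := rfl
  have hc : cfun L jstar (xx (n := n) t).1 =
      (if yy L t = true then jstar.succ else (vv L t).2) := by
    unfold cfun
    rw [dif_pos (show ((xx (n := n) t).1 : ℕ) < n - 1 from t.2)]
    rfl
  unfold graph
  rw [if_pos hx, hc]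

lemma round_facts (jstar : Fin n) (hj : jstar ∈ (state L (n - 1)).2) (t : Fin (n - 1)) :
    (inducedLabel (graph n (cfun L jstar)) (hyp n jstar) (xx t) = yy L t) ∧
    ((∃ z, InClosedNbhd (graph n (cfun L jstar)) (xx t) z ∧
        ugHyp L (xx (n := n)) (vv L) (yy L) t z = true) →
      InClosedNbhd (graph n (cfun L jstar)) (xx t) (vv L t) ∧
        ugHyp L (xx (n := n)) (vv L) (yy L) t (vv L t) = true) ∧
    ((¬ ∃ z, InClosedNbhd (graph n (cfun L jstar)) (xx t) z ∧
        ugHyp L (xx (n := n)) (vv L) (yy L) t z = true) → vv L t = xx t) ∧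
    (ugHyp L (xx (n := n)) (vv L) (yy L) t (vv L t) ≠ yy L t) := by
  have hk : t.1 < n := Nat.lt_of_lt_of_le t.2 (Nat.sub_le n 1)
  have hxt : xx (n := n) t = ((⟨t.1, hk⟩ : Fin n), (0 : Fin (n + 1))) := rfl
  have hug := ugHyp_eq L t
  have hjk : jstar ∈ (state L t.1).2 :=
    state_snd_anti L (le_of_lt t.2) hj
  have hjk1 : jstar ∈ (state L (t.1 + 1)).2 :=
    state_snd_anti L (Nat.succ_le_of_lt t.2) hj
  have hsz : jstar.succ ≠ (0 : Fin (n + 1)) := Fin.succ_ne_zero jstar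
  rcases dat_cases L t.1 hk with ⟨h1, hd⟩ | ⟨j, hjS, h0, hjt, hd⟩ | ⟨h0, hall, hd⟩
  · -- type 1: the learner is positive on the base point
    have hy : yy L t = false := by unfold yy; rw [hd]
    have hv : vv L t = ((⟨t.1, hk⟩ : Fin n), (0 : Fin (n + 1))) := by unfold vv; rw [hd]
    have hN := graph_at L jstar t
    rw [hy, if_neg (by simp), hv] at hN
    have hvx : vv L t = xx t := by rw [hv, hxt]
    have hhv : ugHyp L (xx (n := n)) (vv L) (yy L) t (vv L t) = true := by
      rw [hug, hvx, hxt]; exact h1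
    have hA : hyp n jstar (xx (n := n) t) = false := by
      simp only [hyp, decide_eq_false_iff_not]
      exact fun h => hsz h.symm
    refine ⟨?_, fun _ => ⟨Or.inl hvx, hhv⟩, fun _ => hvx, by rw [hhv, hy]; simp⟩
    · unfold inducedLabel
      rw [hN, hy, hA]
      simp only [Bool.false_or, decide_eq_false_iff_not]
      rintro ⟨z, hzm, hz⟩
      rw [Finset.mem_singleton] at hzm
      subst hzm
      simp only [hyp, decide_eq_true_eq] at hz
      exact hsz hz.symm
  · -- type 2: the learner is positive on the target of an alive index j; eliminate j
    have hy : yy L t = false := by unfold yy; rw [hd]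
    have hv : vv L t = ((⟨t.1, hk⟩ : Fin n), j.succ) := by unfold vv; rw [hd]
    have hjne : jstar ≠ j := by
      rw [state_succ L t.1 hk] at hjk1
      simp only [hd] at hjk1
      exact Finset.ne_of_mem_erase hjk1
    have hN := graph_at L jstar t
    rw [hy] at hN
    simp only [Bool.false_eq_true, if_false, hv] at hN
    have hvmem : vv L t ∈ graph n (cfun L jstar) (xx t) := by
      rw [hN, hv]; exact Finset.mem_singleton_self _
    have hhv : ugHyp L (xx (n := n)) (vv L) (yy L) t (vv L t) = true := by
      rw [hug, hv, hxt]; exact hjt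
    have hA : hyp n jstar (xx (n := n) t) = false := by
      simp only [hyp, decide_eq_false_iff_not]
      exact fun h => hsz h.symm
    refine ⟨?_, fun _ => ⟨Or.inr hvmem, hhv⟩,
      fun hc => absurd ⟨vv L t, Or.inr hvmem, hhv⟩ hc, by rw [hhv, hy]; simp⟩
    · unfold inducedLabel
      rw [hN, hy, hA]
      simp only [Bool.false_or, decide_eq_false_iff_not]
      rintro ⟨z, hzm, hz⟩
      rw [Finset.mem_singleton] at hzm
      subst hzm
      simp only [hyp, decide_eq_true_eq] at hz
      exact hjne (Fin.succ_injective n hz).symm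
  · -- type 3: the learner is negative everywhere relevant; force a positive label
    have hy : yy L t = true := by unfold yy; rw [hd]
    have hv : vv L t = ((⟨t.1, hk⟩ : Fin n), (0 : Fin (n + 1))) := by unfold vv; rw [hd]
    have hN := graph_at L jstar t
    rw [hy, if_pos rfl] at hN
    have hvx : vv L t = xx t := by rw [hv, hxt]
    have hhv : ugHyp L (xx (n := n)) (vv L) (yy L) t (vv L t) = false := by
      rw [hug, hvx, hxt]; exact h0
    have hnone : ¬ ∃ z, InClosedNbhd (graph n (cfun L jstar)) (xx t) z ∧
        ugHyp L (xx (n := n)) (vv L) (yy L) t z = true := by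
      rintro ⟨z, hz, hzt⟩
      rcases hz with hz | hz
      · rw [hug, hz, hxt] at hzt
        rw [h0] at hzt
        exact Bool.false_ne_true hzt
      · rw [hN, Finset.mem_singleton] at hz
        rw [hug, hz, hxt] at hzt
        rw [hall jstar hjk] at hzt
        exact Bool.false_ne_true hzt
    refine ⟨?_, fun hc => absurd hc hnone, fun _ => hvx, by rw [hhv, hy]; simp⟩
    · unfold inducedLabel
      rw [hN, hy]
      have hB : decide (∃ z ∈ ({((xx (n := n) t).1, jstar.succ)} : Finset (Xt n)),
          hyp n jstar z = true) = true := by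
        simp only [decide_eq_true_eq]
        exact ⟨((xx (n := n) t).1, jstar.succ), Finset.mem_singleton_self _, by
          simp [hyp]⟩
      rw [hB, Bool.or_true]

end UGLB

open UGLB in
/-- a mistake lower bound of `n−1` in the unknown manipulation graph online
setting, with `|X| = n(n+1)`, `|H| = n` (with standard mistake bound `1`), and a graph
class `𝒢` of graphs of maximum out-degree at most `1` with `|𝒢| ≤ (n+1)^n`. -/
theorem unknown_graph_online_lower_bound :
    ∀ n : ℕ, 2 ≤ n →
      ∃ (X : Type) (inst : Fintype X) (H : Set (X → Bool)) (𝒢 : Finset (X → Finset X)),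
        @Fintype.card X inst = n * (n + 1) ∧
        H.ncard = n ∧
        (∃ A : List (X × Bool) → X → Bool, StdMistakeBound A H 1) ∧
        (∀ G ∈ 𝒢, ∀ x, (G x).card ≤ 1) ∧
        𝒢.card ≤ (n + 1) ^ n ∧
        ∀ L : List (X × X × Bool) → X → (X → Bool),
          ∃ Nstar ∈ 𝒢, ∃ (T : ℕ) (x : Fin T → X) (y : Fin T → Bool) (v : Fin T → X),
            (∃ G ∈ 𝒢, ∀ t : Fin T, G (x t) = Nstar (x t)) ∧
            (∃ hstar ∈ H, ∀ t : Fin T, inducedLabel Nstar hstar (x t) = y t) ∧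
            PMFConsistent Nstar (ugHyp L x v y) x v ∧
            n - 1 ≤ {t : Fin T | ugHyp L x v y t (v t) ≠ y t}.ncard := by
  intro n hn
  refine ⟨Xt n, inferInstance, Set.range (hyp n),
    Finset.image (graph n) Finset.univ, ?_, ?_, ?_, ?_, ?_, ?_⟩
  · -- cardinality of the domain
    simp
  · -- cardinality of the hypothesis class
    have hinj : Function.Injective (hyp n) := by
      intro a b hab
      have h0 : (0 : ℕ) < n := by omega
      have := congrFun hab ((⟨0, h0⟩ : Fin n), a.succ)
      simp only [hyp, decide_eq_decide] at this
      exact Fin.succ_injective n (this.mp trivial)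
    rw [← Set.image_univ, Set.ncard_image_of_injective _ hinj, Set.ncard_univ,
      Nat.card_eq_fintype_card, Fintype.card_fin]
  · -- the standard learner with mistake bound 1
    refine ⟨stdA n, ?_⟩
    intro T seq hreal
    obtain ⟨h, ⟨j, rfl⟩, hlab⟩ := hreal
    have hmem : ∀ (t : Fin T) (z : Xt n) (b : Bool), (z, b) ∈ histFn seq t →
        ∃ i : Fin T, i < t ∧ seq i = (z, b) := by
      intro t z b hzb
      rw [histFn, List.mem_ofFn] at hzb
      obtain ⟨i, hi⟩ := hzb
      exact ⟨Fin.castLE t.isLt.le i, by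
        constructor
        · exact i.2
        · exact hi⟩
    have hchar : ∀ t : Fin T, stdA n (histFn seq t) (seq t).1 ≠ (seq t).2 →
        (seq t).2 = true ∧ ∀ i : Fin T, i < t → (seq i).2 = false := by
      intro t ht
      by_cases hE : ∃ i : Fin T, i < t ∧ (seq i).2 = true
      · exfalso
        obtain ⟨i, hit, hyi⟩ := hE
        have hin : ((seq i).1, true) ∈ histFn seq t := by
          rw [histFn, List.mem_ofFn]
          refine ⟨⟨i.1, hit⟩, ?_⟩
          have heq : Fin.castLE t.isLt.le (⟨i.1, hit⟩ : Fin t.1) = i := Fin.ext rfl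
          show seq (Fin.castLE t.isLt.le (⟨i.1, hit⟩ : Fin t.1)) = ((seq i).1, true)
          rw [heq, ← hyi]
        have hcol : ∀ z : Xt n, (z, true) ∈ histFn seq t → z.2 = j.succ := by
          intro z hz
          obtain ⟨i', _, hi'⟩ := hmem t z true hz
          have := hlab i'
          rw [hi'] at this
          simpa [hyp] using this
        have hstd : stdA n (histFn seq t) (seq t).1 = hyp n j (seq t).1 := by
          unfold stdA hyp
          rw [decide_eq_decide]
          constructor
          · rintro ⟨z, hz, hcz⟩
            rw [hcz, hcol z hz]
          · intro hc
            exact ⟨(seq i).1, hin, by rw [hc, hcol _ hin]⟩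
        rw [hstd, hlab t] at ht
        exact ht rfl
      · push_neg at hE
        have hfalse : ∀ i : Fin T, i < t → (seq i).2 = false := by
          intro i hit
          exact Bool.eq_false_iff.mpr (hE i hit)
        have hstd : stdA n (histFn seq t) (seq t).1 = false := by
          unfold stdA
          simp only [decide_eq_false_iff_not]
          rintro ⟨z, hz, _⟩
          obtain ⟨i', hi't, hi'⟩ := hmem t z true hz
          have := hfalse i' hi't
          rw [hi'] at this
          simp at this
        rw [hstd] at ht
        refine ⟨?_, hfalse⟩
        cases hb : (seq t).2
        · exact absurd hb.symm ht
        · rfl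
    rw [Set.ncard_le_one (Set.toFinite _)]
    intro t1 ht1 t2 ht2
    have h1 := hchar t1 ht1
    have h2 := hchar t2 ht2
    rcases lt_trichotomy t1 t2 with hlt | heq | hgt
    · exact absurd h1.1 (by rw [h2.2 t1 hlt]; simp)
    · exact heq
    · exact absurd h2.1 (by rw [h1.2 t2 hgt]; simp)
  · -- degree bound
    intro G hG x
    rw [Finset.mem_image] at hG
    obtain ⟨c, _, rfl⟩ := hG
    unfold graph
    split <;> simp
  · -- size of the graph class
    calc (Finset.image (graph n) Finset.univ).card
        ≤ (Finset.univ : Finset (Fin n → Fin (n + 1))).card := Finset.card_image_le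
      _ = (n + 1) ^ n := by simp [Fintype.card_fun]
  · -- the adversary argument
    intro L
    have hjex : ((state L (n - 1)).2).Nonempty := by
      have := state_snd_card L (n - 1)
      rw [← Finset.card_pos]
      omega
    obtain ⟨jstar, hj⟩ := hjex
    have hNmem : graph n (cfun L jstar) ∈ Finset.image (graph n) Finset.univ :=
      Finset.mem_image_of_mem _ (Finset.mem_univ _)
    refine ⟨graph n (cfun L jstar), hNmem, n - 1, xx, yy L, vv L,
      ⟨graph n (cfun L jstar), hNmem, fun _ => rfl⟩,
      ⟨hyp n jstar, ⟨jstar, rfl⟩, fun t => (round_facts L jstar hj t).1⟩,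
      fun t => ⟨(round_facts L jstar hj t).2.1, (round_facts L jstar hj t).2.2.1⟩, ?_⟩
    have huniv : {t : Fin (n - 1) |
        ugHyp L (xx (n := n)) (vv L) (yy L) t (vv L t) ≠ yy L t} = Set.univ := by
      ext t
      simp only [Set.mem_setOf_eq, Set.mem_univ, iff_true]
      exact (round_facts L jstar hj t).2.2.2
    rw [huniv, Set.ncard_univ, Nat.card_eq_fintype_card, Fintype.card_fin]
end
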